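/- arXiv:2009.14026 — 10 statements merged into one kernel-verified Lean document; each statement's English description precedes it below -/
import Mathlib

section
/- Let C be a field of characteristic zero, let q, β ∈ C be nonzero with q not a root of unity, let d ∈ ℕ, and let e₀,…,e_d ∈ C. Set f := Σ_{ℓ=0}^{d} ( e_ℓ + e_ℓ q^ℓ β/(x − βq^ℓ) ) ∈ C(x). Then for every integer r ≥ 0, the rational function δ^r(f) − Σ_{ℓ=0}^{d} (−1)^r · r! · q^{ℓ(r+1)} · β^{r+1} · e_ℓ · (x − βq^ℓ)^{−(r+1)} is a C-linear combination of the constant function 1 and the functions (x − βq^ℓ)^{−j} for 0 ≤ ℓ ≤ d and 1 ≤ j ≤ r. -/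
/-- Lemma on the principal parts of iterated Euler derivatives of
`f = Σ_{ℓ=0}^{d} ( e_ℓ + e_ℓ q^ℓ β/(x − βq^ℓ) )`.  Here `δ` is the `C`-linear
derivation of `C(x)` with `δ(x) = x`. -/
theorem stmt_0 (C : Type*) [Field C] [CharZero C]
    (q β : C) (hq0 : q ≠ 0) (hβ0 : β ≠ 0) (hq : ∀ n : ℕ, 0 < n → q ^ n ≠ 1)
    (δ : Derivation C (RatFunc C) (RatFunc C)) (hδX : δ RatFunc.X = RatFunc.X)
    (d : ℕ) (e : ℕ → C) :
    ∀ r : ℕ,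
      (⇑δ)^[r] (∑ ℓ ∈ Finset.range (d + 1),
          (RatFunc.C (e ℓ) +
            RatFunc.C (e ℓ * q ^ ℓ * β) * (RatFunc.X - RatFunc.C (β * q ^ ℓ))⁻¹))
        - (∑ ℓ ∈ Finset.range (d + 1),
            RatFunc.C ((-1 : C) ^ r * (r.factorial : C) * q ^ (ℓ * (r + 1)) * β ^ (r + 1) * e ℓ) *
              ((RatFunc.X - RatFunc.C (β * q ^ ℓ))⁻¹) ^ (r + 1))
      ∈ Submodule.span C
          (({1} : Set (RatFunc C)) ∪
            {g : RatFunc C | ∃ ℓ ≤ d, ∃ j : ℕ, 1 ≤ j ∧ j ≤ r ∧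
              g = ((RatFunc.X - RatFunc.C (β * q ^ ℓ))⁻¹) ^ j}) := by
  have hC0 : ∀ x : C, δ (RatFunc.C x) = 0 := by
    intro x
    rw [← RatFunc.algebraMap_eq_C]
    exact δ.map_algebraMap x
  have hsmul : ∀ (x : C) (v : RatFunc C), RatFunc.C x * v = x • v := by
    intro x v
    rw [Algebra.smul_def, RatFunc.algebraMap_eq_C]
  set a : ℕ → C := fun ℓ => β * q ^ ℓ with ha
  set g : ℕ → RatFunc C := fun ℓ => (RatFunc.X - RatFunc.C (a ℓ))⁻¹ with hgdef
  set c : ℕ → ℕ → C := fun ℓ r =>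
    (-1 : C) ^ r * (r.factorial : C) * q ^ (ℓ * (r + 1)) * β ^ (r + 1) * e ℓ with hc
  -- derivative of g
  have hδg : ∀ ℓ : ℕ, δ (g ℓ) = -g ℓ - RatFunc.C (a ℓ) * g ℓ ^ 2 := by
    intro ℓ
    have h1 : δ (RatFunc.X - RatFunc.C (a ℓ)) = RatFunc.X := by
      rw [map_sub, hδX, hC0, sub_zero]
    have hne : RatFunc.X - RatFunc.C (a ℓ) ≠ 0 := by
      intro h
      have h' : algebraMap (Polynomial C) (RatFunc C) (Polynomial.X - Polynomial.C (a ℓ)) = 0 := by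
        rw [map_sub, RatFunc.algebraMap_X, RatFunc.algebraMap_C, h]
      exact Polynomial.X_sub_C_ne_zero (a ℓ)
        ((map_eq_zero_iff _ (RatFunc.algebraMap_injective C)).mp h')
    have hgg : g ℓ * (RatFunc.X - RatFunc.C (a ℓ)) = 1 := inv_mul_cancel₀ hne
    have h3 : g ℓ ^ 2 * (RatFunc.X - RatFunc.C (a ℓ)) = g ℓ := by
      rw [pow_two, mul_assoc, hgg, mul_one]
    have h4 : g ℓ ^ 2 * RatFunc.X = g ℓ + RatFunc.C (a ℓ) * g ℓ ^ 2 := by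
      calc g ℓ ^ 2 * RatFunc.X
          = g ℓ ^ 2 * ((RatFunc.X - RatFunc.C (a ℓ)) + RatFunc.C (a ℓ)) := by ring
        _ = g ℓ + RatFunc.C (a ℓ) * g ℓ ^ 2 := by rw [mul_add, h3]; ring
    show δ (RatFunc.X - RatFunc.C (a ℓ))⁻¹ = _
    rw [δ.leibniz_inv, h1, smul_eq_mul]
    show -(g ℓ ^ 2) * RatFunc.X = _
    rw [neg_mul, h4]
    ring
  -- derivative of powers of g
  have hδgpow : ∀ (ℓ : ℕ) (j : ℕ), 1 ≤ j →
      δ (g ℓ ^ j) = -((j : C) • g ℓ ^ j) - ((j : C) * a ℓ) • g ℓ ^ (j + 1) := by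
    intro ℓ j hj
    rw [δ.leibniz_pow, hδg, ← Nat.cast_smul_eq_nsmul C j]
    have h1 : g ℓ ^ (j - 1) * g ℓ = g ℓ ^ j := by
      rw [← pow_succ, Nat.sub_add_cancel hj]
    have h2 : g ℓ ^ (j - 1) * g ℓ ^ 2 = g ℓ ^ (j + 1) := by
      rw [← pow_add]
      congr 1
      omega
    rw [smul_eq_mul, mul_sub, mul_neg, h1, ← mul_assoc, mul_comm (g ℓ ^ (j - 1)),
      mul_assoc, h2, smul_sub, smul_neg, hsmul, smul_smul]
  -- the statement with abbreviations
  suffices h : ∀ r : ℕ,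
      (⇑δ)^[r] (∑ ℓ ∈ Finset.range (d + 1),
          (RatFunc.C (e ℓ) + RatFunc.C (e ℓ * q ^ ℓ * β) * g ℓ))
        - (∑ ℓ ∈ Finset.range (d + 1), RatFunc.C (c ℓ r) * g ℓ ^ (r + 1))
      ∈ Submodule.span C
          (({1} : Set (RatFunc C)) ∪
            {v : RatFunc C | ∃ ℓ ≤ d, ∃ j : ℕ, 1 ≤ j ∧ j ≤ r ∧ v = g ℓ ^ j}) by
    exact h
  intro r
  induction r with
  | zero =>
    have heq : (∑ ℓ ∈ Finset.range (d + 1),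
          (RatFunc.C (e ℓ) + RatFunc.C (e ℓ * q ^ ℓ * β) * g ℓ))
        - (∑ ℓ ∈ Finset.range (d + 1), RatFunc.C (c ℓ 0) * g ℓ ^ (0 + 1))
        = ∑ ℓ ∈ Finset.range (d + 1), RatFunc.C (e ℓ) := by
      rw [← Finset.sum_sub_distrib]
      refine Finset.sum_congr rfl fun ℓ _ => ?_
      have hc0 : c ℓ 0 = e ℓ * q ^ ℓ * β := by
        simp only [hc, pow_zero, Nat.factorial_zero, Nat.cast_one, mul_one, pow_one, one_mul]
        ring
      rw [pow_one, hc0]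
      ring
    rw [Function.iterate_zero_apply, heq]
    refine Submodule.sum_mem _ fun ℓ _ => ?_
    rw [← mul_one (RatFunc.C (e ℓ)), hsmul]
    exact Submodule.smul_mem _ _ (Submodule.subset_span (Or.inl rfl))
  | succ r IH =>
    -- δ maps the span at level r into the span at level r+1
    have hδS : ∀ v ∈ Submodule.span C
        (({1} : Set (RatFunc C)) ∪
          {v : RatFunc C | ∃ ℓ ≤ d, ∃ j : ℕ, 1 ≤ j ∧ j ≤ r ∧ v = g ℓ ^ j}),
        δ v ∈ Submodule.span C
        (({1} : Set (RatFunc C)) ∪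
          {v : RatFunc C | ∃ ℓ ≤ d, ∃ j : ℕ, 1 ≤ j ∧ j ≤ r + 1 ∧ v = g ℓ ^ j}) := by
      intro v hv
      induction hv using Submodule.span_induction with
      | mem x hx =>
        rcases hx with hx | ⟨ℓ, hℓ, j, hj1, hjr, rfl⟩
        · rcases hx with rfl
          rw [δ.map_one_eq_zero]
          exact Submodule.zero_mem _
        · rw [hδgpow ℓ j hj1]
          refine Submodule.sub_mem _ (Submodule.neg_mem _ ?_) ?_
          · exact Submodule.smul_mem _ _ (Submodule.subset_span
              (Or.inr ⟨ℓ, hℓ, j, hj1, by omega, rfl⟩))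
          · exact Submodule.smul_mem _ _ (Submodule.subset_span
              (Or.inr ⟨ℓ, hℓ, j + 1, by omega, by omega, rfl⟩))
      | zero => simpa using Submodule.zero_mem _
      | add x y hx hy ihx ihy => rw [map_add]; exact Submodule.add_mem _ ihx ihy
      | smul t x hx ihx => rw [Derivation.map_smul]; exact Submodule.smul_mem _ _ ihx
    have key : (⇑δ)^[r + 1] (∑ ℓ ∈ Finset.range (d + 1),
          (RatFunc.C (e ℓ) + RatFunc.C (e ℓ * q ^ ℓ * β) * g ℓ))
        - (∑ ℓ ∈ Finset.range (d + 1), RatFunc.C (c ℓ (r + 1)) * g ℓ ^ (r + 1 + 1))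
        = δ ((⇑δ)^[r] (∑ ℓ ∈ Finset.range (d + 1),
            (RatFunc.C (e ℓ) + RatFunc.C (e ℓ * q ^ ℓ * β) * g ℓ))
          - (∑ ℓ ∈ Finset.range (d + 1), RatFunc.C (c ℓ r) * g ℓ ^ (r + 1)))
          + (δ (∑ ℓ ∈ Finset.range (d + 1), RatFunc.C (c ℓ r) * g ℓ ^ (r + 1))
            - (∑ ℓ ∈ Finset.range (d + 1), RatFunc.C (c ℓ (r + 1)) * g ℓ ^ (r + 1 + 1))) := by
      rw [Function.iterate_succ_apply', map_sub]
      ring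
    have h2 : δ (∑ ℓ ∈ Finset.range (d + 1), RatFunc.C (c ℓ r) * g ℓ ^ (r + 1))
        - (∑ ℓ ∈ Finset.range (d + 1), RatFunc.C (c ℓ (r + 1)) * g ℓ ^ (r + 1 + 1))
        = ∑ ℓ ∈ Finset.range (d + 1),
            RatFunc.C (-((r + 1 : ℕ) : C) * c ℓ r) * g ℓ ^ (r + 1) := by
      rw [map_sum, ← Finset.sum_sub_distrib]
      refine Finset.sum_congr rfl fun ℓ _ => ?_
      have hcs : c ℓ (r + 1) = (-(((r + 1 : ℕ) : C)) * a ℓ) * c ℓ r := by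
        simp only [hc, ha, Nat.factorial_succ, mul_add, mul_one, pow_add, pow_succ]
        push_cast
        ring
      rw [δ.leibniz, hC0, smul_zero, add_zero, smul_eq_mul,
        hδgpow ℓ (r + 1) (by omega), hcs]
      simp only [← hsmul]
      simp only [map_mul, map_neg, map_natCast]
      ring
    rw [key]
    refine Submodule.add_mem _ (hδS _ IH) ?_
    rw [h2]
    refine Submodule.sum_mem _ fun ℓ hℓ => ?_
    rw [hsmul]
    exact Submodule.smul_mem _ _ (Submodule.subset_span
      (Or.inr ⟨ℓ, by simpa using Finset.mem_range_succ_iff.mp hℓ, r + 1, by omega, le_rfl, rfl⟩))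
end

section
/- Let C be an algebraically closed field of characteristic zero and q ∈ C nonzero and not a root of unity. Let a ∈ C(x) be a nonzero rational function, r ∈ ℕ, and β ∈ C^× a zero or pole of a. Then q-dres( δ^r(δ(a)/a), [β]_q, r+1 ) = (−1)^r · r! · β^r · q-dres( δ(a)/a, [β]_q, 1 ). -/
/-- The coefficient of `(x − γ)^(-j)` (for `n = -j`) in the partial fraction /
Laurent expansion of `f` at `γ`: the `n`-th coefficient of the Laurent-series
expansion of `f(X + γ)` at `0`. -/
noncomputable def laurentCoeffAt {C : Type*} [Field C] (f : RatFunc C) (γ : C) (n : ℤ) : C :=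
  ((RatFunc.laurent γ f : RatFunc C) : LaurentSeries C).coeff n

/-- The `q`-discrete residue of `f` at the orbit `[β]_q` of multiplicity `j`:
`Σ_{ℓ ∈ ℤ} q^{−ℓj} · (coefficient of (x − βq^ℓ)^{−j} in the partial fraction
decomposition of f)`. -/
noncomputable def qDres {C : Type*} [Field C] (q : C) (f : RatFunc C) (β : C) (j : ℕ) : C :=
  ∑ᶠ ℓ : ℤ, q ^ (-(ℓ * (j : ℤ))) * laurentCoeffAt f (β * q ^ ℓ) (-(j : ℤ))

namespace QresAux

open Polynomial
open scoped Classical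

variable {C : Type*} [Field C]

/-- Shorthand for the basic partial fraction `1/(X-γ)`. -/
noncomputable def e (γ : C) : RatFunc C := (RatFunc.X - RatFunc.C γ)⁻¹

lemma algebraMap_XsubC (γ : C) :
    algebraMap C[X] (RatFunc C) (X - Polynomial.C γ) = RatFunc.X - RatFunc.C γ := by
  rw [map_sub, RatFunc.algebraMap_X, RatFunc.algebraMap_C]

lemma XsubC_ne (γ : C) : (RatFunc.X - RatFunc.C γ : RatFunc C) ≠ 0 := by
  rw [← algebraMap_XsubC]
  exact RatFunc.algebraMap_ne_zero (X_sub_C_ne_zero γ)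

lemma coeff_neg_eq_zero_of_reg (f : RatFunc C) (p s : C[X]) (hs : s.eval 0 ≠ 0)
    (h : f * algebraMap C[X] (RatFunc C) s = algebraMap C[X] (RatFunc C) p)
    {n : ℤ} (hn : n < 0) : (f : LaurentSeries C).coeff n = 0 := by
  have hsu : IsUnit (s : PowerSeries C) := by
    rw [PowerSeries.isUnit_iff_constantCoeff, Polynomial.constantCoeff_coe,
      Polynomial.coeff_zero_eq_eval_zero]
    exact isUnit_iff_ne_zero.mpr hs
  obtain ⟨u, hu⟩ := hsu
  have hcoe : ∀ t : C[X], ((algebraMap C[X] (RatFunc C) t : RatFunc C) : LaurentSeries C)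
      = ((t : PowerSeries C) : LaurentSeries C) := by
    intro t
    rw [RatFunc.coe_coe, RatFunc.coePolynomial]
  have h2 : (f : LaurentSeries C) * ((s : PowerSeries C) : LaurentSeries C)
      = ((p : PowerSeries C) : LaurentSeries C) := by
    rw [← hcoe, ← hcoe, ← map_mul, h]
  have hinv : (((s : PowerSeries C) : LaurentSeries C))⁻¹
      = (((↑u⁻¹ : PowerSeries C) : LaurentSeries C)) := by
    refine inv_eq_of_mul_eq_one_right ?_
    rw [← PowerSeries.coe_mul, ← hu, Units.mul_inv, PowerSeries.coe_one]
  have hsne : (((s : PowerSeries C) : LaurentSeries C)) ≠ 0 := by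
    intro h0
    have h1 : (s : PowerSeries C) = 0 := by
      apply HahnSeries.ofPowerSeries_injective (Γ := ℤ) (R := C)
      rw [h0, map_zero]
    rw [Polynomial.coe_eq_zero_iff] at h1
    exact hs (by simp [h1])
  have hf : (f : LaurentSeries C) = ((p : PowerSeries C) : LaurentSeries C)
      * (((s : PowerSeries C) : LaurentSeries C))⁻¹ := by
    rw [← h2, mul_inv_cancel_right₀ hsne]
  rw [hf, hinv, ← PowerSeries.coe_mul, PowerSeries.coeff_coe, if_pos hn]

variable {γ γ₀ : C} {n : ℤ}

lemma lca_add (f g : RatFunc C) (γ : C) (n : ℤ) :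
    laurentCoeffAt (f + g) γ n = laurentCoeffAt f γ n + laurentCoeffAt g γ n := by
  simp [laurentCoeffAt, map_add]

lemma lca_sub (f g : RatFunc C) (γ : C) (n : ℤ) :
    laurentCoeffAt (f - g) γ n = laurentCoeffAt f γ n - laurentCoeffAt g γ n := by
  simp [laurentCoeffAt, map_sub]

lemma lca_zero (γ : C) (n : ℤ) : laurentCoeffAt (0 : RatFunc C) γ n = 0 := by
  simp [laurentCoeffAt]

lemma lca_smul (c : C) (f : RatFunc C) (γ : C) (n : ℤ) :
    laurentCoeffAt (c • f) γ n = c * laurentCoeffAt f γ n := by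
  simp only [laurentCoeffAt, map_smul]
  rw [RatFunc.smul_eq_C_mul, map_mul, ← RatFunc.algebraMap_C, ← RatFunc.coePolynomial,
    ← RatFunc.coe_coe, Polynomial.coe_C, PowerSeries.coe_C, HahnSeries.C_mul_eq_smul,
    HahnSeries.coeff_smul, smul_eq_mul]

lemma lca_sum (M : Multiset (RatFunc C)) (γ : C) (n : ℤ) :
    laurentCoeffAt M.sum γ n = (M.map (fun h => laurentCoeffAt h γ n)).sum := by
  induction M using Multiset.induction with
  | empty => simp [lca_zero]
  | cons a M ih => simp [lca_add, ih]

lemma coe_inv (f : RatFunc C) :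
    ((f⁻¹ : RatFunc C) : LaurentSeries C) = (f : LaurentSeries C)⁻¹ := by
  rw [map_inv₀]

lemma coe_e_zero_pow (j : ℕ) :
    ((e (0:C) ^ j : RatFunc C) : LaurentSeries C) = HahnSeries.single (-(j:ℤ)) 1 := by
  have h0 : (e (0:C)) = (RatFunc.X)⁻¹ := by simp [e]
  rw [h0, map_pow, coe_inv, RatFunc.coe_X,
    HahnSeries.inv_single, inv_one, HahnSeries.single_pow]
  congr 1 <;> simp

lemma coeff_e_pow_ne {c : C} (hc : c ≠ 0) (j : ℕ) {n : ℤ} (hn : n < 0) :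
    ((e c ^ j : RatFunc C) : LaurentSeries C).coeff n = 0 := by
  apply coeff_neg_eq_zero_of_reg _ 1 ((X - Polynomial.C c)^j) ?_ ?_ hn
  · simp [hc]
  · rw [map_pow, algebraMap_XsubC, map_one, e, inv_pow,
      inv_mul_cancel₀ (pow_ne_zero _ (XsubC_ne c))]

lemma laurent_e (γ₀ γ : C) : RatFunc.laurent γ₀ (e γ) = e (γ - γ₀) := by
  rw [e, e, map_inv₀, map_sub, RatFunc.laurent_X, RatFunc.laurent_C]
  congr 1
  rw [map_sub]
  ring

lemma lca_e_pow (γ γ₀ : C) (j : ℕ) {n : ℤ} (hn : n < 0) :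
    laurentCoeffAt (e γ ^ j) γ₀ n = if γ₀ = γ ∧ n = -(j:ℤ) then 1 else 0 := by
  rw [laurentCoeffAt, map_pow, laurent_e]
  by_cases h : γ₀ = γ
  · rw [show γ - γ₀ = 0 by rw [h]; ring, coe_e_zero_pow, HahnSeries.coeff_single]
    simp [h]
  · rw [coeff_e_pow_ne (sub_ne_zero.mpr (fun hh => h hh.symm)) j hn]
    simp [h]

section Derivation

variable (δ : Derivation C (RatFunc C) (RatFunc C)) (hδX : δ RatFunc.X = RatFunc.X)

lemma delta_C (c : C) : δ (RatFunc.C c) = 0 := by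
  rw [← RatFunc.algebraMap_eq_C]
  exact Derivation.map_algebraMap δ c

include hδX

lemma delta_e_pow (γ : C) (j : ℕ) :
    δ (e γ ^ (j+1)) = (-(j+1 : C)) • e γ ^ (j+1) + (-(j+1 : C) * γ) • e γ ^ (j+1+1) := by
  have hX := XsubC_ne γ
  have h1 : δ (RatFunc.X - RatFunc.C γ) = RatFunc.X := by
    rw [map_sub, hδX, delta_C δ, sub_zero]
  have h2 : e γ ^ (j+1) = ((RatFunc.X - RatFunc.C γ) ^ (j+1))⁻¹ := by rw [e, inv_pow]
  rw [h2, Derivation.leibniz_inv, Derivation.leibniz_pow, h1, Nat.add_sub_cancel]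
  simp only [smul_eq_mul, nsmul_eq_mul, RatFunc.smul_eq_C_mul, map_neg, map_mul, map_add,
    map_one, map_natCast, Nat.cast_add, Nat.cast_one, e, inv_pow]
  field_simp
  ring

noncomputable def SP (γ : C) (r : ℕ) : Submodule C (RatFunc C) :=
  Submodule.span C ((fun j => e γ ^ j) '' (Set.Icc 1 r))

omit hδX in
lemma e_pow_mem {γ : C} {j r : ℕ} (h1 : 1 ≤ j) (h2 : j ≤ r) : e γ ^ j ∈ SP γ r :=
  Submodule.subset_span ⟨j, ⟨h1, h2⟩, rfl⟩

lemma delta_mem_SP {γ : C} {r : ℕ} {g : RatFunc C} (hg : g ∈ SP γ r) : δ g ∈ SP γ (r+1) := by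
  have hle : SP γ r ≤ (SP γ (r+1)).comap δ.toLinearMap := by
    rw [SP, Submodule.span_le]
    rintro _ ⟨j, ⟨hj1, hjr⟩, rfl⟩
    simp only [Set.mem_preimage, SetLike.mem_coe, Submodule.mem_comap, Derivation.coeFn_coe]
    obtain ⟨k, rfl⟩ : ∃ k, j = k + 1 := ⟨j - 1, (Nat.succ_pred_eq_of_pos hj1).symm⟩
    rw [delta_e_pow δ hδX]
    exact Submodule.add_mem _
      (Submodule.smul_mem _ _ (e_pow_mem hj1 (le_trans hjr (Nat.le_succ r))))
      (Submodule.smul_mem _ _ (e_pow_mem (by omega) (by omega)))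
  exact hle hg

omit hδX in
lemma lca_SP {γ : C} {r : ℕ} {g : RatFunc C} (hg : g ∈ SP γ r) (γ₀ : C) {n : ℤ}
    (hneg : n < 0) (hlow : n < -(r:ℤ)) : laurentCoeffAt g γ₀ n = 0 := by
  induction hg using Submodule.span_induction with
  | mem x hx =>
    obtain ⟨j, ⟨hj1, hjr⟩, rfl⟩ := hx
    rw [lca_e_pow γ γ₀ j hneg, if_neg]
    rintro ⟨-, rfl⟩
    have : (j:ℤ) ≤ (r:ℤ) := by exact_mod_cast hjr
    omega
  | zero => exact lca_zero _ _
  | add x y hx hy ihx ihy => rw [lca_add, ihx, ihy, add_zero]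
  | smul a x hx ih => rw [lca_smul, ih, mul_zero]

lemma iter_delta (γ : C) (r : ℕ) :
    ∃ g ∈ SP γ r, (⇑δ)^[r] (e γ)
      = (((-1:C)^r * r.factorial * γ^r) • e γ ^ (r+1)) + g := by
  induction r with
  | zero => exact ⟨0, Submodule.zero_mem _, by simp⟩
  | succ r ih =>
    obtain ⟨g, hg, heq⟩ := ih
    refine ⟨((-1:C)^r * r.factorial * γ^r * (-(r+1:C))) • e γ ^ (r+1) + δ g,
      Submodule.add_mem _ (Submodule.smul_mem _ _ (e_pow_mem (by omega) (by omega)))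
        (delta_mem_SP δ hδX hg), ?_⟩
    have hc : ((-1:C)^r * r.factorial * γ^r) * (-(r+1:C) * γ)
        = (-1:C)^(r+1) * (r+1).factorial * γ^(r+1) := by
      rw [Nat.factorial_succ]
      push_cast
      ring
    rw [Function.iterate_succ_apply', heq, map_add, Derivation.map_smul, delta_e_pow δ hδX γ r,
      smul_add, smul_smul, smul_smul, hc]
    abel

omit hδX in
lemma lca_C (c : C) {γ₀ : C} {n : ℤ} (hn : n ≠ 0) : laurentCoeffAt (RatFunc.C c) γ₀ n = 0 := by
  rw [laurentCoeffAt, RatFunc.laurent_C, ← RatFunc.algebraMap_C, ← RatFunc.coePolynomial,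
    ← RatFunc.coe_coe, Polynomial.coe_C, PowerSeries.coe_C, HahnSeries.C_apply,
    HahnSeries.coeff_single_of_ne hn]

lemma term_lemma (γ γ₀ : C) (r : ℕ) :
    laurentCoeffAt ((⇑δ)^[r] (e γ)) γ₀ (-((r:ℤ)+1))
      = (-1:C)^r * r.factorial * γ₀^r * laurentCoeffAt (e γ) γ₀ (-1) := by
  obtain ⟨g, hg, heq⟩ := iter_delta δ hδX γ r
  have hn1 : (-((r:ℤ)+1)) < 0 := by omega
  rw [heq, lca_add, lca_smul, lca_e_pow γ γ₀ (r+1) hn1,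
    lca_SP hg γ₀ hn1 (by omega), add_zero]
  have h1 := lca_e_pow γ γ₀ 1 (show (-1:ℤ) < 0 by norm_num)
  rw [pow_one] at h1
  rw [h1]
  have hcond : (-((r:ℤ)+1)) = -(((r+1:ℕ)):ℤ) := by push_cast; ring
  by_cases h : γ₀ = γ
  · subst h
    rw [if_pos ⟨rfl, hcond⟩, if_pos ⟨rfl, by norm_num⟩]
  · rw [if_neg (fun hh => h hh.1), if_neg (fun hh => h hh.1)]
    ring

omit hδX in
lemma LD_mul {x y : RatFunc C} (hx : x ≠ 0) (hy : y ≠ 0) :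
    δ (x*y) / (x*y) = δ x / x + δ y / y := by
  rw [Derivation.leibniz, smul_eq_mul, smul_eq_mul]
  field_simp
  ring

lemma LD_linear (γ : C) : δ (RatFunc.X - RatFunc.C γ) / (RatFunc.X - RatFunc.C γ)
    = 1 + γ • e γ := by
  rw [map_sub, hδX, delta_C δ, sub_zero, RatFunc.smul_eq_C_mul, e]
  field_simp [XsubC_ne γ]
  ring

omit hδX in
lemma LD_prod (M : Multiset (RatFunc C)) (h : ∀ x ∈ M, x ≠ 0) :
    δ M.prod / M.prod = (M.map (fun x => δ x / x)).sum := by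
  induction M using Multiset.induction with
  | empty => simp
  | cons a M ih =>
    have ha : a ≠ 0 := h a (Multiset.mem_cons_self a M)
    have hM : ∀ x ∈ M, x ≠ 0 := fun x hx => h x (Multiset.mem_cons_of_mem hx)
    have hMp : M.prod ≠ 0 := Multiset.prod_ne_zero (fun h0 => hM 0 h0 rfl)
    rw [Multiset.prod_cons, LD_mul δ ha hMp, Multiset.map_cons, Multiset.sum_cons, ih hM]

lemma LD_poly [IsAlgClosed C] (p : Polynomial C) (hp : p ≠ 0) : ∃ (c : C) (M : Multiset C),
    δ (algebraMap C[X] (RatFunc C) p) / algebraMap C[X] (RatFunc C) p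
      = RatFunc.C c + (M.map (fun γ => γ • e γ)).sum := by
  refine ⟨p.roots.card, p.roots, ?_⟩
  have hsplit : p = Polynomial.C p.leadingCoeff * (p.roots.map fun a => X - Polynomial.C a).prod :=
    (IsAlgClosed.splits p).eq_prod_roots
  have himg : algebraMap C[X] (RatFunc C) p
      = RatFunc.C p.leadingCoeff * ((p.roots.map fun a => RatFunc.X - RatFunc.C a)).prod := by
    conv_lhs => rw [hsplit]
    rw [map_mul, RatFunc.algebraMap_C, map_multiset_prod, Multiset.map_map]
    congr 1
    apply congrArg Multiset.prod
    apply Multiset.map_congr rfl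
    intro a _
    exact algebraMap_XsubC a
  have hlead : RatFunc.C p.leadingCoeff ≠ 0 := by
    rw [← RatFunc.algebraMap_C]
    exact RatFunc.algebraMap_ne_zero (by simp [Polynomial.leadingCoeff_ne_zero.mpr hp])
  have hfac : ∀ x ∈ (p.roots.map fun a => RatFunc.X - RatFunc.C a), x ≠ 0 := by
    intro x hx
    obtain ⟨a, _, rfl⟩ := Multiset.mem_map.mp hx
    exact XsubC_ne a
  rw [himg, LD_mul δ hlead (Multiset.prod_ne_zero (fun h0 => (hfac 0 h0) rfl)),
    delta_C δ, zero_div, zero_add, LD_prod δ _ hfac, Multiset.map_map]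
  have hmap : (p.roots.map ((fun x => δ x / x) ∘ (fun a => RatFunc.X - RatFunc.C a)))
      = p.roots.map (fun a => 1 + a • e a) := by
    apply Multiset.map_congr rfl
    intro a _
    exact LD_linear δ hδX a
  rw [hmap, Multiset.sum_map_add]
  congr 1
  rw [Multiset.map_const', Multiset.sum_replicate, nsmul_eq_mul, mul_one, map_natCast]

omit hδX in
lemma iter_add (r : ℕ) (x y : RatFunc C) :
    (⇑δ)^[r] (x + y) = (⇑δ)^[r] x + (⇑δ)^[r] y := by
  induction r generalizing x y with
  | zero => rfl
  | succ r ih => rw [Function.iterate_succ_apply, Function.iterate_succ_apply,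
      Function.iterate_succ_apply, map_add, ih]

omit hδX in
lemma iter_zero (r : ℕ) : (⇑δ)^[r] (0 : RatFunc C) = 0 :=
  Function.iterate_fixed (map_zero δ) r

omit hδX in
lemma iter_smul (r : ℕ) (c : C) (x : RatFunc C) :
    (⇑δ)^[r] (c • x) = c • (⇑δ)^[r] x := by
  induction r generalizing x with
  | zero => rfl
  | succ r ih => rw [Function.iterate_succ_apply, Function.iterate_succ_apply,
      Derivation.map_smul, ih]

lemma main_pt [IsAlgClosed C] (a : RatFunc C) (ha : a ≠ 0) (γ₀ : C) (r : ℕ) :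
    laurentCoeffAt ((⇑δ)^[r] (δ a / a)) γ₀ (-((r:ℤ)+1))
      = (-1:C)^r * r.factorial * γ₀^r * laurentCoeffAt (δ a / a) γ₀ (-1) := by
  set K : C := (-1:C)^r * r.factorial * γ₀^r with hK
  set Good : RatFunc C → Prop := fun h =>
    laurentCoeffAt ((⇑δ)^[r] h) γ₀ (-((r:ℤ)+1)) = K * laurentCoeffAt h γ₀ (-1) with hGood
  have good_add : ∀ x y, Good x → Good y → Good (x + y) := by
    intro x y hx hy
    simp only [hGood] at *
    rw [iter_add, lca_add, lca_add, hx, hy]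
    ring
  have good_zero : Good 0 := by
    simp only [hGood]
    rw [iter_zero, lca_zero, lca_zero, mul_zero]
  have good_neg : ∀ x, Good x → Good (-x) := by
    intro x hx
    simp only [hGood] at *
    have hneg : -x = (-1 : C) • x := by rw [neg_smul, one_smul]
    rw [hneg, iter_smul, lca_smul, lca_smul, hx]
    ring
  have good_C : ∀ c : C, Good (RatFunc.C c) := by
    intro c
    simp only [hGood]
    rw [lca_C c (by norm_num : (-1:ℤ) ≠ 0), mul_zero]
    cases r with
    | zero =>
      simp only [Function.iterate_zero, id_eq]
      exact lca_C c (by norm_num)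
    | succ r =>
      rw [Function.iterate_succ_apply, delta_C δ, iter_zero, lca_zero]
  have good_term : ∀ γ : C, Good (γ • e γ) := by
    intro γ
    simp only [hGood]
    rw [iter_smul, lca_smul, term_lemma δ hδX, lca_smul]
    ring
  have good_sum : ∀ M : Multiset C, Good ((M.map (fun γ => γ • e γ)).sum) := by
    intro M
    induction M using Multiset.induction with
    | empty => simpa using good_zero
    | cons b M ih =>
      rw [Multiset.map_cons, Multiset.sum_cons]
      exact good_add _ _ (good_term b) ih
  -- structure of δ a / a
  obtain ⟨c1, M, hM⟩ := LD_poly δ hδX a.num (RatFunc.num_ne_zero ha)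
  obtain ⟨c2, N, hN⟩ := LD_poly δ hδX a.denom a.denom_ne_zero
  have hden : algebraMap C[X] (RatFunc C) a.denom ≠ 0 :=
    RatFunc.algebraMap_ne_zero a.denom_ne_zero
  have h1 : a * algebraMap C[X] (RatFunc C) a.denom = algebraMap C[X] (RatFunc C) a.num := by
    nth_rewrite 1 [← RatFunc.num_div_denom a]
    rw [div_mul_cancel₀ _ hden]
  have key : δ a / a = δ (algebraMap C[X] (RatFunc C) a.num) / algebraMap C[X] (RatFunc C) a.num
      - δ (algebraMap C[X] (RatFunc C) a.denom) / algebraMap C[X] (RatFunc C) a.denom := by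
    have h2 := LD_mul δ ha hden
    rw [h1] at h2
    exact eq_sub_of_add_eq h2.symm
  have hdecomp : δ a / a = RatFunc.C c1 + ((M.map (fun γ => γ • e γ)).sum
      + (-(RatFunc.C c2) + -((N.map (fun γ => γ • e γ)).sum))) := by
    rw [key, hM, hN]
    ring
  show Good (δ a / a)
  rw [hdecomp]
  exact good_add _ _ (good_C c1) (good_add _ _ (good_sum M)
    (good_add _ _ (good_neg _ (good_C c2)) (good_neg _ (good_sum N))))

end Derivation

end QresAux

/-- Lemma `qres-computation`: for `0 ≠ a ∈ C(x)`, `r ∈ ℕ`, and `β ∈ C^×`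
a zero or pole of `a`,
`q-dres(δ^r(δ(a)/a), [β]_q, r+1) = (−1)^r · r! · β^r · q-dres(δ(a)/a, [β]_q, 1)`. -/
theorem stmt_1 (C : Type*) [Field C] [CharZero C] [IsAlgClosed C]
    (q : C) (hq0 : q ≠ 0) (hq : ∀ n : ℕ, 0 < n → q ^ n ≠ 1)
    (δ : Derivation C (RatFunc C) (RatFunc C)) (hδX : δ RatFunc.X = RatFunc.X)
    (a : RatFunc C) (ha : a ≠ 0) (r : ℕ) (β : C) (hβ0 : β ≠ 0)
    (hβ : Polynomial.eval β a.num = 0 ∨ Polynomial.eval β a.denom = 0) :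
    qDres q ((⇑δ)^[r] (δ a / a)) β (r + 1)
      = (-1 : C) ^ r * (r.factorial : C) * β ^ r * qDres q (δ a / a) β 1 := by
  classical
  set f := δ a / a with hf
  set K : C := (-1 : C) ^ r * (r.factorial : C) * β ^ r with hKdef
  have hK : K ≠ 0 := by
    refine mul_ne_zero (mul_ne_zero ?_ ?_) (pow_ne_zero _ hβ0)
    · exact pow_ne_zero _ (by norm_num)
    · exact Nat.cast_ne_zero.mpr r.factorial_ne_zero
  have hterm : ∀ ℓ : ℤ,
      q ^ (-(ℓ * ((r+1 : ℕ) : ℤ))) * laurentCoeffAt ((⇑δ)^[r] f) (β * q ^ ℓ) (-((r+1 : ℕ) : ℤ))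
      = K * (q ^ (-(ℓ * ((1:ℕ) : ℤ))) * laurentCoeffAt f (β * q ^ ℓ) (-((1:ℕ) : ℤ))) := by
    intro ℓ
    have hcast : (-(((r+1:ℕ)):ℤ)) = -((r:ℤ)+1) := by push_cast; ring
    have hone : (-(((1:ℕ)):ℤ)) = (-1 : ℤ) := by norm_num
    rw [hcast, hone, QresAux.main_pt δ hδX a ha (β * q ^ ℓ) r]
    have hz : q ^ (-(ℓ * ((r+1:ℕ) : ℤ))) * (β * q ^ ℓ) ^ r
        = β ^ r * q ^ (-(ℓ * ((1:ℕ) : ℤ))) := by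
      rw [mul_pow, ← zpow_natCast (q ^ ℓ) r, ← zpow_mul]
      rw [← mul_assoc]  -- q^A * (β^r * q^(ℓr)) -> ...
      rw [mul_comm (q ^ (-(ℓ * ((r+1:ℕ) : ℤ)))) (β ^ r), mul_assoc, ← zpow_add₀ hq0]
      congr 1
      push_cast
      ring
    calc q ^ (-(ℓ * ((r+1:ℕ) : ℤ)))
        * ((-1:C) ^ r * (r.factorial : C) * (β * q ^ ℓ) ^ r * laurentCoeffAt f (β * q ^ ℓ) (-1))
        = ((-1:C) ^ r * (r.factorial : C))
          * (q ^ (-(ℓ * ((r+1:ℕ) : ℤ))) * (β * q ^ ℓ) ^ r)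
          * laurentCoeffAt f (β * q ^ ℓ) (-1) := by ring
      _ = K * (q ^ (-(ℓ * ((1:ℕ) : ℤ))) * laurentCoeffAt f (β * q ^ ℓ) (-1)) := by
          rw [hz, hKdef]; ring
  show qDres q ((⇑δ)^[r] f) β (r + 1) = K * qDres q f β 1
  rw [qDres, qDres]
  rw [finsum_congr hterm]
  set g : ℤ → C := fun ℓ => q ^ (-(ℓ * ((1:ℕ) : ℤ))) * laurentCoeffAt f (β * q ^ ℓ) (-((1:ℕ) : ℤ)) with hg
  by_cases hfin : (Function.support g).Finite
  · exact (mul_finsum g K).symm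
  · have hsupp : Function.support (fun ℓ => K * g ℓ) = Function.support g := by
      ext ℓ
      rw [Function.mem_support, Function.mem_support, not_iff_not]
      constructor
      · intro h
        rcases mul_eq_zero.mp h with h1 | h1
        · exact absurd h1 hK
        · exact h1
      · intro h
        rw [h, mul_zero]
    rw [finsum_of_infinite_support (by rw [hsupp]; exact hfin),
      finsum_of_infinite_support hfin, mul_zero]
end

section
/- Let C be an algebraically closed field of characteristic zero, q ∈ C nonzero and not a root of unity, u₁, u₂ ∈ C(x) nonzero, and m₁, m₂ ∈ ℤ. Suppose there exists g ∈ C(x) with m₁δ(δ(u₁)/u₁) + m₂δ(δ(u₂)/u₂) = σ(g) − g. Then, setting c := m₁·deg(u₁) + m₂·deg(u₂) ∈ ℤ, where deg(u) denotes the degree of the numerator of u minus the degree of its denominator, there exists f ∈ C(x) with m₁δ(u₁)/u₁ + m₂δ(u₂)/u₂ = σ(f) − f + c. -/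
open Polynomial HahnSeries Finset
open scoped RatFunc
noncomputable section
variable {C : Type*} [Field C]

def rescF (q : C) (hq0 : q ≠ 0) (f : LaurentSeries C) : LaurentSeries C :=
  ⟨fun n => q ^ n * f.coeff n, by
    have h : (Function.support fun n => q ^ (n:ℤ) * f.coeff n) = f.support := by
      ext n; simp [Function.support, zpow_ne_zero n hq0]
    rw [h]; exact f.isPWO_support⟩

@[simp] lemma rescF_coeff (q : C) (hq0 : q ≠ 0) (f : LaurentSeries C) (n : ℤ) :
    (rescF q hq0 f).coeff n = q ^ n * f.coeff n := rfl

lemma rescF_support (q : C) (hq0 : q ≠ 0) (f : LaurentSeries C) :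
    (rescF q hq0 f).support = f.support := by
  ext n; simp [HahnSeries.support, Function.support, zpow_ne_zero n hq0]

lemma rescF_mul (q : C) (hq0 : q ≠ 0) (x y : LaurentSeries C) :
    rescF q hq0 (x * y) = rescF q hq0 x * rescF q hq0 y := by
  ext n
  rw [rescF_coeff, HahnSeries.coeff_mul, HahnSeries.coeff_mul]
  have hset : Finset.antidiagonal (rescF q hq0 x).isPWO_support (rescF q hq0 y).isPWO_support n
      = Finset.antidiagonal x.isPWO_support y.isPWO_support n := by
    ext ij; simp [Finset.mem_antidiagonal, rescF_support]
  rw [hset, Finset.mul_sum]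
  refine Finset.sum_congr rfl fun ij hij => ?_
  rw [Finset.mem_antidiagonal] at hij
  rw [rescF_coeff, rescF_coeff, ← hij.2.2, zpow_add₀ hq0]
  ring

def resc (q : C) (hq0 : q ≠ 0) : LaurentSeries C →+* LaurentSeries C where
  toFun := rescF q hq0
  map_one' := by
    ext n
    by_cases h : n = (0:ℤ) <;> simp [HahnSeries.coeff_one, HahnSeries.coeff_single, h]
  map_mul' := rescF_mul q hq0
  map_zero' := by ext n; simp
  map_add' x y := by ext n; simp [mul_add]

@[simp] lemma resc_coeff (q : C) (hq0 : q ≠ 0) (f : LaurentSeries C) (n : ℤ) :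
    (resc q hq0 f).coeff n = q ^ n * f.coeff n := rfl

lemma coeRC (r : C) : ((RatFunc.C r : RatFunc C) : LaurentSeries C) = HahnSeries.C r := by
  rw [← RatFunc.algebraMap_C, ← RatFunc.coePolynomial_eq_algebraMap, ← RatFunc.coe_coe, Polynomial.coe_C, PowerSeries.coe_C]

lemma coe_sigma (q : C) (hq0 : q ≠ 0) (σ : RatFunc C ≃ₐ[C] RatFunc C)
    (hσX : σ RatFunc.X = RatFunc.C q * RatFunc.X) (G : RatFunc C) :
    ((σ G : RatFunc C) : LaurentSeries C) = resc q hq0 (G : LaurentSeries C) := by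
  have key : (algebraMap (RatFunc C) (LaurentSeries C)).comp (σ : RatFunc C →+* RatFunc C)
      = (resc q hq0).comp (algebraMap (RatFunc C) (LaurentSeries C)) := by
    refine IsLocalization.ringHom_ext (nonZeroDivisors C[X]) (RingHom.ext fun p => ?_)
    induction p using Polynomial.induction_on' with
    | add p r hp hr => simp only [map_add, hp, hr]
    | monomial n a =>
      simp only [RingHom.comp_apply, RingHom.coe_coe, AlgHom.coe_toRingHom]
      rw [← Polynomial.C_mul_X_pow_eq_monomial]
      rw [map_mul, map_pow, RatFunc.algebraMap_C, RatFunc.algebraMap_X,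
        map_mul, map_pow, map_mul, map_pow]
      have hσC : σ (RatFunc.C a) = RatFunc.C a := by
        rw [← RatFunc.algebraMap_eq_C]; exact σ.commutes a
      rw [hσC, hσX]
      simp only [AlgHom.toRingHom_eq_coe, RingHom.coe_coe, AlgHom.coe_toRingHom, coeRC, RatFunc.coe_X, map_mul, map_pow]
      have h1 : resc q hq0 (HahnSeries.C a) = HahnSeries.C a := by
        ext n; by_cases h : n = (0:ℤ) <;> simp [HahnSeries.C_apply, HahnSeries.coeff_single, h]
      have h2 : resc q hq0 (single 1 1) = HahnSeries.C q * single (1:ℤ) 1 := by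
        rw [HahnSeries.C_apply, single_mul_single, zero_add, mul_one]
        ext n; by_cases h : n = (1:ℤ) <;> simp [HahnSeries.coeff_single, h]
      rw [h1, h2]
  have := RingHom.congr_fun key G
  simpa using this

lemma nopole (P Q : C[X]) (hQ : Q.eval 0 ≠ 0) (n : ℤ) (hn : n < 0) :
    ((algebraMap C[X] (RatFunc C) P / algebraMap C[X] (RatFunc C) Q : RatFunc C) :
      LaurentSeries C).coeff n = 0 := by
  have hQ0 : Q ≠ 0 := fun h => hQ (by simp [h])
  have hc : PowerSeries.constantCoeff (Q : PowerSeries C) ≠ 0 := by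
    rwa [Polynomial.constantCoeff_coe, Polynomial.coeff_zero_eq_eval_zero]
  have hQL : ((Q : PowerSeries C) : LaurentSeries C) ≠ 0 := by
    intro h
    apply hQ0
    have := HahnSeries.ofPowerSeries_injective (Γ := ℤ) (R := C) (h.trans (map_zero _).symm)
    simpa [Polynomial.coe_eq_zero_iff] using this
  have key : ((algebraMap C[X] (RatFunc C) P / algebraMap C[X] (RatFunc C) Q : RatFunc C) :
      LaurentSeries C) = (((P : PowerSeries C) * (Q : PowerSeries C)⁻¹ : PowerSeries C) :
      LaurentSeries C) := by
    rw [map_div₀]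
    have hP : ((algebraMap C[X] (RatFunc C) P : RatFunc C) : LaurentSeries C)
        = ((P : PowerSeries C) : LaurentSeries C) := (RatFunc.coe_coe P).symm
    have hQ' : ((algebraMap C[X] (RatFunc C) Q : RatFunc C) : LaurentSeries C)
        = ((Q : PowerSeries C) : LaurentSeries C) := (RatFunc.coe_coe Q).symm
    rw [hP, hQ', div_eq_iff hQL, ← PowerSeries.coe_mul, mul_assoc,
      PowerSeries.inv_mul_cancel _ hc, mul_one]
  rw [key, PowerSeries.coeff_coe, if_pos hn]

/-- building block `ρ/(X-a)` -/
def TT (a ρ : C) : RatFunc C := RatFunc.C ρ * (RatFunc.X - RatFunc.C a)⁻¹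

/-- `δ` of the building block -/
def DT (a ρ : C) : RatFunc C :=
  -(RatFunc.C ρ * RatFunc.X * ((RatFunc.X - RatFunc.C a)⁻¹) ^ 2)

/-- coefficient of `(X-b)^(-2)` in the Laurent expansion at `b` -/
def cc (b : C) (F : RatFunc C) : C :=
  ((RatFunc.laurent b F : RatFunc C) : LaurentSeries C).coeff (-2)

lemma cc_sub (b : C) (F G : RatFunc C) : cc b (F - G) = cc b F - cc b G := by
  simp [cc, map_sub, HahnSeries.coeff_sub]

lemma cc_add (b : C) (F G : RatFunc C) : cc b (F + G) = cc b F + cc b G := by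
  simp [cc, map_add, HahnSeries.coeff_add]

lemma coe_X_inv : ((RatFunc.X⁻¹ : RatFunc C) : LaurentSeries C) = single (-1 : ℤ) 1 := by
  rw [map_inv₀, RatFunc.coe_X]
  refine inv_eq_of_mul_eq_one_right ?_
  rw [single_mul_single, mul_one]
  norm_num

lemma cc_DT_self (a ρ : C) : cc a (DT a ρ) = -(ρ * a) := by
  have hl : RatFunc.laurent a (DT a ρ)
      = -(RatFunc.C ρ * (RatFunc.X + RatFunc.C a) * (RatFunc.X⁻¹) ^ 2) := by
    simp [DT, map_mul, map_neg, map_pow, map_inv₀, RatFunc.laurent_X, RatFunc.laurent_C,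
      map_sub]
  rw [cc, hl]
  simp only [map_neg, map_mul, map_pow, coe_X_inv,
    map_add, coeRC, RatFunc.coe_X, HahnSeries.C_apply]
  have h2 : (single (-1 : ℤ) (1:C)) ^ 2 = single (-2 : ℤ) 1 := by
    rw [sq, single_mul_single]; norm_num
  rw [h2, mul_add, add_mul]
  simp only [single_mul_single]
  norm_num

lemma cc_DT_ne {b a : C} (hba : b ≠ a) (ρ : C) : cc b (DT a ρ) = 0 := by
  set P : C[X] := Polynomial.C ρ * (Polynomial.X + Polynomial.C b) with hP
  set Q : C[X] := (Polynomial.X + Polynomial.C (b - a)) ^ 2 with hQ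
  have hl : RatFunc.laurent b (DT a ρ)
      = -(algebraMap C[X] (RatFunc C) P / algebraMap C[X] (RatFunc C) Q) := by
    simp only [DT, map_neg, map_mul, map_pow, map_inv₀, map_sub, RatFunc.laurent_X,
      RatFunc.laurent_C, hP, hQ, map_add, RatFunc.algebraMap_C, RatFunc.algebraMap_X]
    rw [div_eq_mul_inv, ← inv_pow]
    ring_nf
  have hQ0 : Q.eval 0 ≠ 0 := by
    simp [hQ, sub_ne_zero.mpr hba]
  rw [cc, hl, map_neg, HahnSeries.coeff_neg, nopole P Q hQ0 (-2) (by norm_num), neg_zero]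

lemma X_sub_C_ne (a : C) : (RatFunc.X - RatFunc.C a : RatFunc C) ≠ 0 := by
  have : (RatFunc.X - RatFunc.C a : RatFunc C)
      = algebraMap C[X] (RatFunc C) (Polynomial.X - Polynomial.C a) := by
    simp [map_sub, RatFunc.algebraMap_C, RatFunc.algebraMap_X]
  rw [this]
  exact RatFunc.algebraMap_ne_zero (Polynomial.X_sub_C_ne_zero a)

section Delta
variable (δ : Derivation C (RatFunc C) (RatFunc C))

lemma delta_C (c : C) : δ (RatFunc.C c) = 0 := by
  rw [← RatFunc.algebraMap_eq_C]; exact Derivation.map_algebraMap δ c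

lemma delta_TT (hδX : δ RatFunc.X = RatFunc.X) (a ρ : C) : δ (TT a ρ) = DT a ρ := by
  rw [TT, Derivation.leibniz, delta_C, Derivation.leibniz_inv, map_sub, hδX, delta_C]
  simp only [smul_eq_mul, DT]
  ring

lemma delta_log_mul {u v : RatFunc C} (hu : u ≠ 0) (hv : v ≠ 0) :
    δ (u * v) / (u * v) = δ u / u + δ v / v := by
  rw [Derivation.leibniz]
  field_simp
  ring

lemma delta_log_single (hδX : δ RatFunc.X = RatFunc.X) (a : C) :
    δ (algebraMap C[X] (RatFunc C) (Polynomial.X - Polynomial.C a))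
      / algebraMap C[X] (RatFunc C) (Polynomial.X - Polynomial.C a) = 1 + TT a a := by
  have hm : algebraMap C[X] (RatFunc C) (Polynomial.X - Polynomial.C a)
      = RatFunc.X - RatFunc.C a := by
    simp [map_sub, RatFunc.algebraMap_C, RatFunc.algebraMap_X]
  rw [hm, map_sub, hδX, delta_C, sub_zero, div_eq_iff (X_sub_C_ne a), TT, add_mul, one_mul,
    mul_assoc, inv_mul_cancel₀ (X_sub_C_ne a), mul_one]
  ring

lemma delta_log_poly (hδX : δ RatFunc.X = RatFunc.X) (s : Multiset C) (lc : C) (hlc : lc ≠ 0) :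
    δ (algebraMap C[X] (RatFunc C)
        (Polynomial.C lc * (s.map (fun a => Polynomial.X - Polynomial.C a)).prod))
      / algebraMap C[X] (RatFunc C)
        (Polynomial.C lc * (s.map (fun a => Polynomial.X - Polynomial.C a)).prod)
    = (Multiset.card s : RatFunc C) + (s.map (fun a => TT a a)).sum := by
  induction s using Multiset.induction_on with
  | empty =>
    simp only [Multiset.map_zero, Multiset.prod_zero, mul_one, Multiset.sum_zero,
      Multiset.card_zero]
    rw [RatFunc.algebraMap_C, delta_C, zero_div]
    norm_num
  | cons a s ih =>
    have hprod : (Polynomial.C lc * ((a ::ₘ s).map (fun a => Polynomial.X - Polynomial.C a)).prod)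
        = (Polynomial.X - Polynomial.C a)
          * (Polynomial.C lc * (s.map (fun a => Polynomial.X - Polynomial.C a)).prod) := by
      rw [Multiset.map_cons, Multiset.prod_cons]; ring
    have h1 : algebraMap C[X] (RatFunc C) (Polynomial.X - Polynomial.C a) ≠ 0 :=
      RatFunc.algebraMap_ne_zero (Polynomial.X_sub_C_ne_zero a)
    have h2 : algebraMap C[X] (RatFunc C)
        (Polynomial.C lc * (s.map (fun a => Polynomial.X - Polynomial.C a)).prod) ≠ 0 := by
      refine RatFunc.algebraMap_ne_zero (mul_ne_zero (by simpa using hlc) ?_)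
      apply Multiset.prod_ne_zero
      intro h0
      obtain ⟨b, _, hb⟩ := Multiset.mem_map.mp h0
      exact Polynomial.X_sub_C_ne_zero b hb
    rw [hprod, map_mul, delta_log_mul δ h1 h2, delta_log_single δ hδX a, ih]
    simp only [Multiset.card_cons, Multiset.map_cons, Multiset.sum_cons]
    push_cast
    ring
end Delta

section Sigma
variable (σ : RatFunc C ≃ₐ[C] RatFunc C)

/-- the subgroup of summable elements `σ w - w` -/
def VV : AddSubgroup (RatFunc C) where
  carrier := {x | ∃ w, x = σ w - w}
  zero_mem' := ⟨0, by simp⟩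
  add_mem' := by
    rintro x y ⟨w1, rfl⟩ ⟨w2, rfl⟩
    exact ⟨w1 + w2, by rw [map_add]; ring⟩
  neg_mem' := by
    rintro x ⟨w, rfl⟩
    exact ⟨-w, by rw [map_neg]; ring⟩

lemma sigma_C (c : C) : σ (RatFunc.C c) = RatFunc.C c := by
  rw [← RatFunc.algebraMap_eq_C]; exact σ.commutes c

lemma sigma_TT (q : C) (hq0 : q ≠ 0) (hσX : σ RatFunc.X = RatFunc.C q * RatFunc.X)
    (b ρ : C) : σ (TT b ρ) = TT (q⁻¹ * b) (q⁻¹ * ρ) := by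
  have hfac : RatFunc.C q * RatFunc.X - RatFunc.C b
      = RatFunc.C q * (RatFunc.X - RatFunc.C (q⁻¹ * b)) := by
    rw [mul_sub, ← map_mul, mul_inv_cancel_left₀ hq0]
  rw [TT, map_mul, map_inv₀, map_sub, sigma_C, sigma_C, hσX, hfac, mul_inv, TT, ← map_inv₀,
    ← mul_assoc, ← map_mul, mul_comm ρ]

lemma step_mem (q : C) (hq0 : q ≠ 0) (hσX : σ RatFunc.X = RatFunc.C q * RatFunc.X)
    (c τ : C) : TT c τ - TT (q⁻¹ * c) (q⁻¹ * τ) ∈ VV σ := by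
  refine ⟨-TT c τ, ?_⟩
  rw [map_neg, sigma_TT σ q hq0 hσX]
  ring

lemma moving (q : C) (hq0 : q ≠ 0) (hσX : σ RatFunc.X = RatFunc.C q * RatFunc.X)
    (b ρ : C) (m : ℤ) : TT b ρ - TT (q ^ (-m) * b) (q ^ (-m) * ρ) ∈ VV σ := by
  induction m using Int.induction_on with
  | zero => simpa using (VV σ).zero_mem
  | succ n ih =>
    have step := step_mem σ q hq0 hσX (q ^ (-(n:ℤ)) * b) (q ^ (-(n:ℤ)) * ρ)
    have hexp : ∀ x : C, q⁻¹ * (q ^ (-(n:ℤ)) * x) = q ^ (-((n:ℤ)+1)) * x := by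
      intro x
      have h1 : (-((n:ℤ)+1)) = (-(n:ℤ)) - 1 := by ring
      rw [h1, zpow_sub_one₀ hq0]
      ring
    rw [hexp, hexp] at step
    have := (VV σ).add_mem ih step
    convert this using 1
    ring
  | pred n ih =>
    have step := step_mem σ q hq0 hσX (q ^ ((n:ℤ)+1) * b) (q ^ ((n:ℤ)+1) * ρ)
    have hexp : ∀ x : C, q⁻¹ * (q ^ ((n:ℤ)+1) * x) = q ^ ((n:ℤ)) * x := by
      intro x
      have h1 : ((n:ℤ)) = ((n:ℤ)+1) - 1 := by ring
      rw [h1, zpow_sub_one₀ hq0]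
      ring
    rw [hexp, hexp] at step
    have := (VV σ).add_mem ih ((VV σ).neg_mem step)
    have h2 : (-(-(n:ℤ)-1)) = ((n:ℤ)+1) := by ring
    have h3 : (-(-(n:ℤ))) = ((n:ℤ)) := by ring
    rw [h2]
    rw [h3] at this
    convert this using 1
    ring
end Sigma

section SSdef
variable (q : C) (σ : RatFunc C ≃ₐ[C] RatFunc C)

lemma laurent_sigma (hq0 : q ≠ 0) (hσX : σ RatFunc.X = RatFunc.C q * RatFunc.X) (b : C)
    (G : RatFunc C) : RatFunc.laurent b (σ G) = σ (RatFunc.laurent (q * b) G) := by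
  have key : (RatFunc.laurent b).toRingHom.comp (σ : RatFunc C →+* RatFunc C)
      = (σ : RatFunc C →+* RatFunc C).comp (RatFunc.laurent (q * b)).toRingHom := by
    refine IsLocalization.ringHom_ext (nonZeroDivisors C[X]) (RingHom.ext fun p => ?_)
    induction p using Polynomial.induction_on' with
    | add p r hp hr => simp only [map_add, hp, hr]
    | monomial n a =>
      simp only [RingHom.comp_apply, AlgHom.toRingHom_eq_coe, RingHom.coe_coe,
        AlgHom.coe_toRingHom]
      rw [← Polynomial.C_mul_X_pow_eq_monomial]
      rw [map_mul, map_pow, RatFunc.algebraMap_C, RatFunc.algebraMap_X]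
      have hσC : ∀ c : C, σ (RatFunc.C c) = RatFunc.C c := sigma_C σ
      simp only [map_mul, map_pow, RatFunc.laurent_C, RatFunc.laurent_X, hσC, hσX, map_add]
      ring
  exact RingHom.congr_fun key G

lemma cc_sigma (hq0 : q ≠ 0) (hσX : σ RatFunc.X = RatFunc.C q * RatFunc.X) (b : C)
    (G : RatFunc C) : cc b (σ G) = q ^ (-2 : ℤ) * cc (q * b) G := by
  rw [cc, laurent_sigma q σ hq0 hσX, coe_sigma q hq0 σ hσX, resc_coeff, cc]

/-- orbit functional -/
def SS (a : C) (F : RatFunc C) : C := ∑ᶠ k : ℤ, q ^ (2*k) * cc (a * q ^ (-k)) F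

lemma cc_supp_subset (G : RatFunc C) {b : C} (h : cc b G ≠ 0) : G.denom.IsRoot b := by
  by_contra hb
  apply h
  have hG : RatFunc.laurent b G
      = algebraMap C[X] (RatFunc C) (Polynomial.taylor b G.num)
        / algebraMap C[X] (RatFunc C) (Polynomial.taylor b G.denom) := by
    conv_lhs => rw [← RatFunc.num_div_denom G]
    exact RatFunc.laurent_div b G.num G.denom
  have he : (Polynomial.taylor b G.denom).eval 0 ≠ 0 := by
    rwa [Polynomial.taylor_eval, zero_add]
  rw [cc, hG]
  exact nopole _ _ he (-2) (by norm_num)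

lemma SS_supp_finite (hz : ∀ k : ℤ, q ^ k = 1 → k = 0) (hq0 : q ≠ 0) {a : C} (ha : a ≠ 0)
    (G : RatFunc C) :
    (Function.support fun k : ℤ => q ^ (2*k) * cc (a * q ^ (-k)) G).Finite := by
  have hinj : Function.Injective (fun k : ℤ => a * q ^ (-k)) := by
    intro k1 k2 hk
    simp only at hk
    have := mul_left_cancel₀ ha hk
    have h1 : q ^ (-k1 + k2) = 1 := by
      rw [zpow_add₀ hq0, this, ← zpow_add₀ hq0]
      simp [zpow_add₀ hq0, hq0]
    have := hz _ h1
    omega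
  have hfin : {b : C | G.denom.IsRoot b}.Finite := Polynomial.finite_setOf_isRoot G.denom_ne_zero
  apply Set.Finite.subset ((hfin.preimage (hinj.injOn)))
  intro k hk
  simp only [Function.mem_support, ne_eq] at hk
  have : cc (a * q ^ (-k)) G ≠ 0 := by
    intro h0; exact hk (by rw [h0, mul_zero])
  exact cc_supp_subset _ this

lemma SS_vanish (hz : ∀ k : ℤ, q ^ k = 1 → k = 0) (hq0 : q ≠ 0)
    (hσX : σ RatFunc.X = RatFunc.C q * RatFunc.X) {a : C} (ha : a ≠ 0)
    {x : RatFunc C} (hx : x ∈ VV σ) : SS q a x = 0 := by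
  obtain ⟨g, rfl⟩ := hx
  have hterm : ∀ k : ℤ, q ^ (2*k) * cc (a * q ^ (-k)) (σ g - g)
      = q ^ (2*k) * cc (a * q ^ (-k)) (σ g) - q ^ (2*k) * cc (a * q ^ (-k)) g := by
    intro k; rw [cc_sub, mul_sub]
  have h1 : ∀ k : ℤ, q ^ (2*k) * cc (a * q ^ (-k)) (σ g)
      = q ^ (2*(k-1)) * cc (a * q ^ (-(k-1))) g := by
    intro k
    rw [cc_sigma q σ hq0 hσX]
    have harg : q * (a * q ^ (-k)) = a * q ^ (-(k-1)) := by
      have : (-(k-1)) = (-k) + 1 := by ring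
      rw [this, zpow_add₀ hq0, zpow_one]
      ring
    rw [harg, ← mul_assoc, ← zpow_add₀ hq0]
    congr 2
    ring
  have hf2 : (Function.support fun k : ℤ => q ^ (2*k) * cc (a * q ^ (-k)) g).Finite :=
    SS_supp_finite q hz hq0 ha g
  have hf1 : (Function.support fun k : ℤ => q ^ (2*k) * cc (a * q ^ (-k)) (σ g)).Finite := by
    have : (fun k : ℤ => q ^ (2*k) * cc (a * q ^ (-k)) (σ g))
        = (fun k : ℤ => q ^ (2*(k-1)) * cc (a * q ^ (-(k-1))) g) := funext h1
    rw [this]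
    have hinj2 : Function.Injective (fun k : ℤ => k - 1) := fun x y h => by
      have := congrArg (· + 1) h
      simpa using this
    have := hf2.preimage (f := fun k : ℤ => k - 1) hinj2.injOn
    exact this.subset (by intro k hk; exact hk)
  rw [SS]
  have hsplit : ∑ᶠ k : ℤ, q ^ (2*k) * cc (a * q ^ (-k)) (σ g - g)
      = (∑ᶠ k : ℤ, q ^ (2*k) * cc (a * q ^ (-k)) (σ g))
        - ∑ᶠ k : ℤ, q ^ (2*k) * cc (a * q ^ (-k)) g := by
    rw [← finsum_sub_distrib hf1 hf2]
    exact finsum_congr hterm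
  rw [hsplit]
  have hshift : (∑ᶠ k : ℤ, q ^ (2*k) * cc (a * q ^ (-k)) (σ g))
      = ∑ᶠ k : ℤ, q ^ (2*k) * cc (a * q ^ (-k)) g := by
    rw [finsum_congr h1]
    exact finsum_comp_equiv (Equiv.subRight (1:ℤ))
      (f := fun k : ℤ => q ^ (2*k) * cc (a * q ^ (-k)) g)
  rw [hshift, sub_self]
end SSdef

/-- sum of building blocks over a list of (pole, residue) pairs -/
def Tsum (l : List (C × C)) : RatFunc C := (l.map (fun pr => TT pr.1 pr.2)).sum

/-- `p'` is not in the `q`-orbit of `p` -/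
def QRel (q : C) (p p' : C × C) : Prop := ∀ k : ℤ, p'.1 ≠ q ^ k * p.1

lemma TT_zero (a : C) : TT a 0 = 0 := by simp [TT]

lemma TT_add (a ρ₁ ρ₂ : C) : TT a (ρ₁ + ρ₂) = TT a ρ₁ + TT a ρ₂ := by
  simp [TT, map_add, add_mul]

section Insert
variable (q : C) (σ : RatFunc C ≃ₐ[C] RatFunc C)

lemma insert_TT (hq0 : q ≠ 0) (hσX : σ RatFunc.X = RatFunc.C q * RatFunc.X) :
    ∀ (l : List (C × C)), (∀ pr ∈ l, pr.1 ≠ 0) → l.Pairwise (QRel q) → ∀ a ρ : C, a ≠ 0 →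
    ∃ l' : List (C × C), (∀ pr ∈ l', pr.1 ≠ 0) ∧ l'.Pairwise (QRel q) ∧
      (∀ pr ∈ l', pr.1 = a ∨ ∃ p₀ ∈ l, pr.1 = p₀.1) ∧
      TT a ρ + Tsum l - Tsum l' ∈ VV σ := by
  intro l
  induction l with
  | nil =>
    intro _ _ a ρ ha
    refine ⟨[(a, ρ)], by simp [ha], by simp, by simp, ?_⟩
    simpa [Tsum] using (VV σ).zero_mem
  | cons p tl ih =>
    intro hnz hpw a ρ ha
    by_cases hca : ∃ k : ℤ, a = q ^ k * p.1
    · obtain ⟨k, hk⟩ := hca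
      refine ⟨(p.1, p.2 + q ^ (-k) * ρ) :: tl, ?_, ?_, ?_, ?_⟩
      · intro pr hpr
        rcases List.mem_cons.mp hpr with h | h
        · rw [h]; exact hnz p (List.mem_cons_self)
        · exact hnz pr (List.mem_cons_of_mem p h)
      · rcases List.pairwise_cons.mp hpw with ⟨hpt, htl⟩
        exact List.Pairwise.cons (fun x hx => hpt x hx) htl
      · intro pr hpr
        rcases List.mem_cons.mp hpr with h | h
        · exact Or.inr ⟨p, List.mem_cons_self, by rw [h]⟩
        · exact Or.inr ⟨pr, List.mem_cons_of_mem p h, rfl⟩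
      · have hmv := moving σ q hq0 hσX a ρ k
        have harg : q ^ (-k) * a = p.1 := by
          rw [hk, ← mul_assoc, ← zpow_add₀ hq0]
          simp
        rw [harg] at hmv
        have hTs : Tsum ((p.1, p.2 + q ^ (-k) * ρ) :: tl)
            = TT p.1 p.2 + TT p.1 (q ^ (-k) * ρ) + Tsum tl := by
          simp only [Tsum, List.map_cons, List.sum_cons, TT_add]
        have hTs2 : Tsum (p :: tl) = TT p.1 p.2 + Tsum tl := by
          simp [Tsum, List.map_cons, List.sum_cons]
        rw [hTs, hTs2]
        convert hmv using 1
        ring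
    · push_neg at hca
      rcases List.pairwise_cons.mp hpw with ⟨hpt, htl⟩
      obtain ⟨l'', h1, h2, h3, h4⟩ :=
        ih (fun pr hpr => hnz pr (List.mem_cons_of_mem p hpr)) htl a ρ ha
      refine ⟨p :: l'', ?_, ?_, ?_, ?_⟩
      · intro pr hpr
        rcases List.mem_cons.mp hpr with h | h
        · rw [h]; exact hnz p (List.mem_cons_self)
        · exact h1 pr h
      · refine List.Pairwise.cons ?_ h2
        intro x hx
        rcases h3 x hx with h | ⟨p₀, hp₀, hx1⟩
        · intro k hk
          exact hca k (by rw [← h, hk])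
        · intro k hk
          exact hpt p₀ hp₀ k (by rw [← hx1, hk])
      · intro pr hpr
        rcases List.mem_cons.mp hpr with h | h
        · exact Or.inr ⟨p, List.mem_cons_self, by rw [h]⟩
        · rcases h3 pr h with h' | ⟨p₀, hp₀, h'⟩
          · exact Or.inl h'
          · exact Or.inr ⟨p₀, List.mem_cons_of_mem p hp₀, h'⟩
      · have hTs2 : Tsum (p :: tl) = TT p.1 p.2 + Tsum tl := by
          simp [Tsum, List.map_cons, List.sum_cons]
        have hTs3 : Tsum (p :: l'') = TT p.1 p.2 + Tsum l'' := by
          simp [Tsum, List.map_cons, List.sum_cons]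
        rw [hTs2, hTs3]
        convert h4 using 1
        ring

lemma normalize_TT (hq0 : q ≠ 0) (hσX : σ RatFunc.X = RatFunc.C q * RatFunc.X) :
    ∀ l : List (C × C), (∀ pr ∈ l, pr.1 ≠ 0) →
    ∃ l' : List (C × C), (∀ pr ∈ l', pr.1 ≠ 0) ∧ l'.Pairwise (QRel q) ∧
      Tsum l - Tsum l' ∈ VV σ := by
  intro l
  induction l with
  | nil =>
    intro _
    exact ⟨[], by simp, by simp, by simpa [Tsum] using (VV σ).zero_mem⟩
  | cons p tl ih =>
    intro hnz
    obtain ⟨l₁, h1, h2, h3⟩ := ih (fun pr hpr => hnz pr (List.mem_cons_of_mem p hpr))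
    obtain ⟨l', g1, g2, g3, g4⟩ :=
      insert_TT q σ hq0 hσX l₁ h1 h2 p.1 p.2 (hnz p (List.mem_cons_self))
    refine ⟨l', g1, g2, ?_⟩
    have hTs2 : Tsum (p :: tl) = TT p.1 p.2 + Tsum tl := by
      simp [Tsum, List.map_cons, List.sum_cons]
    rw [hTs2]
    have := (VV σ).add_mem h3 g4
    convert this using 1
    ring
end Insert

lemma cc_zero (b : C) : cc b (0 : RatFunc C) = 0 := by simp [cc]

lemma delta_Tsum (δ : Derivation C (RatFunc C) (RatFunc C)) (hδX : δ RatFunc.X = RatFunc.X) :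
    ∀ l : List (C × C), δ (Tsum l) = (l.map (fun pr => DT pr.1 pr.2)).sum := by
  intro l
  induction l with
  | nil => simp [Tsum]
  | cons p tl ih =>
    have hTs2 : Tsum (p :: tl) = TT p.1 p.2 + Tsum tl := by
      simp [Tsum, List.map_cons, List.sum_cons]
    rw [hTs2, map_add, delta_TT δ hδX, ih, List.map_cons, List.sum_cons]

lemma cc_DTsum_zero (b : C) :
    ∀ l : List (C × C), (∀ pr ∈ l, b ≠ pr.1) →
      cc b ((l.map (fun pr => DT pr.1 pr.2)).sum) = 0 := by
  intro l
  induction l with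
  | nil => simpa using cc_zero b
  | cons p tl ih =>
    intro hb
    rw [List.map_cons, List.sum_cons, cc_add,
      cc_DT_ne (hb p (List.mem_cons_self)) p.2,
      ih (fun pr hpr => hb pr (List.mem_cons_of_mem p hpr)), add_zero]

section ZeroLemma
variable (q : C) (σ : RatFunc C ≃ₐ[C] RatFunc C) (δ : Derivation C (RatFunc C) (RatFunc C))

lemma Tsum_eq_zero (hq0 : q ≠ 0) (hz : ∀ k : ℤ, q ^ k = 1 → k = 0)
    (hσX : σ RatFunc.X = RatFunc.C q * RatFunc.X) (hδX : δ RatFunc.X = RatFunc.X) :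
    ∀ l : List (C × C), l.Pairwise (QRel q) → (∀ pr ∈ l, pr.1 ≠ 0) →
      δ (Tsum l) ∈ VV σ → Tsum l = 0 := by
  intro l
  induction l with
  | nil => intro _ _ _; simp [Tsum]
  | cons p tl ih =>
    intro hpw hnz hδV
    rcases List.pairwise_cons.mp hpw with ⟨hpt, htl⟩
    have ha : p.1 ≠ 0 := hnz p (List.mem_cons_self)
    -- compute `SS q p.1 (δ (Tsum (p :: tl)))`
    have hcck : ∀ k : ℤ, q ^ (2*k) * cc (p.1 * q ^ (-k)) (δ (Tsum (p :: tl)))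
        = if k = 0 then -(p.2 * p.1) else 0 := by
      intro k
      rw [delta_Tsum δ hδX, List.map_cons, List.sum_cons, cc_add]
      have htail : cc (p.1 * q ^ (-k)) ((tl.map (fun pr => DT pr.1 pr.2)).sum) = 0 := by
        apply cc_DTsum_zero
        intro pr hpr hbad
        exact hpt pr hpr (-k) (by rw [← hbad]; ring)
      by_cases hk : k = 0
      · subst hk
        simp only [if_pos]
        rw [htail, add_zero]
        have : p.1 * q ^ (-(0:ℤ)) = p.1 := by simp
        rw [this, cc_DT_self]
        simp
      · rw [if_neg hk, htail, add_zero]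
        have hne : p.1 * q ^ (-k) ≠ p.1 := by
          intro hbad
          have h1 : q ^ (-k) = 1 :=
            mul_left_cancel₀ ha (by rw [mul_one]; exact hbad)
          have := hz _ h1
          omega
        rw [cc_DT_ne hne, mul_zero]
    have hSS : SS q p.1 (δ (Tsum (p :: tl))) = -(p.2 * p.1) := by
      rw [SS]
      rw [finsum_congr hcck]
      rw [finsum_eq_single _ (0 : ℤ) (fun k hk => by rw [if_neg hk])]
      simp
    have hSS0 : SS q p.1 (δ (Tsum (p :: tl))) = 0 :=
      SS_vanish q σ hz hq0 hσX ha hδV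
    have hρ : p.2 = 0 := by
      have h0 : -(p.2 * p.1) = 0 := by rw [← hSS, hSS0]
      rcases mul_eq_zero.mp (neg_eq_zero.mp h0) with h | h
      · exact h
      · exact absurd h ha
    have hTs2 : Tsum (p :: tl) = Tsum tl := by
      have : TT p.1 p.2 = 0 := by rw [hρ, TT_zero]
      simp [Tsum, List.map_cons, List.sum_cons, this]
    rw [hTs2]
    refine ih htl (fun pr hpr => hnz pr (List.mem_cons_of_mem p hpr)) ?_
    rwa [hTs2] at hδV
end ZeroLemma

lemma TT_neg (a ρ : C) : TT a (-ρ) = -TT a ρ := by simp [TT, map_neg, neg_mul]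

lemma Tsum_append (l₁ l₂ : List (C × C)) : Tsum (l₁ ++ l₂) = Tsum l₁ + Tsum l₂ := by
  simp [Tsum, List.map_append, List.sum_append]

lemma Tsum_neglist (l : List (C × C)) :
    Tsum (l.map (fun pr => (pr.1, -pr.2))) = -Tsum l := by
  induction l with
  | nil => simp [Tsum]
  | cons p tl ih =>
    simp only [Tsum, List.map_cons, List.sum_cons] at ih ⊢
    rw [TT_neg, ih]
    ring

lemma Tsum_scale (c : C) (l : List (C × C)) :
    Tsum (l.map (fun pr => (pr.1, c * pr.2))) = RatFunc.C c * Tsum l := by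
  induction l with
  | nil => simp [Tsum]
  | cons p tl ih =>
    simp only [Tsum, List.map_cons, List.sum_cons] at ih ⊢
    rw [ih, mul_add, TT, TT, map_mul, mul_assoc]

open Classical in
lemma list_filter_TT (L : List C) :
    ((L.filter (fun a => decide (a ≠ 0))).map (fun a => TT a a)).sum
      = (L.map (fun a => TT a a)).sum := by
  induction L with
  | nil => simp
  | cons a tl ih =>
    by_cases h : a = 0
    · subst h
      rw [List.filter_cons_of_neg (by simp), List.map_cons, List.sum_cons, ih, TT_zero, zero_add]
    · rw [List.filter_cons_of_pos (by simpa using h), List.map_cons, List.map_cons,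
        List.sum_cons, List.sum_cons, ih]

open Classical in
lemma multiset_TT_list (s : Multiset C) :
    ∃ l : List (C × C), (∀ pr ∈ l, pr.1 ≠ 0) ∧
      Tsum l = (s.map (fun a => TT a a)).sum := by
  refine ⟨(s.toList.filter (fun a => decide (a ≠ 0))).map (fun a => (a, a)), ?_, ?_⟩
  · intro pr hpr
    obtain ⟨a, ha, rfl⟩ := List.mem_map.mp hpr
    have := List.of_mem_filter ha
    simpa using this
  · rw [Tsum, List.map_map]
    have h1 : ((s.toList.filter (fun a => decide (a ≠ 0))).map
        ((fun pr : C × C => TT pr.1 pr.2) ∘ (fun a => (a, a)))).sum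
        = ((s.toList.filter (fun a => decide (a ≠ 0))).map (fun a => TT a a)).sum := rfl
    rw [h1, list_filter_TT]
    have : s = ↑s.toList := (Multiset.coe_toList s).symm
    conv_rhs => rw [this]
    rw [Multiset.map_coe, Multiset.sum_coe]

lemma delta_log_poly_roots [IsAlgClosed C] (δ : Derivation C (RatFunc C) (RatFunc C))
    (hδX : δ RatFunc.X = RatFunc.X) (p : C[X]) (hp : p ≠ 0) :
    δ (algebraMap C[X] (RatFunc C) p) / algebraMap C[X] (RatFunc C) p
      = (p.natDegree : RatFunc C) + (p.roots.map (fun a => TT a a)).sum := by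
  have hsplit : p.Splits := IsAlgClosed.splits p
  have hfac := hsplit.eq_prod_roots
  have hdeg : p.natDegree = Multiset.card p.roots := by
    rw [hsplit.natDegree_eq_card_roots]
  have hlc : p.leadingCoeff ≠ 0 := Polynomial.leadingCoeff_ne_zero.mpr hp
  conv_lhs => rw [hfac]
  rw [delta_log_poly δ hδX p.roots p.leadingCoeff hlc, hdeg]

lemma delta_log_div (δ : Derivation C (RatFunc C) (RatFunc C)) {N D : RatFunc C}
    (hN : N ≠ 0) (hD : D ≠ 0) : δ (N / D) / (N / D) = δ N / N - δ D / D := by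
  rw [Derivation.leibniz_div]
  simp only [smul_eq_mul]
  field_simp

lemma delta_log_u [IsAlgClosed C] (δ : Derivation C (RatFunc C) (RatFunc C))
    (hδX : δ RatFunc.X = RatFunc.X) (u : RatFunc C) (hu : u ≠ 0) :
    ∃ l : List (C × C), (∀ pr ∈ l, pr.1 ≠ 0) ∧
      δ u / u = ((u.num.natDegree : RatFunc C) - (u.denom.natDegree : RatFunc C)) + Tsum l := by
  obtain ⟨ln, hln1, hln2⟩ := multiset_TT_list (u.num.roots)
  obtain ⟨ld, hld1, hld2⟩ := multiset_TT_list (u.denom.roots)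
  refine ⟨ln ++ (ld.map (fun pr => (pr.1, -pr.2))), ?_, ?_⟩
  · intro pr hpr
    rcases List.mem_append.mp hpr with h | h
    · exact hln1 pr h
    · obtain ⟨p₀, hp₀, rfl⟩ := List.mem_map.mp h
      exact hld1 p₀ hp₀
  · have hn : u.num ≠ 0 := RatFunc.num_ne_zero hu
    have hd : u.denom ≠ 0 := u.denom_ne_zero
    have hN : algebraMap C[X] (RatFunc C) u.num ≠ 0 := RatFunc.algebraMap_ne_zero hn
    have hD : algebraMap C[X] (RatFunc C) u.denom ≠ 0 := RatFunc.algebraMap_ne_zero hd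
    conv_lhs => rw [← RatFunc.num_div_denom u]
    rw [delta_log_div δ hN hD, delta_log_poly_roots δ hδX u.num hn,
      delta_log_poly_roots δ hδX u.denom hd, Tsum_append, Tsum_neglist, hln2, hld2]
    ring

lemma delta_VV (σ : RatFunc C ≃ₐ[C] RatFunc C) (δ : Derivation C (RatFunc C) (RatFunc C))
    (hσδ : ∀ f : RatFunc C, σ (δ f) = δ (σ f)) {x : RatFunc C} (hx : x ∈ VV σ) :
    δ x ∈ VV σ := by
  obtain ⟨w, rfl⟩ := hx
  exact ⟨δ w, by rw [map_sub, hσδ w]⟩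

end

/-- if `m₁δ(δ(u₁)/u₁) + m₂δ(δ(u₂)/u₂) = σ(g) − g` for some `g ∈ C(x)`,
then with `c := m₁·deg(u₁) + m₂·deg(u₂)` there is `f ∈ C(x)` with
`m₁δ(u₁)/u₁ + m₂δ(u₂)/u₂ = σ(f) − f + c`. -/
theorem stmt_4 (C : Type*) [Field C] [CharZero C] [IsAlgClosed C]
    (q : C) (hq0 : q ≠ 0) (hq : ∀ n : ℕ, 0 < n → q ^ n ≠ 1)
    (σ : RatFunc C ≃ₐ[C] RatFunc C) (hσX : σ RatFunc.X = RatFunc.C q * RatFunc.X)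
    (δ : Derivation C (RatFunc C) (RatFunc C)) (hδX : δ RatFunc.X = RatFunc.X)
    (hσδ : ∀ f : RatFunc C, σ (δ f) = δ (σ f))
    (u₁ u₂ : RatFunc C) (hu₁ : u₁ ≠ 0) (hu₂ : u₂ ≠ 0) (m₁ m₂ : ℤ)
    (h : ∃ g : RatFunc C,
      (m₁ : RatFunc C) * δ (δ u₁ / u₁) + (m₂ : RatFunc C) * δ (δ u₂ / u₂) = σ g - g) :
    ∃ f : RatFunc C,
      (m₁ : RatFunc C) * (δ u₁ / u₁) + (m₂ : RatFunc C) * (δ u₂ / u₂)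
        = σ f - f +
          ((m₁ * ((u₁.num.natDegree : ℤ) - (u₁.denom.natDegree : ℤ))
            + m₂ * ((u₂.num.natDegree : ℤ) - (u₂.denom.natDegree : ℤ)) : ℤ) : RatFunc C) := by
  classical
  -- q is not a root of unity, in ℤ-power form
  have hz : ∀ k : ℤ, q ^ k = 1 → k = 0 := by
    intro k hk
    by_contra hk0
    rcases lt_or_gt_of_ne hk0 with hneg | hpos
    · have h1 : q ^ ((-k).toNat) = 1 := by
        rw [← zpow_natCast, Int.toNat_of_nonneg (by omega), zpow_neg, hk, inv_one]
      exact hq (-k).toNat (by omega) h1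
    · have h1 : q ^ (k.toNat) = 1 := by
        rw [← zpow_natCast, Int.toNat_of_nonneg (by omega)]
        exact hk
      exact hq k.toNat (by omega) h1
  obtain ⟨g, hg⟩ := h
  have hgV : (m₁ : RatFunc C) * δ (δ u₁ / u₁) + (m₂ : RatFunc C) * δ (δ u₂ / u₂) ∈ VV σ :=
    ⟨g, hg⟩
  obtain ⟨l₁, hl₁, he₁⟩ := delta_log_u δ hδX u₁ hu₁
  obtain ⟨l₂, hl₂, he₂⟩ := delta_log_u δ hδX u₂ hu₂
  set L : List (C × C) := (l₁.map fun pr => (pr.1, (m₁:C) * pr.2))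
      ++ (l₂.map fun pr => (pr.1, (m₂:C) * pr.2)) with hLdef
  have hL1 : ∀ pr ∈ L, pr.1 ≠ 0 := by
    intro pr hpr
    rcases List.mem_append.mp hpr with h' | h'
    · obtain ⟨p₀, hp₀, rfl⟩ := List.mem_map.mp h'
      exact hl₁ p₀ hp₀
    · obtain ⟨p₀, hp₀, rfl⟩ := List.mem_map.mp h'
      exact hl₂ p₀ hp₀
  have hcast : ∀ m : ℤ, RatFunc.C ((m : C)) = ((m : RatFunc C)) := by
    intro m
    rw [← RatFunc.algebraMap_eq_C, map_intCast]
  have hTsumL : Tsum L = (m₁ : RatFunc C) * Tsum l₁ + (m₂ : RatFunc C) * Tsum l₂ := by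
    rw [hLdef, Tsum_append, Tsum_scale, Tsum_scale, hcast, hcast]
  set cg : RatFunc C := ((m₁ * ((u₁.num.natDegree : ℤ) - (u₁.denom.natDegree : ℤ))
            + m₂ * ((u₂.num.natDegree : ℤ) - (u₂.denom.natDegree : ℤ)) : ℤ) : RatFunc C)
    with hcg
  have hLHS : (m₁ : RatFunc C) * (δ u₁ / u₁) + (m₂ : RatFunc C) * (δ u₂ / u₂)
      = cg + Tsum L := by
    rw [he₁, he₂, hTsumL, hcg]
    push_cast
    ring
  have hδint : ∀ (m : ℤ) (x : RatFunc C),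
      δ ((m : RatFunc C) * x) = (m : RatFunc C) * δ x := by
    intro m x
    have h0 : δ ((m : RatFunc C)) = 0 := by
      rw [show ((m : ℤ) : RatFunc C) = algebraMap C (RatFunc C) ((m : C)) from
        (map_intCast (algebraMap C (RatFunc C)) m).symm]
      exact Derivation.map_algebraMap δ _
    rw [Derivation.leibniz, h0, smul_eq_mul, smul_eq_mul, mul_zero, add_zero]
  have hδcg : δ cg = 0 := by
    rw [hcg, show ((m₁ * ((u₁.num.natDegree : ℤ) - (u₁.denom.natDegree : ℤ))
            + m₂ * ((u₂.num.natDegree : ℤ) - (u₂.denom.natDegree : ℤ)) : ℤ) : RatFunc C)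
        = algebraMap C (RatFunc C) (((m₁ * ((u₁.num.natDegree : ℤ) - (u₁.denom.natDegree : ℤ))
            + m₂ * ((u₂.num.natDegree : ℤ) - (u₂.denom.natDegree : ℤ)) : ℤ) : C)) from
        (map_intCast (algebraMap C (RatFunc C)) _).symm]
    exact Derivation.map_algebraMap δ _
  have hδTsumL : δ (Tsum L) ∈ VV σ := by
    have h1 : Tsum L = ((m₁ : RatFunc C) * (δ u₁ / u₁) + (m₂ : RatFunc C) * (δ u₂ / u₂)) - cg := by
      rw [hLHS]; ring
    rw [h1, map_sub, map_add, hδint, hδint, hδcg, sub_zero]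
    exact hgV
  obtain ⟨l', hg1, hg2, hg3⟩ := normalize_TT q σ hq0 hσX L hL1
  have hδl' : δ (Tsum l') ∈ VV σ := by
    have h1 : δ (Tsum l') = δ (Tsum L) - δ (Tsum L - Tsum l') := by
      rw [map_sub]; ring
    rw [h1]
    exact (VV σ).sub_mem hδTsumL (delta_VV σ δ hσδ hg3)
  have hzero : Tsum l' = 0 := Tsum_eq_zero q σ δ hq0 hz hσX hδX l' hg2 hg1 hδl'
  have hmem : Tsum L ∈ VV σ := by
    have := hg3
    rwa [hzero, sub_zero] at this
  obtain ⟨f, hf⟩ := hmem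
  exact ⟨f, by rw [hLHS, hf]; ring⟩
end

section
/- Let k be a field with an automorphism σ and let a, b ∈ k. Suppose u₁, u₂ ∈ k are distinct elements each satisfying the Riccati equation u·σ(u) + a·u + b = 0. Let A := [[0, 1], [−b, −a]] and T := (u₁ − u₂)^{−1} · [[u₂, −1], [u₁, −1]] (a 2×2 matrix over k). Then σ(T)·A = diag(u₁, u₂)·T, where σ(T) denotes σ applied entrywise to T; in particular, since T is invertible, σ(T)·A·T^{−1} = diag(u₁, u₂). -/
/-- Remark `imprimitive-gauge`: if `u₁ ≠ u₂` both solve the Riccati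
equation `u·σ(u) + a·u + b = 0`, then with `A = [[0,1],[−b,−a]]` and
`T = (u₁−u₂)⁻¹·[[u₂,−1],[u₁,−1]]` one has `σ(T)·A = diag(u₁,u₂)·T`; in particular `T`
is invertible and `σ(T)·A·T⁻¹ = diag(u₁,u₂)`. -/
theorem stmt_6 (k : Type*) [Field k] (σ : k ≃+* k) (a b u₁ u₂ : k)
    (h₁ : u₁ * σ u₁ + a * u₁ + b = 0) (h₂ : u₂ * σ u₂ + a * u₂ + b = 0)
    (hne : u₁ ≠ u₂) :
    (((u₁ - u₂)⁻¹ • !![u₂, -1; u₁, -1] : Matrix (Fin 2) (Fin 2) k).map ⇑σ)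
        * !![0, 1; -b, -a]
      = Matrix.diagonal ![u₁, u₂] * ((u₁ - u₂)⁻¹ • !![u₂, -1; u₁, -1]) ∧
    IsUnit ((u₁ - u₂)⁻¹ • !![u₂, -1; u₁, -1] : Matrix (Fin 2) (Fin 2) k).det ∧
    (((u₁ - u₂)⁻¹ • !![u₂, -1; u₁, -1] : Matrix (Fin 2) (Fin 2) k).map ⇑σ)
        * !![0, 1; -b, -a] * ((u₁ - u₂)⁻¹ • !![u₂, -1; u₁, -1] : Matrix (Fin 2) (Fin 2) k)⁻¹
      = Matrix.diagonal ![u₁, u₂] := by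
  have hd : u₁ - u₂ ≠ 0 := sub_ne_zero.mpr hne
  have hsd : σ u₁ - σ u₂ ≠ 0 := by
    intro h
    exact hd (by simpa using σ.injective (sub_eq_zero.mp h) ▸ (sub_eq_zero.mpr rfl))
  have hσinv : σ ((u₁ - u₂)⁻¹) = (σ u₁ - σ u₂)⁻¹ := by
    rw [map_inv₀, map_sub]
  have key1 : (((u₁ - u₂)⁻¹ • !![u₂, -1; u₁, -1] : Matrix (Fin 2) (Fin 2) k).map ⇑σ)
        * !![0, 1; -b, -a]
      = Matrix.diagonal ![u₁, u₂] * ((u₁ - u₂)⁻¹ • !![u₂, -1; u₁, -1]) := by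
    ext i j
    fin_cases i <;> fin_cases j <;>
      simp [Matrix.mul_apply, Fin.sum_univ_two, Matrix.diagonal, hσinv,
        div_eq_div_iff hsd hd, map_neg, map_one] <;>
      field_simp <;>
      first
        | linear_combination u₁ * h₂ - u₂ * h₁
        | linear_combination h₁ - h₂
  refine ⟨key1, ?_, ?_⟩
  · have hdet : ((u₁ - u₂)⁻¹ • !![u₂, -1; u₁, -1] : Matrix (Fin 2) (Fin 2) k).det
        = (u₁ - u₂)⁻¹ := by
      simp [Matrix.det_fin_two, Matrix.smul_apply]
      field_simp
      ring
    rw [hdet]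
    exact (IsUnit.mk0 _ (inv_ne_zero hd))
  · have hdet : ((u₁ - u₂)⁻¹ • !![u₂, -1; u₁, -1] : Matrix (Fin 2) (Fin 2) k).det
        = (u₁ - u₂)⁻¹ := by
      simp [Matrix.det_fin_two, Matrix.smul_apply]
      field_simp
      ring
    rw [key1, Matrix.mul_assoc, Matrix.mul_nonsing_inv _ (by rw [hdet]; exact (IsUnit.mk0 _ (inv_ne_zero hd))), Matrix.mul_one]
end

section
/- Let k be a field with an automorphism σ, let a, b ∈ k with b ≠ 0, and suppose u ∈ k satisfies the Riccati equation u·σ(u) + a·u + b = 0 (so u ≠ 0). Set v := b/u (equivalently, v = −σ(u) − a), A := [[0, 1], [−b, −a]], T := [[1−u, 1], [−u, 1]], and B := [[u, 1−u+v], [0, v]]. Then σ(T)·A = B·T, where σ(T) denotes σ applied entrywise; in particular, since T is invertible, σ(T)·A·T^{−1} = B. -/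
/-- if `u` solves the Riccati equation `u·σ(u) + a·u + b = 0` with
`b ≠ 0` (so `u ≠ 0`), then with `v = b/u`, `A = [[0,1],[−b,−a]]`,
`T = [[1−u,1],[−u,1]]` and `B = [[u,1−u+v],[0,v]]` one has `σ(T)·A = B·T`; in
particular `T` is invertible and `σ(T)·A·T⁻¹ = B`. -/
theorem stmt_7 (k : Type*) [Field k] (σ : k ≃+* k) (a b u : k) (hb : b ≠ 0)
    (hric : u * σ u + a * u + b = 0) :
    u ≠ 0 ∧
    ((!![1 - u, 1; -u, 1] : Matrix (Fin 2) (Fin 2) k).map ⇑σ) * !![0, 1; -b, -a]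
      = !![u, 1 - u + b / u; 0, b / u] * !![1 - u, 1; -u, 1] ∧
    IsUnit (!![1 - u, 1; -u, 1] : Matrix (Fin 2) (Fin 2) k).det ∧
    ((!![1 - u, 1; -u, 1] : Matrix (Fin 2) (Fin 2) k).map ⇑σ) * !![0, 1; -b, -a]
        * (!![1 - u, 1; -u, 1] : Matrix (Fin 2) (Fin 2) k)⁻¹
      = !![u, 1 - u + b / u; 0, b / u] := by
  have hu : u ≠ 0 := by
    rintro rfl
    simp at hric
    exact hb hric
  have hσu : σ u = -a - b / u := by
    field_simp
    linear_combination hric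
  have hdet : (!![1 - u, 1; -u, 1] : Matrix (Fin 2) (Fin 2) k).det = 1 := by
    simp [Matrix.det_fin_two_of]
  have hunit : IsUnit (!![1 - u, 1; -u, 1] : Matrix (Fin 2) (Fin 2) k).det := by
    rw [hdet]; exact isUnit_one
  have hmain : ((!![1 - u, 1; -u, 1] : Matrix (Fin 2) (Fin 2) k).map ⇑σ) * !![0, 1; -b, -a]
      = !![u, 1 - u + b / u; 0, b / u] * !![1 - u, 1; -u, 1] := by
    ext i j
    fin_cases i <;> fin_cases j <;>
      simp [Matrix.mul_apply, Fin.sum_univ_two, hσu, map_sub, map_one, map_neg] <;>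
      field_simp <;> ring
  refine ⟨hu, hmain, hunit, ?_⟩
  rw [hmain, Matrix.mul_nonsing_inv_cancel_right _ _ hunit]
end

section
/- Let C be an algebraically closed field of characteristic zero, n ≥ 1 and ℓ ≥ 0 integers, and ζ ∈ C a primitive 2^{ℓ+1}-th root of unity. Let D_{∞,ℓ} ≤ GL₂(C) be the subgroup generated by all matrices diag(α, α^{−1}) (α ∈ C^×) together with antidiag(ζ, ζ), and let μ_n ≤ GL₂(C) be the group of scalar matrices whose scalar is an n-th root of unity. Define m := lcm(n, 2^ℓ)/2 if ℓ ≥ 1; m := n/2 if ℓ = 0 and n is even; and m := n if ℓ = 0 and n is odd. Then the set of diagonal matrices contained in the subgroup μ_n·D_{∞,ℓ} is exactly { diag(α₁, α₂) : α₁, α₂ ∈ C^×, (α₁α₂)^m = 1 }. -/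
open Matrix

private lemma aux_sqrt {C : Type*} [Field C] [CharZero C] [IsAlgClosed C]
    {n : ℕ} (hn : 1 ≤ n) {y : C} (hy : y ^ (if 2 ∣ n then n / 2 else n) = 1) :
    ∃ μ : C, μ ^ n = 1 ∧ μ ^ 2 = y := by
  obtain ⟨μ, hμ⟩ := IsAlgClosed.exists_pow_nat_eq y (n := 2) (by norm_num)
  by_cases h2 : 2 ∣ n
  · refine ⟨μ, ?_, hμ⟩
    rw [if_pos h2] at hy
    obtain ⟨c, hc⟩ := h2
    rw [hc, pow_mul, hμ]
    rw [hc, Nat.mul_div_cancel_left _ (by norm_num)] at hy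
    exact hy
  · rw [if_neg h2] at hy
    have ht : (μ ^ n) ^ 2 = 1 := by
      rw [← pow_mul, mul_comm, pow_mul, hμ, hy]
    have hz : (μ ^ n - 1) * (μ ^ n + 1) = 0 := by ring_nf; linear_combination ht
    have hodd : Odd n := Nat.odd_iff.2 (by omega)
    rcases mul_eq_zero.1 hz with h | h
    · exact ⟨μ, by linear_combination h, hμ⟩
    · refine ⟨-μ, ?_, by linear_combination hμ⟩
      rw [hodd.neg_pow]
      linear_combination -h

private lemma aux_bezout {C : Type*} [Field C] {a b : ℕ} (ha : 0 < a) (hb : 0 < b)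
    {x : C} (hx : x ^ Nat.lcm a b = 1) :
    ∃ y z : C, y ^ a = 1 ∧ z ^ b = 1 ∧ x = y * z := by
  have hL : 0 < Nat.lcm a b := Nat.pos_of_ne_zero (Nat.lcm_ne_zero ha.ne' hb.ne')
  have hx0 : x ≠ 0 := by
    intro h; rw [h, zero_pow hL.ne'] at hx; exact zero_ne_one hx
  set g := Nat.gcd a b with hg
  have hgpos : 0 < g := Nat.gcd_pos_of_pos_left _ ha
  have hcop : Nat.Coprime (a / g) (b / g) := Nat.coprime_div_gcd_div_gcd hgpos
  have hIC : IsCoprime ((a / g : ℕ) : ℤ) ((b / g : ℕ) : ℤ) := by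
    rw [Int.isCoprime_iff_gcd_eq_one]
    exact_mod_cast hcop
  obtain ⟨u, v, huv⟩ := hIC
  have h1 : (b / g) * a = Nat.lcm a b := by
    apply Nat.eq_of_mul_eq_mul_left hgpos
    rw [← mul_assoc, Nat.mul_div_cancel' (Nat.gcd_dvd_right a b), mul_comm b a,
      Nat.gcd_mul_lcm]
  have h2 : (a / g) * b = Nat.lcm a b := by
    apply Nat.eq_of_mul_eq_mul_left hgpos
    rw [← mul_assoc, Nat.mul_div_cancel' (Nat.gcd_dvd_left a b), Nat.gcd_mul_lcm]
  have hxL : x ^ ((Nat.lcm a b : ℕ) : ℤ) = 1 := by rw [zpow_natCast, hx]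
  refine ⟨x ^ (v * (b / g : ℕ) : ℤ), x ^ (u * (a / g : ℕ) : ℤ), ?_, ?_, ?_⟩
  · rw [← zpow_natCast _ a, ← _root_.zpow_mul, mul_assoc, ← Nat.cast_mul, h1, mul_comm v, _root_.zpow_mul, hxL, _root_.one_zpow]
  · rw [← zpow_natCast _ b, ← _root_.zpow_mul, mul_assoc, ← Nat.cast_mul, h2, mul_comm u, _root_.zpow_mul, hxL, _root_.one_zpow]
  · rw [← zpow_add₀ hx0]
    rw [show v * ((b / g : ℕ) : ℤ) + u * ((a / g : ℕ) : ℤ) = 1 by linarith [huv]]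
    exact (zpow_one x).symm

private lemma aux_m (n ℓ : ℕ) (hn : 1 ≤ n) :
    (if 1 ≤ ℓ then Nat.lcm n (2 ^ ℓ) / 2 else if 2 ∣ n then n / 2 else n)
      = Nat.lcm (if 2 ∣ n then n / 2 else n) (2 ^ (ℓ - 1)) ∧
    n ∣ 2 * (if 1 ≤ ℓ then Nat.lcm n (2 ^ ℓ) / 2 else if 2 ∣ n then n / 2 else n) ∧
    (1 ≤ ℓ → 2 ^ (ℓ + 1) ∣
      4 * (if 1 ≤ ℓ then Nat.lcm n (2 ^ ℓ) / 2 else if 2 ∣ n then n / 2 else n)) := by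
  by_cases hℓ : 1 ≤ ℓ
  · obtain ⟨ℓ', rfl⟩ : ∃ ℓ', ℓ = ℓ' + 1 := ⟨ℓ - 1, by omega⟩
    rw [if_pos hℓ]
    have hsub : ℓ' + 1 - 1 = ℓ' := by omega
    have key : Nat.lcm n (2 ^ (ℓ' + 1)) = 2 * Nat.lcm (if 2 ∣ n then n / 2 else n) (2 ^ ℓ') := by
      by_cases h2 : 2 ∣ n
      · obtain ⟨c, rfl⟩ := h2
        rw [if_pos ⟨c, rfl⟩, Nat.mul_div_cancel_left _ (by norm_num), pow_succ, mul_comm (2 ^ ℓ') 2,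
          Nat.lcm_mul_left]
      · rw [if_neg h2]
        have hcop : Nat.Coprime n 2 :=
          Nat.coprime_comm.mp (Nat.prime_two.coprime_iff_not_dvd.mpr h2)
        rw [(hcop.pow_right (ℓ' + 1)).lcm_eq_mul, (hcop.pow_right ℓ').lcm_eq_mul,
          pow_succ]
        ring
    refine ⟨by rw [key, hsub, Nat.mul_div_cancel_left _ (by norm_num)], ?_, fun _ => ?_⟩
    · rw [Nat.mul_div_cancel' ⟨Nat.lcm (if 2 ∣ n then n / 2 else n) (2 ^ ℓ'), key⟩]
      exact Nat.dvd_lcm_left _ _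
    · rw [show (4 : ℕ) = 2 * 2 by norm_num, mul_assoc,
        Nat.mul_div_cancel' ⟨Nat.lcm (if 2 ∣ n then n / 2 else n) (2 ^ ℓ'), key⟩,
        pow_succ, pow_succ, mul_comm]
      exact Nat.mul_dvd_mul_left 2 (Nat.dvd_lcm_right _ _)
  · rw [if_neg hℓ]
    obtain rfl : ℓ = 0 := by omega
    refine ⟨by simp [Nat.lcm_one_right], ?_, by omega⟩
    by_cases h2 : 2 ∣ n
    · rw [if_pos h2, Nat.mul_div_cancel' h2]
    · rw [if_neg h2]; exact Dvd.intro_left 2 rfl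

private lemma aux_closure {C : Type*} [Field C] {ζ : C} (hζ0 : ζ ≠ 0) {v : GL (Fin 2) C}
    (hv : v ∈ Subgroup.closure
      ({h : GL (Fin 2) C | ∃ α : C, α ≠ 0 ∧
          (h : Matrix (Fin 2) (Fin 2) C) = !![α, 0; 0, α⁻¹]} ∪
        {h : GL (Fin 2) C | (h : Matrix (Fin 2) (Fin 2) C) = !![0, ζ; ζ, 0]})) :
    (∃ a b : C, (∃ k : ℤ, a * b = ζ ^ (4 * k)) ∧
        (v : Matrix (Fin 2) (Fin 2) C) = !![a, 0; 0, b]) ∨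
    (∃ a b : C, (∃ k : ℤ, a * b = ζ ^ (4 * k + 2)) ∧
        (v : Matrix (Fin 2) (Fin 2) C) = !![0, a; b, 0]) := by
  induction hv using Subgroup.closure_induction with
  | mem x hx =>
    rcases hx with ⟨α, hα, hx⟩ | hx
    · exact Or.inl ⟨α, α⁻¹, ⟨0, by simp [mul_inv_cancel₀ hα]⟩, hx⟩
    · exact Or.inr ⟨ζ, ζ, ⟨0, by rw [show 4*(0:ℤ)+2 = ((2:ℕ):ℤ) by norm_num, zpow_natCast, sq]⟩, hx⟩
  | one => exact Or.inl ⟨1, 1, ⟨0, by simp⟩, by simp [Matrix.one_fin_two]⟩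
  | mul x y hx hy px py =>
    have hxy : ((x * y : GL (Fin 2) C) : Matrix (Fin 2) (Fin 2) C)
        = (x : Matrix (Fin 2) (Fin 2) C) * (y : Matrix (Fin 2) (Fin 2) C) := rfl
    rcases px with ⟨a, b, ⟨k, hk⟩, hxm⟩ | ⟨a, b, ⟨k, hk⟩, hxm⟩ <;>
      rcases py with ⟨c, d, ⟨j, hj⟩, hym⟩ | ⟨c, d, ⟨j, hj⟩, hym⟩
    · refine Or.inl ⟨a * c, b * d, ⟨k + j, ?_⟩, ?_⟩
      · rw [show a * c * (b * d) = (a * b) * (c * d) by ring, hk, hj, ← zpow_add₀ hζ0]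
        ring_nf
      · rw [hxy, hxm, hym, Matrix.mul_fin_two]; norm_num
    · refine Or.inr ⟨a * c, b * d, ⟨k + j, ?_⟩, ?_⟩
      · rw [show a * c * (b * d) = (a * b) * (c * d) by ring, hk, hj, ← zpow_add₀ hζ0]
        ring_nf
      · rw [hxy, hxm, hym, Matrix.mul_fin_two]; norm_num
    · refine Or.inr ⟨a * d, b * c, ⟨k + j, ?_⟩, ?_⟩
      · rw [show a * d * (b * c) = (a * b) * (c * d) by ring, hk, hj, ← zpow_add₀ hζ0]
        ring_nf
      · rw [hxy, hxm, hym, Matrix.mul_fin_two]; norm_num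
    · refine Or.inl ⟨a * d, b * c, ⟨k + j + 1, ?_⟩, ?_⟩
      · rw [show a * d * (b * c) = (a * b) * (c * d) by ring, hk, hj, ← zpow_add₀ hζ0]
        ring_nf
      · rw [hxy, hxm, hym, Matrix.mul_fin_two]; norm_num
  | inv x hx px =>
    have hxinv : (x : Matrix (Fin 2) (Fin 2) C) * ((x⁻¹ : GL (Fin 2) C) : Matrix (Fin 2) (Fin 2) C) = 1 :=
      x.mul_inv
    rcases px with ⟨a, b, ⟨k, hk⟩, hxm⟩ | ⟨a, b, ⟨k, hk⟩, hxm⟩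
    · have hab : a * b ≠ 0 := by rw [hk]; exact zpow_ne_zero _ hζ0
      have ha : a ≠ 0 := fun h => hab (by simp [h])
      have hb : b ≠ 0 := fun h => hab (by simp [h])
      have hleft : !![a⁻¹, 0; 0, b⁻¹] * (x : Matrix (Fin 2) (Fin 2) C) = 1 := by
        rw [hxm, Matrix.mul_fin_two, Matrix.one_fin_two]
        norm_num [inv_mul_cancel₀ ha, inv_mul_cancel₀ hb]
      refine Or.inl ⟨a⁻¹, b⁻¹, ⟨-k, ?_⟩, (left_inv_eq_right_inv hleft hxinv).symm⟩
      rw [← mul_inv, hk, ← _root_.zpow_neg]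
      congr 1; ring
    · have hab : a * b ≠ 0 := by rw [hk]; exact zpow_ne_zero _ hζ0
      have ha : a ≠ 0 := fun h => hab (by simp [h])
      have hb : b ≠ 0 := fun h => hab (by simp [h])
      have hleft : !![0, b⁻¹; a⁻¹, 0] * (x : Matrix (Fin 2) (Fin 2) C) = 1 := by
        rw [hxm, Matrix.mul_fin_two, Matrix.one_fin_two]
        norm_num [inv_mul_cancel₀ ha, inv_mul_cancel₀ hb]
      refine Or.inr ⟨b⁻¹, a⁻¹, ⟨-k - 1, ?_⟩, (left_inv_eq_right_inv hleft hxinv).symm⟩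
      rw [show b⁻¹ * a⁻¹ = (a * b)⁻¹ by rw [mul_inv]; ring, hk, ← _root_.zpow_neg]
      congr 1; ring


private lemma aux_scalar {C : Type*} [Field C] (c : C) :
    c • (1 : Matrix (Fin 2) (Fin 2) C) = !![c, 0; 0, c] := by
  rw [Matrix.one_fin_two]
  ext i j
  fin_cases i <;> fin_cases j <;> simp

private lemma aux_smul2 {C : Type*} [Field C] (c x y z w : C) :
    c • (!![x, y; z, w] : Matrix (Fin 2) (Fin 2) C) = !![c*x, c*y; c*z, c*w] := by
  ext i j
  fin_cases i <;> fin_cases j <;> simp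

private lemma aux_entries {C : Type*} [Field C] {x y z w x' y' z' w' : C}
    (h : (!![x, y; z, w] : Matrix (Fin 2) (Fin 2) C) = !![x', y'; z', w']) :
    x = x' ∧ y = y' ∧ z = z' ∧ w = w' := by
  refine ⟨?_, ?_, ?_, ?_⟩
  · simpa using congrFun (congrFun h 0) 0
  · simpa using congrFun (congrFun h 0) 1
  · simpa using congrFun (congrFun h 1) 0
  · simpa using congrFun (congrFun h 1) 1

/-- with `D_{∞,ℓ} ≤ GL₂(C)` generated by the matrices `diag(α,α⁻¹)`
(`α ∈ C^×`) and `antidiag(ζ,ζ)` for a primitive `2^{ℓ+1}`-th root of unity `ζ`, and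
`μ_n` the scalar matrices whose scalar is an `n`-th root of unity, the diagonal
matrices contained in the product subgroup `μ_n·D_{∞,ℓ}` are exactly the
`diag(α₁,α₂)` with `(α₁α₂)^m = 1`, where `m = lcm(n,2^ℓ)/2` if `ℓ ≥ 1`, `m = n/2` if
`ℓ = 0` and `n` even, and `m = n` if `ℓ = 0` and `n` odd. -/
theorem stmt_10 (C : Type*) [Field C] [CharZero C] [IsAlgClosed C]
    (n : ℕ) (hn : 1 ≤ n) (ℓ : ℕ) (ζ : C) (hζ : IsPrimitiveRoot ζ (2 ^ (ℓ + 1))) :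
    {g : GL (Fin 2) C |
        (∃ u ∈ {h : GL (Fin 2) C | ∃ α : C, α ^ n = 1 ∧
            (h : Matrix (Fin 2) (Fin 2) C) = α • (1 : Matrix (Fin 2) (Fin 2) C)},
          ∃ v ∈ Subgroup.closure
            ({h : GL (Fin 2) C | ∃ α : C, α ≠ 0 ∧
                (h : Matrix (Fin 2) (Fin 2) C) = !![α, 0; 0, α⁻¹]} ∪
              {h : GL (Fin 2) C | (h : Matrix (Fin 2) (Fin 2) C) = !![0, ζ; ζ, 0]}),
          g = u * v) ∧
        ∃ α₁ α₂ : C, (g : Matrix (Fin 2) (Fin 2) C) = !![α₁, 0; 0, α₂]}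
      = {g : GL (Fin 2) C | ∃ α₁ α₂ : C, α₁ ≠ 0 ∧ α₂ ≠ 0 ∧
          (α₁ * α₂) ^ (if 1 ≤ ℓ then Nat.lcm n (2 ^ ℓ) / 2 else if 2 ∣ n then n / 2 else n) = 1 ∧
          (g : Matrix (Fin 2) (Fin 2) C) = !![α₁, 0; 0, α₂]} := by
  have hζ0 : ζ ≠ 0 := hζ.ne_zero (by positivity)
  obtain ⟨hm1, hm2, hm3⟩ := aux_m n ℓ hn
  set m : ℕ := if 1 ≤ ℓ then Nat.lcm n (2 ^ ℓ) / 2 else if 2 ∣ n then n / 2 else n with hmdef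
  ext g
  simp only [Set.mem_setOf_eq]
  constructor
  · rintro ⟨⟨u, ⟨μ, hμn, hμ⟩, v, hv, rfl⟩, α₁, α₂, hg⟩
    have hμ0 : μ ≠ 0 := by
      intro h
      rw [h, zero_pow (by omega)] at hμn
      exact zero_ne_one hμn
    have hcoe : ((u * v : GL (Fin 2) C) : Matrix (Fin 2) (Fin 2) C)
        = μ • (v : Matrix (Fin 2) (Fin 2) C) := by
      rw [Units.val_mul, hμ, Matrix.smul_mul, one_mul]
    rcases aux_closure hζ0 hv with ⟨a, b, ⟨k, hk⟩, hvm⟩ | ⟨a, b, ⟨k, hk⟩, hvm⟩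
    · -- diagonal case
      have hab : a * b ≠ 0 := by rw [hk]; exact zpow_ne_zero _ hζ0
      have ha : a ≠ 0 := fun h => hab (by simp [h])
      have hb : b ≠ 0 := fun h => hab (by simp [h])
      have heq : !![μ * a, μ * 0; μ * 0, μ * b] = !![α₁, 0; 0, α₂] := by
        rw [← aux_smul2, ← hvm, ← hcoe, hg]
      obtain ⟨e1, -, -, e4⟩ := aux_entries heq
      refine ⟨α₁, α₂, by rw [← e1]; exact mul_ne_zero hμ0 ha,
        by rw [← e4]; exact mul_ne_zero hμ0 hb, ?_, hg⟩
      rw [← e1, ← e4, show μ * a * (μ * b) = μ ^ 2 * (a * b) by ring, hk, mul_pow]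
      have p1 : (μ ^ 2) ^ m = 1 := by
        obtain ⟨c, hc⟩ := hm2
        rw [← pow_mul, hc, pow_mul, hμn, one_pow]
      have p2 : (ζ ^ (4 * k)) ^ m = 1 := by
        rw [← zpow_natCast (ζ ^ (4 * k)) m, ← _root_.zpow_mul, hζ.zpow_eq_one_iff_dvd]
        by_cases hℓ : 1 ≤ ℓ
        · have hc : (((2 : ℕ) ^ (ℓ + 1) : ℕ) : ℤ) ∣ ((4 * m : ℕ) : ℤ) :=
            Int.natCast_dvd_natCast.mpr (hm3 hℓ)
          have hd := hc.mul_left k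
          have he : (4 : ℤ) * k * (m : ℤ) = k * ((4 * m : ℕ) : ℤ) := by push_cast; ring
          rw [he]
          exact_mod_cast hd
        · obtain rfl : ℓ = 0 := by omega
          exact ⟨2 * k * m, by push_cast; ring⟩
      rw [p1, p2, one_mul]
    · -- antidiagonal case: impossible
      exfalso
      have heq : !![μ * 0, μ * a; μ * b, μ * 0] = !![α₁, 0; 0, α₂] := by
        rw [← aux_smul2, ← hvm, ← hcoe, hg]
      obtain ⟨-, e2, -, -⟩ := aux_entries heq
      have ha : a = 0 := by
        have := mul_eq_zero.mp e2
        tauto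
      rw [ha, zero_mul] at hk
      exact zpow_ne_zero (4 * k + 2) hζ0 hk.symm
  · rintro ⟨α₁, α₂, h1, h2, hpow, hg⟩
    rw [hm1] at hpow
    have hn'pos : 0 < (if 2 ∣ n then n / 2 else n) := by
      by_cases h : 2 ∣ n
      · rw [if_pos h]; exact Nat.div_pos (Nat.le_of_dvd (by omega) h) (by norm_num)
      · rw [if_neg h]; omega
    obtain ⟨y, z, hy, hz, hyz⟩ := aux_bezout hn'pos (by positivity) hpow
    obtain ⟨μ, hμn, hμ2⟩ := aux_sqrt hn hy
    have hμ0 : μ ≠ 0 := by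
      intro h
      rw [h, zero_pow (by omega)] at hμn
      exact zero_ne_one hμn
    obtain ⟨k, hk⟩ : ∃ k : ℕ, ζ ^ (4 * k) = z := by
      by_cases hℓ : 1 ≤ ℓ
      · haveI : NeZero (2 ^ (ℓ - 1)) := ⟨by positivity⟩
        have h4 : IsPrimitiveRoot (ζ ^ 4) (2 ^ (ℓ - 1)) :=
          hζ.pow (by positivity)
            (by rw [show (4 : ℕ) = 2 ^ 2 by norm_num, ← pow_add]; congr 1; omega)
        obtain ⟨i, -, hi⟩ := h4.eq_pow_of_pow_eq_one hz
        exact ⟨i, by rw [pow_mul]; exact hi⟩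
      · obtain rfl : ℓ = 0 := by omega
        refine ⟨0, ?_⟩
        simpa using hz.symm
    set w : C := ζ ^ (2 * k) with hwdef
    have hw0 : w ≠ 0 := pow_ne_zero _ hζ0
    have hw2 : w ^ 2 = ζ ^ (4 * k) := by
      rw [hwdef, ← pow_mul]
      congr 1
      ring
    have heq : α₁ * α₂ = μ ^ 2 * w ^ 2 := by rw [hw2, hk, hyz, hμ2]
    set a : C := α₁ / (μ * w) with hadef
    have ha0 : a ≠ 0 := div_ne_zero h1 (mul_ne_zero hμ0 hw0)
    -- units
    have hU1 : (μ • 1 : Matrix (Fin 2) (Fin 2) C) * (μ⁻¹ • 1) = 1 := by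
      rw [Matrix.smul_mul, Matrix.mul_smul, smul_smul, mul_inv_cancel₀ hμ0, one_smul, one_mul]
    have hU2 : (μ⁻¹ • 1 : Matrix (Fin 2) (Fin 2) C) * (μ • 1) = 1 := by
      rw [Matrix.smul_mul, Matrix.mul_smul, smul_smul, inv_mul_cancel₀ hμ0, one_smul, one_mul]
    have hD1 : (!![a, 0; 0, a⁻¹] : Matrix (Fin 2) (Fin 2) C) * !![a⁻¹, 0; 0, a] = 1 := by
      rw [Matrix.mul_fin_two, Matrix.one_fin_two, mul_inv_cancel₀ ha0, inv_mul_cancel₀ ha0]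
      norm_num
    have hD2 : (!![a⁻¹, 0; 0, a] : Matrix (Fin 2) (Fin 2) C) * !![a, 0; 0, a⁻¹] = 1 := by
      rw [Matrix.mul_fin_two, Matrix.one_fin_two, mul_inv_cancel₀ ha0, inv_mul_cancel₀ ha0]
      norm_num
    have hJ1 : (!![0, ζ; ζ, 0] : Matrix (Fin 2) (Fin 2) C) * !![0, ζ⁻¹; ζ⁻¹, 0] = 1 := by
      rw [Matrix.mul_fin_two, Matrix.one_fin_two, mul_inv_cancel₀ hζ0]
      norm_num
    have hJ2 : (!![0, ζ⁻¹; ζ⁻¹, 0] : Matrix (Fin 2) (Fin 2) C) * !![0, ζ; ζ, 0] = 1 := by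
      rw [Matrix.mul_fin_two, Matrix.one_fin_two, inv_mul_cancel₀ hζ0]
      norm_num
    set U : GL (Fin 2) C := ⟨μ • 1, μ⁻¹ • 1, hU1, hU2⟩ with hUdef
    set D : GL (Fin 2) C := ⟨!![a, 0; 0, a⁻¹], !![a⁻¹, 0; 0, a], hD1, hD2⟩ with hDdef
    set J : GL (Fin 2) C := ⟨!![0, ζ; ζ, 0], !![0, ζ⁻¹; ζ⁻¹, 0], hJ1, hJ2⟩ with hJdef
    have hJpow : ((!![0, ζ; ζ, 0] : Matrix (Fin 2) (Fin 2) C)) ^ (2 * k) = w • 1 := by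
      rw [pow_mul]
      have hsq : (!![0, ζ; ζ, 0] : Matrix (Fin 2) (Fin 2) C) ^ 2 = (ζ ^ 2) • 1 := by
        rw [sq, Matrix.mul_fin_two, aux_scalar]
        norm_num [sq]
      rw [hsq, smul_pow, one_pow, ← pow_mul, hwdef]
    refine ⟨⟨U, ⟨μ, hμn, rfl⟩, D * J ^ (2 * k), ?_, ?_⟩, α₁, α₂, hg⟩
    · exact Subgroup.mul_mem _ (Subgroup.subset_closure (Or.inl ⟨a, ha0, rfl⟩))
        (Subgroup.pow_mem _ (Subgroup.subset_closure
          (show J ∈ ({h : GL (Fin 2) C | ∃ α : C, α ≠ 0 ∧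
              (h : Matrix (Fin 2) (Fin 2) C) = !![α, 0; 0, α⁻¹]} ∪
            {h : GL (Fin 2) C | (h : Matrix (Fin 2) (Fin 2) C) = !![0, ζ; ζ, 0]})
            from Or.inr rfl))
          (2 * k))
    · apply Units.ext
      rw [Units.val_mul, Units.val_mul, Units.val_pow_eq_pow_val, hg]
      show !![α₁, 0; 0, α₂]
          = (μ • 1) * (!![a, 0; 0, a⁻¹] * (!![0, ζ; ζ, 0] : Matrix (Fin 2) (Fin 2) C) ^ (2 * k))
      rw [hJpow, Matrix.smul_mul, one_mul, Matrix.mul_smul, smul_smul, Matrix.mul_one,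
        aux_smul2]
      have e1 : μ * w * a = α₁ := by
        rw [hadef]
        field_simp
      have e2 : μ * w * a⁻¹ = α₂ := by
        rw [hadef]
        field_simp
        linear_combination -heq
      rw [e1, e2]
      norm_num
end

section
/- Let C be an algebraically closed field of characteristic zero, q ∈ C nonzero and not a root of unity, and r ∈ C(x) nonzero. If there exists a nonzero f ∈ C(x) with (σ(r)/r)² = σ²(f)/f, then there exist j ∈ {0, 1} and a nonzero f̃ ∈ C(x) with σ(r)/r = q^j · σ²(f̃)/f̃. -/
open Polynomial

noncomputable section
namespace Stmt12

open scoped Classical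

variable {C : Type*} [Field C]

/-- order of vanishing of a rational function at a point -/
def ord (α : C) (f : RatFunc C) : ℤ :=
  (f.num.rootMultiplicity α : ℤ) - (f.denom.rootMultiplicity α : ℤ)

lemma rm_one (α : C) : Polynomial.rootMultiplicity α (1 : C[X]) = 0 :=
  Polynomial.rootMultiplicity_eq_zero (by simp [Polynomial.IsRoot])

lemma ord_one (α : C) : ord α (1 : RatFunc C) = 0 := by
  simp [ord, RatFunc.num_one, RatFunc.denom_one, rm_one]

lemma ord_div_eq (α : C) {p s : C[X]} (hp : p ≠ 0) (hs : s ≠ 0) :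
    ord α (algebraMap C[X] (RatFunc C) p / algebraMap C[X] (RatFunc C) s)
      = (p.rootMultiplicity α : ℤ) - (s.rootMultiplicity α : ℤ) := by
  set f := algebraMap C[X] (RatFunc C) p / algebraMap C[X] (RatFunc C) s with hfdef
  have hf : f ≠ 0 :=
    div_ne_zero (RatFunc.algebraMap_ne_zero hp) (RatFunc.algebraMap_ne_zero hs)
  have h1 : algebraMap C[X] (RatFunc C) f.num / algebraMap C[X] (RatFunc C) f.denom
      = algebraMap C[X] (RatFunc C) p / algebraMap C[X] (RatFunc C) s := by
    rw [RatFunc.num_div_denom]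
  rw [div_eq_div_iff (RatFunc.algebraMap_ne_zero (RatFunc.denom_ne_zero f))
      (RatFunc.algebraMap_ne_zero hs)] at h1
  rw [← map_mul, ← map_mul] at h1
  have key : f.num * s = p * f.denom := RatFunc.algebraMap_injective C h1
  have hnum := RatFunc.num_ne_zero hf
  have hden := RatFunc.denom_ne_zero f
  have h2 := congrArg (Polynomial.rootMultiplicity α) key
  rw [Polynomial.rootMultiplicity_mul (mul_ne_zero hnum hs),
    Polynomial.rootMultiplicity_mul (mul_ne_zero hp hden)] at h2
  unfold ord
  omega

lemma ord_algebraMap (α : C) {p : C[X]} (hp : p ≠ 0) :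
    ord α (algebraMap C[X] (RatFunc C) p) = p.rootMultiplicity α := by
  have h := ord_div_eq α hp (one_ne_zero : (1 : C[X]) ≠ 0)
  rw [map_one, div_one, rm_one] at h
  omega

lemma ord_mul (α : C) {f g : RatFunc C} (hf : f ≠ 0) (hg : g ≠ 0) :
    ord α (f * g) = ord α f + ord α g := by
  have hfe : f * g = algebraMap C[X] (RatFunc C) (f.num * g.num) /
      algebraMap C[X] (RatFunc C) (f.denom * g.denom) := by
    rw [map_mul, map_mul, ← div_mul_div_comm, RatFunc.num_div_denom, RatFunc.num_div_denom]
  rw [hfe, ord_div_eq α (mul_ne_zero (RatFunc.num_ne_zero hf) (RatFunc.num_ne_zero hg))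
      (mul_ne_zero (RatFunc.denom_ne_zero f) (RatFunc.denom_ne_zero g)),
    Polynomial.rootMultiplicity_mul (mul_ne_zero (RatFunc.num_ne_zero hf) (RatFunc.num_ne_zero hg)),
    Polynomial.rootMultiplicity_mul
      (mul_ne_zero (RatFunc.denom_ne_zero f) (RatFunc.denom_ne_zero g))]
  unfold ord
  push_cast
  ring

lemma ord_inv (α : C) (f : RatFunc C) : ord α f⁻¹ = - ord α f := by
  rcases eq_or_ne f 0 with rfl | hf
  · simp [ord, rm_one]
  · have h0 : f⁻¹ * f = 1 := inv_mul_cancel₀ hf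
    have h1 : ord α (f⁻¹ * f) = 0 := by rw [h0, ord_one]
    rw [ord_mul α (inv_ne_zero hf) hf] at h1
    omega

lemma ord_div (α : C) {f g : RatFunc C} (hf : f ≠ 0) (hg : g ≠ 0) :
    ord α (f / g) = ord α f - ord α g := by
  rw [div_eq_mul_inv, ord_mul α hf (inv_ne_zero hg), ord_inv]
  ring

lemma ord_pow (α : C) {f : RatFunc C} (hf : f ≠ 0) (n : ℕ) :
    ord α (f ^ n) = n * ord α f := by
  induction n with
  | zero => simp [ord_one]
  | succ n ih =>
    rw [pow_succ, ord_mul α (pow_ne_zero n hf) hf, ih]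
    push_cast; ring

lemma ord_zpow (α : C) {f : RatFunc C} (hf : f ≠ 0) (n : ℤ) :
    ord α (f ^ n) = n * ord α f := by
  cases n with
  | ofNat m => rw [Int.ofNat_eq_coe, zpow_natCast, ord_pow α hf]
  | negSucc m =>
    rw [zpow_negSucc, ord_inv, ord_pow α hf, Int.negSucc_eq]
    push_cast; ring

lemma ord_C (α : C) (c : C) (hc : c ≠ 0) : ord α (RatFunc.C c) = 0 := by
  rw [← RatFunc.algebraMap_C, ord_algebraMap α (by simpa using hc),
    Polynomial.rootMultiplicity_eq_zero (by simp [Polynomial.IsRoot, hc])]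
  simp

lemma ord_X_sub_C_self (β : C) :
    ord β (algebraMap C[X] (RatFunc C) (Polynomial.X - Polynomial.C β)) = 1 := by
  classical
  rw [ord_algebraMap β (Polynomial.X_sub_C_ne_zero β), Polynomial.rootMultiplicity_X_sub_C]
  simp

lemma ord_X_sub_C_ne {α β : C} (h : α ≠ β) :
    ord α (algebraMap C[X] (RatFunc C) (Polynomial.X - Polynomial.C β)) = 0 := by
  classical
  rw [ord_algebraMap α (Polynomial.X_sub_C_ne_zero β), Polynomial.rootMultiplicity_X_sub_C]
  simp [h]


section Sigma

variable {q : C}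

lemma comp_qX_ne_zero (hq0 : q ≠ 0) {p : C[X]} (hp : p ≠ 0) :
    p.comp (Polynomial.C q * Polynomial.X) ≠ 0 := by
  have hlc : (p.comp (Polynomial.C q * Polynomial.X)).leadingCoeff
      = p.leadingCoeff * q ^ p.natDegree := by
    rw [Polynomial.leadingCoeff_comp (by rw [Polynomial.natDegree_C_mul_X q hq0]; omega),
      Polynomial.leadingCoeff_C_mul_X]
  intro h
  rw [h, Polynomial.leadingCoeff_zero] at hlc
  exact (mul_ne_zero (Polynomial.leadingCoeff_ne_zero.mpr hp) (pow_ne_zero _ hq0)) hlc.symm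

lemma comp_qX_comp (hq0 : q ≠ 0) (p : C[X]) :
    (p.comp (Polynomial.C q * Polynomial.X)).comp (Polynomial.C q⁻¹ * Polynomial.X) = p := by
  rw [Polynomial.comp_assoc]
  have : (Polynomial.C q * Polynomial.X).comp (Polynomial.C q⁻¹ * Polynomial.X)
      = (Polynomial.X : C[X]) := by
    rw [Polynomial.mul_comp, Polynomial.C_comp, Polynomial.X_comp, ← mul_assoc, ← Polynomial.C_mul,
      mul_inv_cancel₀ hq0, Polynomial.C_1, one_mul]
  rw [this, Polynomial.comp_X]

lemma dvd_comp_qX {p : C[X]} {α : C} {n : ℕ}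
    (h : (Polynomial.X - Polynomial.C (q * α)) ^ n ∣ p) :
    (Polynomial.X - Polynomial.C α) ^ n ∣ p.comp (Polynomial.C q * Polynomial.X) := by
  obtain ⟨u, hu⟩ := h
  refine ⟨Polynomial.C (q ^ n) * u.comp (Polynomial.C q * Polynomial.X), ?_⟩
  have hfac : (Polynomial.X - Polynomial.C (q * α)).comp (Polynomial.C q * Polynomial.X)
      = Polynomial.C q * (Polynomial.X - Polynomial.C α) := by
    rw [Polynomial.sub_comp, Polynomial.X_comp, Polynomial.C_comp, Polynomial.C_mul]
    ring
  rw [hu, Polynomial.mul_comp, Polynomial.pow_comp, hfac, mul_pow, ← Polynomial.C_pow]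
  ring

lemma rm_comp_qX (hq0 : q ≠ 0) {p : C[X]} (hp : p ≠ 0) (α : C) :
    (p.comp (Polynomial.C q * Polynomial.X)).rootMultiplicity α
      = p.rootMultiplicity (q * α) := by
  apply le_antisymm
  · rw [Polynomial.le_rootMultiplicity_iff hp]
    have h1 : (Polynomial.X - Polynomial.C α) ^
        ((p.comp (Polynomial.C q * Polynomial.X)).rootMultiplicity α)
        ∣ p.comp (Polynomial.C q * Polynomial.X) :=
      Polynomial.pow_rootMultiplicity_dvd _ α
    have h2 : (Polynomial.X - Polynomial.C (q⁻¹ * (q * α))) ^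
        ((p.comp (Polynomial.C q * Polynomial.X)).rootMultiplicity α)
        ∣ p.comp (Polynomial.C q * Polynomial.X) := by
      rwa [← mul_assoc, inv_mul_cancel₀ hq0, one_mul]
    have h3 := dvd_comp_qX (q := q⁻¹) h2
    rwa [comp_qX_comp hq0] at h3
  · rw [Polynomial.le_rootMultiplicity_iff (comp_qX_ne_zero hq0 hp)]
    exact dvd_comp_qX (Polynomial.pow_rootMultiplicity_dvd p (q * α))

variable (σ : RatFunc C ≃ₐ[C] RatFunc C) (hσX : σ RatFunc.X = RatFunc.C q * RatFunc.X)

include hσX in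
lemma sigma_algebraMap (p : C[X]) :
    σ (algebraMap C[X] (RatFunc C) p)
      = algebraMap C[X] (RatFunc C) (p.comp (Polynomial.C q * Polynomial.X)) := by
  induction p using Polynomial.induction_on' with
  | add p r hp hr => rw [map_add, map_add, hp, hr, Polynomial.add_comp, map_add]
  | monomial n a =>
    have hC : σ (RatFunc.C a) = RatFunc.C a := by
      rw [← RatFunc.algebraMap_eq_C]; exact σ.commutes a
    simp only [← Polynomial.C_mul_X_pow_eq_monomial, map_mul, map_pow, RatFunc.algebraMap_C,
      RatFunc.algebraMap_X, Polynomial.mul_comp, Polynomial.pow_comp, Polynomial.C_comp,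
      Polynomial.X_comp, hσX, hC]

lemma sigma_ne_zero {f : RatFunc C} (hf : f ≠ 0) : σ f ≠ 0 := by
  intro h
  exact hf (by simpa using σ.injective (by rw [h, map_zero]))

include hσX in
lemma ord_sigma (hq0 : q ≠ 0) {f : RatFunc C} (hf : f ≠ 0) (α : C) :
    ord α (σ f) = ord (q * α) f := by
  conv_lhs => rw [← RatFunc.num_div_denom f]
  rw [map_div₀, sigma_algebraMap σ hσX, sigma_algebraMap σ hσX,
    ord_div_eq α (comp_qX_ne_zero hq0 (RatFunc.num_ne_zero hf))
      (comp_qX_ne_zero hq0 f.denom_ne_zero),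
    rm_comp_qX hq0 (RatFunc.num_ne_zero hf), rm_comp_qX hq0 f.denom_ne_zero]
  rfl

omit hσX in
lemma sigma_C (c : C) : σ (RatFunc.C c) = RatFunc.C c := by
  rw [← RatFunc.algebraMap_eq_C]
  exact σ.commutes c

end Sigma

lemma eq_C_of_ord_eq_zero [IsAlgClosed C] {f : RatFunc C} (hf : f ≠ 0)
    (h : ∀ α : C, ord α f = 0) : ∃ c : C, c ≠ 0 ∧ f = RatFunc.C c := by
  have hnum := RatFunc.num_ne_zero hf
  have hden := f.denom_ne_zero
  have hnoroot : ∀ α : C, ¬ f.num.IsRoot α := by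
    intro α hroot
    have h1 : 0 < f.num.rootMultiplicity α := (Polynomial.rootMultiplicity_pos hnum).2 hroot
    have h2 : 0 < f.denom.rootMultiplicity α := by
      have := h α; unfold ord at this; omega
    have d1 : (Polynomial.X - Polynomial.C α) ∣ f.num := Polynomial.dvd_iff_isRoot.2 hroot
    have d2 : (Polynomial.X - Polynomial.C α) ∣ f.denom :=
      Polynomial.dvd_iff_isRoot.2 ((Polynomial.rootMultiplicity_pos hden).1 h2)
    obtain ⟨u, v, huv⟩ := f.isCoprime_num_denom
    have : (Polynomial.X - Polynomial.C α) ∣ 1 := by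
      rw [← huv]; exact dvd_add (d1.mul_left u) (d2.mul_left v)
    exact Polynomial.not_isUnit_X_sub_C α (isUnit_of_dvd_one this)
  have hnodroot : ∀ α : C, ¬ f.denom.IsRoot α := by
    intro α hroot
    have h2 : 0 < f.denom.rootMultiplicity α := (Polynomial.rootMultiplicity_pos hden).2 hroot
    have h1 : 0 < f.num.rootMultiplicity α := by
      have := h α; unfold ord at this; omega
    exact hnoroot α ((Polynomial.rootMultiplicity_pos hnum).1 h1)
  have hd1 : f.num.degree = 0 := by
    rcases eq_or_ne f.num.degree 0 with h0 | h0
    · exact h0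
    · obtain ⟨α, hα⟩ := IsAlgClosed.exists_root f.num h0
      exact absurd hα (hnoroot α)
  have hd2 : f.denom.degree = 0 := by
    rcases eq_or_ne f.denom.degree 0 with h0 | h0
    · exact h0
    · obtain ⟨α, hα⟩ := IsAlgClosed.exists_root f.denom h0
      exact absurd hα (hnodroot α)
  refine ⟨f.num.coeff 0 / f.denom.coeff 0, ?_, ?_⟩
  · apply div_ne_zero
    · intro h0
      apply hnum
      rw [Polynomial.eq_C_of_degree_le_zero hd1.le, h0, Polynomial.C_0]
    · intro h0
      apply hden
      rw [Polynomial.eq_C_of_degree_le_zero hd2.le, h0, Polynomial.C_0]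
  · conv_lhs => rw [← RatFunc.num_div_denom f]
    rw [map_div₀]
    conv_lhs =>
      rw [Polynomial.eq_C_of_degree_le_zero hd1.le, Polynomial.eq_C_of_degree_le_zero hd2.le]
    rw [RatFunc.algebraMap_C, RatFunc.algebraMap_C, ← map_div₀ (RatFunc.C : C →+* RatFunc C)]



lemma intDegree_inv {f : RatFunc C} (hf : f ≠ 0) : f⁻¹.intDegree = -f.intDegree := by
  have h := RatFunc.intDegree_mul (inv_ne_zero hf) hf
  rw [inv_mul_cancel₀ hf, RatFunc.intDegree_one] at h
  omega

lemma intDegree_div_poly {p s : C[X]} (hp : p ≠ 0) (hs : s ≠ 0) :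
    (algebraMap C[X] (RatFunc C) p / algebraMap C[X] (RatFunc C) s).intDegree
      = (p.natDegree : ℤ) - s.natDegree := by
  rw [div_eq_mul_inv,
    RatFunc.intDegree_mul (RatFunc.algebraMap_ne_zero hp)
      (inv_ne_zero (RatFunc.algebraMap_ne_zero hs)),
    intDegree_inv (RatFunc.algebraMap_ne_zero hs), RatFunc.intDegree_polynomial,
    RatFunc.intDegree_polynomial]
  omega

/-- leading coefficient of a rational function -/
def lc (f : RatFunc C) : C := f.num.leadingCoeff / f.denom.leadingCoeff

lemma lc_div_eq {p s : C[X]} (hp : p ≠ 0) (hs : s ≠ 0) :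
    lc (algebraMap C[X] (RatFunc C) p / algebraMap C[X] (RatFunc C) s)
      = p.leadingCoeff / s.leadingCoeff := by
  set f := algebraMap C[X] (RatFunc C) p / algebraMap C[X] (RatFunc C) s with hfdef
  have hf : f ≠ 0 :=
    div_ne_zero (RatFunc.algebraMap_ne_zero hp) (RatFunc.algebraMap_ne_zero hs)
  have h1 : algebraMap C[X] (RatFunc C) f.num / algebraMap C[X] (RatFunc C) f.denom
      = algebraMap C[X] (RatFunc C) p / algebraMap C[X] (RatFunc C) s := by
    rw [RatFunc.num_div_denom]
  rw [div_eq_div_iff (RatFunc.algebraMap_ne_zero (RatFunc.denom_ne_zero f))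
      (RatFunc.algebraMap_ne_zero hs), ← map_mul, ← map_mul] at h1
  have key : f.num * s = p * f.denom := RatFunc.algebraMap_injective C h1
  have h2 := congrArg Polynomial.leadingCoeff key
  rw [Polynomial.leadingCoeff_mul, Polynomial.leadingCoeff_mul] at h2
  have e1 : f.num.leadingCoeff ≠ 0 := Polynomial.leadingCoeff_ne_zero.mpr (RatFunc.num_ne_zero hf)
  have e2 : f.denom.leadingCoeff ≠ 0 := Polynomial.leadingCoeff_ne_zero.mpr f.denom_ne_zero
  have e3 : p.leadingCoeff ≠ 0 := Polynomial.leadingCoeff_ne_zero.mpr hp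
  have e4 : s.leadingCoeff ≠ 0 := Polynomial.leadingCoeff_ne_zero.mpr hs
  unfold lc
  field_simp
  linear_combination h2

lemma lc_ne_zero {f : RatFunc C} (hf : f ≠ 0) : lc f ≠ 0 :=
  div_ne_zero (Polynomial.leadingCoeff_ne_zero.mpr (RatFunc.num_ne_zero hf))
    (Polynomial.leadingCoeff_ne_zero.mpr f.denom_ne_zero)

lemma lc_mul {f g : RatFunc C} (hf : f ≠ 0) (hg : g ≠ 0) :
    lc (f * g) = lc f * lc g := by
  have hfe : f * g = algebraMap C[X] (RatFunc C) (f.num * g.num) /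
      algebraMap C[X] (RatFunc C) (f.denom * g.denom) := by
    rw [map_mul, map_mul, ← div_mul_div_comm, RatFunc.num_div_denom, RatFunc.num_div_denom]
  rw [hfe, lc_div_eq (mul_ne_zero (RatFunc.num_ne_zero hf) (RatFunc.num_ne_zero hg))
      (mul_ne_zero f.denom_ne_zero g.denom_ne_zero),
    Polynomial.leadingCoeff_mul, Polynomial.leadingCoeff_mul]
  unfold lc
  rw [div_mul_div_comm]

lemma lc_C (c : C) : lc (RatFunc.C c) = c := by
  rcases eq_or_ne c 0 with rfl | hc
  · simp [lc]
  · have : RatFunc.C c = algebraMap C[X] (RatFunc C) (Polynomial.C c) /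
        algebraMap C[X] (RatFunc C) 1 := by rw [map_one, div_one, RatFunc.algebraMap_C]
    rw [this, lc_div_eq (by simpa using hc) one_ne_zero]
    simp

section LcSigma

variable {q : C} (σ : RatFunc C ≃ₐ[C] RatFunc C) (hσX : σ RatFunc.X = RatFunc.C q * RatFunc.X)

include hσX in
lemma lc_sigma (hq0 : q ≠ 0) {f : RatFunc C} (hf : f ≠ 0) :
    lc (σ f) = q ^ f.intDegree * lc f := by
  conv_lhs => rw [← RatFunc.num_div_denom f]
  rw [map_div₀, sigma_algebraMap σ hσX, sigma_algebraMap σ hσX,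
    lc_div_eq (comp_qX_ne_zero hq0 (RatFunc.num_ne_zero hf))
      (comp_qX_ne_zero hq0 f.denom_ne_zero),
    Polynomial.leadingCoeff_comp (by rw [Polynomial.natDegree_C_mul_X q hq0]; omega),
    Polynomial.leadingCoeff_comp (by rw [Polynomial.natDegree_C_mul_X q hq0]; omega),
    Polynomial.leadingCoeff_C_mul_X]
  rw [RatFunc.intDegree, zpow_sub₀ hq0, zpow_natCast, zpow_natCast]
  unfold lc
  have e2 : f.denom.leadingCoeff ≠ 0 := Polynomial.leadingCoeff_ne_zero.mpr f.denom_ne_zero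
  field_simp

include hσX in
lemma intDegree_sigma (hq0 : q ≠ 0) {f : RatFunc C} (hf : f ≠ 0) :
    (σ f).intDegree = f.intDegree := by
  conv_lhs => rw [← RatFunc.num_div_denom f]
  rw [map_div₀, sigma_algebraMap σ hσX, sigma_algebraMap σ hσX]
  rw [intDegree_div_poly (comp_qX_ne_zero hq0 (RatFunc.num_ne_zero hf))
      (comp_qX_ne_zero hq0 f.denom_ne_zero),
    Polynomial.natDegree_comp, Polynomial.natDegree_comp,
    Polynomial.natDegree_C_mul_X q hq0, mul_one, mul_one]
  rfl

end LcSigma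


lemma ord_support_finite {f : RatFunc C} (hf : f ≠ 0) : {α : C | ord α f ≠ 0}.Finite := by
  apply Set.Finite.subset
    ((Polynomial.finite_setOf_isRoot (RatFunc.num_ne_zero hf)).union
      (Polynomial.finite_setOf_isRoot f.denom_ne_zero))
  intro α hα
  simp only [Set.mem_setOf_eq] at hα
  by_contra hmem
  simp only [Set.mem_union, Set.mem_setOf_eq, not_or] at hmem
  apply hα
  unfold ord
  rw [Polynomial.rootMultiplicity_eq_zero hmem.1, Polynomial.rootMultiplicity_eq_zero hmem.2]
  simp

lemma prod_lin_ne_zero (S : Finset C) (m : C → ℤ) :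
    (∏ α ∈ S, (algebraMap C[X] (RatFunc C) (Polynomial.X - Polynomial.C α)) ^ (m α)) ≠ 0 := by
  rw [Finset.prod_ne_zero_iff]
  intro α _
  exact zpow_ne_zero _ (RatFunc.algebraMap_ne_zero (Polynomial.X_sub_C_ne_zero α))

lemma ord_prod (S : Finset C) (m : C → ℤ) (β : C) :
    ord β (∏ α ∈ S, (algebraMap C[X] (RatFunc C) (Polynomial.X - Polynomial.C α)) ^ (m α))
      = if β ∈ S then m β else 0 := by
  classical
  induction S using Finset.induction_on with
  | empty => simp [ord_one]
  | @insert a s ha ih =>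
    rw [Finset.prod_insert ha,
      ord_mul β (zpow_ne_zero _ (RatFunc.algebraMap_ne_zero (Polynomial.X_sub_C_ne_zero a)))
        (prod_lin_ne_zero s m), ih,
      ord_zpow β (RatFunc.algebraMap_ne_zero (Polynomial.X_sub_C_ne_zero a))]
    by_cases hβa : β = a
    · subst hβa
      rw [ord_X_sub_C_self]
      simp [ha]
    · rw [ord_X_sub_C_ne hβa]
      simp [Finset.mem_insert, hβa]

lemma ord_X (β : C) : ord β (RatFunc.X : RatFunc C) = if β = 0 then 1 else 0 := by
  classical
  have hX : (Polynomial.X : C[X]) = Polynomial.X - Polynomial.C 0 := by simp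
  rw [← RatFunc.algebraMap_X, hX]
  by_cases h : β = 0
  · subst h; rw [ord_X_sub_C_self]; simp
  · rw [ord_X_sub_C_ne h]; simp [h]

lemma lc_inv {f : RatFunc C} (hf : f ≠ 0) : lc f⁻¹ = (lc f)⁻¹ := by
  have h := lc_mul (inv_ne_zero hf) hf
  rw [inv_mul_cancel₀ hf] at h
  have h1 : lc (1 : RatFunc C) = 1 := by
    have : (1 : RatFunc C) = RatFunc.C 1 := by rw [map_one]
    rw [this, lc_C]
  rw [h1] at h
  exact eq_inv_of_mul_eq_one_left h.symm

lemma lc_div {f g : RatFunc C} (hf : f ≠ 0) (hg : g ≠ 0) :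
    lc (f / g) = lc f / lc g := by
  rw [div_eq_mul_inv, lc_mul hf (inv_ne_zero hg), lc_inv hg, div_eq_mul_inv]

end Stmt12
end

/-- if `(σ(r)/r)² = σ²(f)/f` for some nonzero `f ∈ C(x)`, then
`σ(r)/r = q^j·σ²(f̃)/f̃` for some `j ∈ {0,1}` and nonzero `f̃ ∈ C(x)`. -/
theorem stmt_12 (C : Type*) [Field C] [CharZero C] [IsAlgClosed C]
    (q : C) (hq0 : q ≠ 0) (hq : ∀ n : ℕ, 0 < n → q ^ n ≠ 1)
    (σ : RatFunc C ≃ₐ[C] RatFunc C) (hσX : σ RatFunc.X = RatFunc.C q * RatFunc.X)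
    (r : RatFunc C) (hr : r ≠ 0)
    (h : ∃ f : RatFunc C, f ≠ 0 ∧ (σ r / r) ^ 2 = σ (σ f) / f) :
    ∃ (j : ℕ) (ft : RatFunc C), (j = 0 ∨ j = 1) ∧ ft ≠ 0 ∧
      σ r / r = RatFunc.C q ^ j * (σ (σ ft) / ft) := by
  classical
  obtain ⟨f, hf, hEq⟩ := h
  have hσr : σ r ≠ 0 := Stmt12.sigma_ne_zero σ hr
  have hσf : σ f ≠ 0 := Stmt12.sigma_ne_zero σ hf
  have hσσf : σ (σ f) ≠ 0 := Stmt12.sigma_ne_zero σ hσf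
  set g := σ r / r with hgdef
  have hg : g ≠ 0 := div_ne_zero hσr hr
  have hCq0 : (RatFunc.C q : RatFunc C) ≠ 0 := fun hcon =>
    hq0 ((RatFunc.C : C →+* RatFunc C).injective (by rw [hcon, map_zero]))
  -- q ^ z = 1 → z = 0
  have hqz : ∀ z : ℤ, q ^ z = 1 → z = 0 := by
    intro z hz
    by_contra hne
    rcases lt_or_gt_of_ne hne with h0 | h0
    · refine hq (-z).toNat (by omega) ?_
      have h1 : ((-z).toNat : ℤ) = -z := Int.toNat_of_nonneg (by omega)
      have h2 : q ^ (((-z).toNat : ℕ) : ℤ) = 1 := by rw [h1, zpow_neg, hz, inv_one]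
      rwa [zpow_natCast] at h2
    · refine hq z.toNat (by omega) ?_
      have h1 : (z.toNat : ℤ) = z := Int.toNat_of_nonneg (by omega)
      have h2 : q ^ ((z.toNat : ℕ) : ℤ) = 1 := by rw [h1, hz]
      rwa [zpow_natCast] at h2
  -- key ord relation
  have hordrel : ∀ α : C, Stmt12.ord (q * (q * α)) f
      = Stmt12.ord α f + 2 * Stmt12.ord α g := by
    intro α
    have h1 : Stmt12.ord α (g ^ 2) = 2 * Stmt12.ord α g := by
      rw [Stmt12.ord_pow α hg 2]; push_cast; ring
    rw [hEq, Stmt12.ord_div α hσσf hf, Stmt12.ord_sigma σ hσX hq0 hσf α,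
      Stmt12.ord_sigma σ hσX hq0 hf (q * α)] at h1
    omega
  -- parity of f's orders away from 0
  have hparity : ∀ α : C, α ≠ 0 → Even (Stmt12.ord α f) := by
    intro α₀ hα₀
    by_contra hodd
    set T : Set C := {α : C | α ≠ 0 ∧ ¬ Even (Stmt12.ord α f)} with hT
    have hTfin : T.Finite := by
      apply Set.Finite.subset (Stmt12.ord_support_finite hf)
      intro α hα
      simp only [hT, Set.mem_setOf_eq] at hα ⊢
      intro h0
      exact hα.2 (h0 ▸ Even.zero)
    have hstep : ∀ α, α ∈ T → q * (q * α) ∈ T := by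
      intro α hα
      obtain ⟨hα1, hα2⟩ := hα
      refine ⟨mul_ne_zero hq0 (mul_ne_zero hq0 hα1), ?_⟩
      rw [hordrel α]
      intro he
      exact hα2 (by rcases he with ⟨k, hk⟩; exact ⟨k - Stmt12.ord α g, by omega⟩)
    have hmem : ∀ n : ℕ, q ^ (2 * n) * α₀ ∈ T := by
      intro n
      induction n with
      | zero =>
        have h00 : q ^ (2 * 0) * α₀ = α₀ := by norm_num
        rw [h00]
        exact ⟨hα₀, hodd⟩
      | succ n ih =>
        have h2 := hstep _ ih
        have heq : q * (q * (q ^ (2 * n) * α₀)) = q ^ (2 * (n + 1)) * α₀ := by ring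
        rwa [heq] at h2
    have hinj : Function.Injective (fun n : ℕ => q ^ (2 * n) * α₀) := by
      intro m n hmn
      simp only at hmn
      by_contra hne
      wlog hlt : m < n generalizing m n
      · exact this hmn.symm (Ne.symm hne) (by omega)
      have h1 : q ^ (2 * m) = q ^ (2 * n) := mul_right_cancel₀ hα₀ hmn
      have h2 : q ^ (2 * m) * q ^ (2 * (n - m)) = q ^ (2 * m) * 1 := by
        rw [← pow_add, mul_one]
        rw [show 2 * m + 2 * (n - m) = 2 * n by omega]
        exact h1.symm
      have h3 : q ^ (2 * (n - m)) = 1 := mul_left_cancel₀ (pow_ne_zero _ hq0) h2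
      exact hq (2 * (n - m)) (by omega) h3
    exact hTfin.not_infinite (Set.infinite_of_injective_forall_mem hinj hmem)
  -- construct F
  have hfin := Stmt12.ord_support_finite hf
  set S : Finset C := hfin.toFinset.erase 0 with hS
  set a : ℤ := Stmt12.ord 0 f with ha
  set F : RatFunc C := ∏ α ∈ S,
      (algebraMap (Polynomial C) (RatFunc C) (Polynomial.X - Polynomial.C α))
        ^ (Stmt12.ord α f / 2) with hF
  have hFne : F ≠ 0 := Stmt12.prod_lin_ne_zero S _
  have hordF : ∀ β, Stmt12.ord β F = if β ∈ S then Stmt12.ord β f / 2 else 0 :=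
    fun β => Stmt12.ord_prod S _ β
  have hXane : (RatFunc.X : RatFunc C) ^ a ≠ 0 := zpow_ne_zero _ RatFunc.X_ne_zero
  have hD : RatFunc.X ^ a * F ^ 2 ≠ 0 := mul_ne_zero hXane (pow_ne_zero _ hFne)
  set u : RatFunc C := f / (RatFunc.X ^ a * F ^ 2) with hu
  have hune : u ≠ 0 := div_ne_zero hf hD
  have huord : ∀ β, Stmt12.ord β u = 0 := by
    intro β
    rw [hu, Stmt12.ord_div β hf hD, Stmt12.ord_mul β hXane (pow_ne_zero 2 hFne),
      Stmt12.ord_zpow β RatFunc.X_ne_zero, Stmt12.ord_pow β hFne 2, Stmt12.ord_X, hordF β]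
    by_cases hβ0 : β = 0
    · subst hβ0
      have h0S : (0 : C) ∉ S := Finset.notMem_erase 0 _
      rw [if_pos rfl, if_neg h0S, ← ha]
      push_cast
      ring
    · rw [if_neg hβ0]
      by_cases hβS : β ∈ S
      · have heven := hparity β hβ0
        rw [if_pos hβS]
        have h2 := Int.two_mul_ediv_two_of_even heven
        push_cast
        omega
      · have hβ : Stmt12.ord β f = 0 := by
          by_contra h0
          exact hβS (Finset.mem_erase.mpr ⟨hβ0, hfin.mem_toFinset.mpr h0⟩)
        rw [if_neg hβS, hβ]
        push_cast
        ring
  obtain ⟨c, hc, hcu⟩ := Stmt12.eq_C_of_ord_eq_zero hune huord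
  have hfe : f = RatFunc.C c * (RatFunc.X ^ a * F ^ 2) := by
    rw [← hcu, hu, div_mul_cancel₀ _ hD]
  -- sigma computations
  have hσC : ∀ x : C, σ (RatFunc.C x) = RatFunc.C x := fun x => Stmt12.sigma_C σ x
  have hσzX : ∀ m : ℤ, σ ((RatFunc.X : RatFunc C) ^ m)
      = (RatFunc.C q) ^ m * RatFunc.X ^ m := by
    intro m
    rw [map_zpow₀, hσX, mul_zpow]
  have hσCq : ∀ m : ℤ, σ ((RatFunc.C q : RatFunc C) ^ m) = (RatFunc.C q) ^ m := by
    intro m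
    rw [map_zpow₀, hσC]
  have hσσzX : ∀ m : ℤ, σ (σ ((RatFunc.X : RatFunc C) ^ m))
      = (RatFunc.C q) ^ (2 * m) * RatFunc.X ^ m := by
    intro m
    rw [hσzX, map_mul, hσCq, hσzX, ← mul_assoc, ← zpow_add₀ hCq0, two_mul]
  have hσF : σ F ≠ 0 := Stmt12.sigma_ne_zero σ hFne
  have hσσF : σ (σ F) ≠ 0 := Stmt12.sigma_ne_zero σ hσF
  set B : RatFunc C := (RatFunc.C q) ^ a * (σ (σ F) / F) with hB
  have hBne : B ≠ 0 := mul_ne_zero (zpow_ne_zero _ hCq0) (div_ne_zero hσσF hFne)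
  have hCcne : (RatFunc.C c : RatFunc C) ≠ 0 := fun hcon =>
    hc ((RatFunc.C : C →+* RatFunc C).injective (by rw [hcon, map_zero]))
  have hσσf_eq : σ (σ f)
      = RatFunc.C c * ((RatFunc.C q) ^ (2 * a) * RatFunc.X ^ a * (σ (σ F)) ^ 2) := by
    conv_lhs => rw [hfe]
    simp only [map_mul, map_pow, hσC, hσσzX]
  have hg2 : g ^ 2 = B ^ 2 := by
    rw [hEq, hσσf_eq, hB]
    conv_lhs => rw [hfe]
    rw [mul_pow, div_pow]
    have h2a : (RatFunc.C q : RatFunc C) ^ (2 * a) = ((RatFunc.C q) ^ a) ^ 2 := by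
      rw [← zpow_natCast ((RatFunc.C q : RatFunc C) ^ a) 2, ← zpow_mul]
      norm_num
      ring_nf
    rw [h2a]
    field_simp
  have hfactor : (g - B) * (g + B) = 0 := by linear_combination hg2
  -- leading coefficient facts
  have hlcg : Stmt12.lc g = q ^ r.intDegree := by
    rw [hgdef, Stmt12.lc_div hσr hr, Stmt12.lc_sigma σ hσX hq0 hr, mul_div_assoc,
      div_self (Stmt12.lc_ne_zero hr), mul_one]
  have hlcB : Stmt12.lc B = q ^ (a + 2 * F.intDegree) := by
    rw [hB, Stmt12.lc_mul (zpow_ne_zero _ hCq0) (div_ne_zero hσσF hFne),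
      Stmt12.lc_div hσσF hFne, Stmt12.lc_sigma σ hσX hq0 hσF,
      Stmt12.lc_sigma σ hσX hq0 hFne, Stmt12.intDegree_sigma σ hσX hq0 hFne]
    have h1 : ((RatFunc.C q : RatFunc C)) ^ a = RatFunc.C (q ^ a) :=
      (map_zpow₀ (RatFunc.C : C →+* RatFunc C) q a).symm
    rw [h1, Stmt12.lc_C]
    have hlcF := Stmt12.lc_ne_zero hFne
    rw [zpow_add₀ hq0, two_mul, zpow_add₀ hq0]
    field_simp
  rcases mul_eq_zero.mp hfactor with hcase | hcase
  · -- g = B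
    have hgB : g = B := sub_eq_zero.mp hcase
    have hσσft : ∀ m : ℤ, σ (σ ((RatFunc.X : RatFunc C) ^ m * F))
        = (RatFunc.C q) ^ (2 * m) * RatFunc.X ^ m * σ (σ F) := by
      intro m
      rw [map_mul, map_mul, hσσzX m]
    rcases Int.even_or_odd a with ⟨m, hm⟩ | ⟨m, hm⟩
    · refine ⟨0, RatFunc.X ^ m * F, Or.inl rfl,
        mul_ne_zero (zpow_ne_zero _ RatFunc.X_ne_zero) hFne, ?_⟩
      rw [hgB, hB, hσσft m, pow_zero, one_mul, hm]
      have hXm : (RatFunc.X : RatFunc C) ^ m ≠ 0 := zpow_ne_zero _ RatFunc.X_ne_zero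
      rw [show m + m = 2 * m by ring]
      field_simp
    · refine ⟨1, RatFunc.X ^ m * F, Or.inr rfl,
        mul_ne_zero (zpow_ne_zero _ RatFunc.X_ne_zero) hFne, ?_⟩
      rw [hgB, hB, hσσft m, pow_one, hm]
      have hXm : (RatFunc.X : RatFunc C) ^ m ≠ 0 := zpow_ne_zero _ RatFunc.X_ne_zero
      rw [zpow_add₀ hCq0, zpow_one]
      field_simp
  · -- g = -B : contradiction
    exfalso
    have hgB : g = -B := eq_neg_of_add_eq_zero_left hcase
    have hlcneg : Stmt12.lc g = -Stmt12.lc B := by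
      rw [hgB]
      have : -B = RatFunc.C (-1) * B := by rw [map_neg, map_one]; ring
      rw [this, Stmt12.lc_mul (by
          exact fun hcon => by
            have := (RatFunc.C : C →+* RatFunc C).injective (by rw [hcon, map_zero] :
              RatFunc.C (-1 : C) = RatFunc.C 0)
            norm_num at this) hBne, Stmt12.lc_C]
      ring
    rw [hlcg, hlcB] at hlcneg
    have hkey : q ^ (2 * (r.intDegree - (a + 2 * F.intDegree))) = 1 := by
      have hz1 : q ^ (r.intDegree - (a + 2 * F.intDegree)) = -1 := by
        rw [zpow_sub₀ hq0, hlcneg]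
        rw [neg_div, div_self (zpow_ne_zero _ hq0)]
      rw [two_mul, zpow_add₀ hq0, hz1]
      norm_num
    have h0 := hqz _ hkey
    have hz0 : r.intDegree - (a + 2 * F.intDegree) = 0 := by omega
    have hz1 : q ^ (r.intDegree - (a + 2 * F.intDegree)) = -1 := by
      rw [zpow_sub₀ hq0, hlcneg, neg_div, div_self (zpow_ne_zero _ hq0)]
    rw [hz0, zpow_zero] at hz1
    norm_num at hz1
end

section
/- Let a, b ∈ C(x) with b ≠ 0, and let u ∈ C(x₂) with u ∉ C(x) satisfy the Riccati equation u·σ(u) + a·u + b = 0; set ū := τ(u) (which also satisfies the Riccati equation) and w := (u − ū)/x₂ ∈ C(x). If there exist g ∈ C(x₂) and c ∈ C with δ(u)/u + δ(ū)/ū = σ(g) − g + c, then there exists f ∈ C(x) with δ(b)/b = σ(f) − f + c; indeed f := (1/2)(g + τ(g)) + δ(w)/w works. -/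
private theorem logd_mul {R K : Type*} [CommRing R] [Field K] [Algebra R K]
    (D : Derivation R K K) (x y : K) (hx : x ≠ 0) (hy : y ≠ 0) :
    D (x * y) / (x * y) = D x / x + D y / y := by
  rw [Derivation.leibniz, smul_eq_mul, smul_eq_mul]
  field_simp
  ring

private theorem logd_div {R K : Type*} [CommRing R] [Field K] [Algebra R K]
    (D : Derivation R K K) (x y : K) (hx : x ≠ 0) (hy : y ≠ 0) :
    D (x / y) / (x / y) = D x / x - D y / y := by
  rw [Derivation.leibniz_div, smul_eq_mul, smul_eq_mul, smul_eq_mul]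
  field_simp

private theorem apply_algebraMap_poly {C : Type*} [Field C]
    (e : RatFunc C ≃ₐ[C] RatFunc C) (p : Polynomial C) :
    e (algebraMap (Polynomial C) (RatFunc C) p) = Polynomial.aeval (e RatFunc.X) p := by
  have h : (e.toAlgHom.comp (IsScalarTower.toAlgHom C (Polynomial C) (RatFunc C)))
      = Polynomial.aeval (e RatFunc.X) := by
    apply Polynomial.algHom_ext
    simp [RatFunc.algebraMap_X]
  exact DFunLike.congr_fun h p

/-- On `C(x₂)` (modelled as `RatFunc C` with `x₂ = X`, `σ(x₂) = q₂x₂`,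
`δ(x₂) = (1/2)x₂`, `τ(x₂) = −x₂`; the subfield `C(x)` is the fixed field of `τ`), let
`a, b ∈ C(x)` with `b ≠ 0`, let `u ∈ C(x₂) \ C(x)` solve the Riccati equation
`u·σ(u) + a·u + b = 0`, set `ū = τ(u)` (which also solves it) and
`w = (u − ū)/x₂ ∈ C(x)`.  If `δ(u)/u + δ(ū)/ū = σ(g) − g + c`, then
`f := (1/2)(g + τ(g)) + δ(w)/w` lies in `C(x)` and `δ(b)/b = σ(f) − f + c`. -/
theorem stmt_14 (C : Type*) [Field C] [CharZero C] [IsAlgClosed C]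
    (q q₂ : C) (hq0 : q ≠ 0) (hq : ∀ n : ℕ, 0 < n → q ^ n ≠ 1) (hq₂ : q₂ ^ 2 = q)
    (σ : RatFunc C ≃ₐ[C] RatFunc C) (hσX : σ RatFunc.X = RatFunc.C q₂ * RatFunc.X)
    (δ : Derivation C (RatFunc C) (RatFunc C))
    (hδX : δ RatFunc.X = RatFunc.C (1 / 2 : C) * RatFunc.X)
    (τ : RatFunc C ≃ₐ[C] RatFunc C) (hτX : τ RatFunc.X = -RatFunc.X)
    (hστ : ∀ f : RatFunc C, τ (σ f) = σ (τ f))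
    (hδτ : ∀ f : RatFunc C, τ (δ f) = δ (τ f))
    (hσδ : ∀ f : RatFunc C, σ (δ f) = δ (σ f))
    (a b : RatFunc C) (haτ : τ a = a) (hbτ : τ b = b) (hb : b ≠ 0)
    (u : RatFunc C) (hu : τ u ≠ u)
    (hric : u * σ u + a * u + b = 0)
    (g : RatFunc C) (c : C)
    (h : δ u / u + δ (τ u) / τ u = σ g - g + RatFunc.C c) :
    τ u * σ (τ u) + a * τ u + b = 0 ∧
    τ ((u - τ u) / RatFunc.X) = (u - τ u) / RatFunc.X ∧
    τ (RatFunc.C (1 / 2 : C) * (g + τ g)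
        + δ ((u - τ u) / RatFunc.X) / ((u - τ u) / RatFunc.X))
      = RatFunc.C (1 / 2 : C) * (g + τ g)
        + δ ((u - τ u) / RatFunc.X) / ((u - τ u) / RatFunc.X) ∧
    δ b / b
      = σ (RatFunc.C (1 / 2 : C) * (g + τ g)
            + δ ((u - τ u) / RatFunc.X) / ((u - τ u) / RatFunc.X))
        - (RatFunc.C (1 / 2 : C) * (g + τ g)
            + δ ((u - τ u) / RatFunc.X) / ((u - τ u) / RatFunc.X))
        + RatFunc.C c := by
  -- τ is an involution
  have hXa : ∀ s : Polynomial C, Polynomial.aeval RatFunc.X s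
      = algebraMap (Polynomial C) (RatFunc C) s := by
    intro s
    simpa using (apply_algebraMap_poly (AlgEquiv.refl : RatFunc C ≃ₐ[C] RatFunc C) s).symm
  have hX2 : τ (τ RatFunc.X) = RatFunc.X := by rw [hτX, map_neg, hτX, neg_neg]
  have key : ∀ s : Polynomial C,
      τ (τ (algebraMap (Polynomial C) (RatFunc C) s))
        = algebraMap (Polynomial C) (RatFunc C) s := by
    intro s
    rw [apply_algebraMap_poly τ s, ← Polynomial.aeval_algHom_apply τ (τ RatFunc.X) s, hX2, hXa]
  have hττ : ∀ v : RatFunc C, τ (τ v) = v := by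
    intro v
    induction v using RatFunc.induction_on with
    | f p r hr => rw [map_div₀, map_div₀, key, key]
  -- basic constants
  have hCτ : ∀ r : C, τ (RatFunc.C r) = RatFunc.C r := fun r => by
    rw [← RatFunc.algebraMap_eq_C]; exact τ.commutes r
  have hCσ : ∀ r : C, σ (RatFunc.C r) = RatFunc.C r := fun r => by
    rw [← RatFunc.algebraMap_eq_C]; exact σ.commutes r
  -- nonvanishing
  have hu0 : u ≠ 0 := by
    intro h0
    exact hu (by rw [h0, map_zero])
  have hubar0 : τ u ≠ 0 := by
    intro h0
    have := hττ u
    rw [h0, map_zero] at this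
    exact hu (h0.trans this)
  have hd0 : u - τ u ≠ 0 := sub_ne_zero.mpr (Ne.symm hu)
  have hX0 : (RatFunc.X : RatFunc C) ≠ 0 := RatFunc.X_ne_zero
  have hw0 : (u - τ u) / RatFunc.X ≠ 0 := div_ne_zero hd0 hX0
  have hσd0 : σ (u - τ u) ≠ 0 := by
    intro h0
    exact hd0 (σ.injective (by rw [h0, map_zero]))
  -- part 1 : τ u is also a solution
  have part1 : τ u * σ (τ u) + a * τ u + b = 0 := by
    have h1 := congrArg τ hric
    rw [map_add, map_add, map_mul, map_mul, hστ, haτ, hbτ, map_zero] at h1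
    exact h1
  -- part 2 : w is τ-invariant
  have part2 : τ ((u - τ u) / RatFunc.X) = (u - τ u) / RatFunc.X := by
    rw [map_div₀, map_sub, hττ u, hτX]
    rw [div_neg, ← neg_div, neg_sub]
  -- part 3 : f is τ-invariant
  have part3 : τ (RatFunc.C (1 / 2 : C) * (g + τ g)
        + δ ((u - τ u) / RatFunc.X) / ((u - τ u) / RatFunc.X))
      = RatFunc.C (1 / 2 : C) * (g + τ g)
        + δ ((u - τ u) / RatFunc.X) / ((u - τ u) / RatFunc.X) := by
    rw [map_add, map_mul, hCτ, map_add, hττ g, map_div₀ (τ : RatFunc C ≃ₐ[C] RatFunc C), hδτ, part2]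
    ring
  refine ⟨part1, part2, part3, ?_⟩
  -- key algebraic identity
  have hA : σ (u - τ u) * (u * τ u) = b * (u - τ u) := by
    rw [map_sub]
    linear_combination (τ u) * hric - u * part1
  have hbeq : b = u * τ u * σ (u - τ u) / (u - τ u) := by
    rw [eq_div_iff hd0]
    linear_combination -hA
  -- logarithmic derivative of b
  have G : δ b / b = δ u / u + δ (τ u) / τ u + σ (δ (u - τ u)) / σ (u - τ u)
      - δ (u - τ u) / (u - τ u) := by
    conv_lhs => rw [hbeq]
    rw [logd_div δ _ _ (mul_ne_zero (mul_ne_zero hu0 hubar0) hσd0) hd0,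
      logd_mul δ _ _ (mul_ne_zero hu0 hubar0) hσd0,
      logd_mul δ _ _ hu0 hubar0, ← hσδ]
  -- logarithmic derivative of w
  have hw : δ ((u - τ u) / RatFunc.X) / ((u - τ u) / RatFunc.X)
      = δ (u - τ u) / (u - τ u) - RatFunc.C (1 / 2 : C) := by
    rw [logd_div δ _ _ hd0 hX0, hδX, mul_div_assoc, div_self hX0, mul_one]
  -- the conjugate of h
  have h' : δ (τ u) / τ u + δ u / u = σ (τ g) - τ g + RatFunc.C c := by
    have h2 := congrArg τ h
    rw [map_add, map_div₀, map_div₀, hδτ, hδτ, hττ, map_add, map_sub, hστ, hCτ] at h2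
    exact h2
  have hhalf : RatFunc.C (1 / 2 : C) + RatFunc.C (1 / 2 : C) = 1 := by
    rw [← map_add, ← map_one RatFunc.C]
    norm_num
  rw [G, hw, map_add, map_mul, hCσ, map_add, map_sub,
    show σ ((δ u - δ (τ u)) / (u - τ u) - RatFunc.C (1 / 2 : C))
        = σ (δ u - δ (τ u)) / σ (u - τ u) - RatFunc.C (1 / 2 : C) from by
      rw [map_sub, map_div₀, hCσ]]
  linear_combination RatFunc.C (1 / 2 : C) * h + RatFunc.C (1 / 2 : C) * h'
    + (RatFunc.C c - (δ u / u + δ (τ u) / τ u)) * hhalf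
end

section
/- Let q ∈ ℚ̄ be nonzero and not a root of unity, and let σ be the ℚ̄-algebra automorphism of ℚ̄(x) with σ(x) = qx. Then there do not exist f ∈ ℚ̄(x) and c ∈ ℤ such that 5 + 2/(x − 1) = σ(f) − f + c. -/
open Polynomial

namespace Stmt16

variable {K : Type*} [Field K]

/-- Order of vanishing of a rational function at a point. -/
noncomputable def ord (a : K) (f : RatFunc K) : ℤ :=
  (f.num.rootMultiplicity a : ℤ) - (f.denom.rootMultiplicity a : ℤ)

lemma ord_eq {a : K} {p r : K[X]} (hp : p ≠ 0) (hr : r ≠ 0) {f : RatFunc K}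
    (h : f = algebraMap K[X] (RatFunc K) p / algebraMap K[X] (RatFunc K) r) :
    ord a f = (p.rootMultiplicity a : ℤ) - (r.rootMultiplicity a : ℤ) := by
  have hf : f ≠ 0 := by
    rw [h]
    exact div_ne_zero (RatFunc.algebraMap_ne_zero hp) (RatFunc.algebraMap_ne_zero hr)
  have hnum : f.num ≠ 0 := RatFunc.num_ne_zero hf
  have hden : f.denom ≠ 0 := f.denom_ne_zero
  have key : f.num * r = p * f.denom := by
    have h2 : algebraMap K[X] (RatFunc K) f.num / algebraMap K[X] (RatFunc K) f.denom
        = algebraMap K[X] (RatFunc K) p / algebraMap K[X] (RatFunc K) r := by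
      rw [RatFunc.num_div_denom, h]
    rw [div_eq_div_iff (RatFunc.algebraMap_ne_zero hden) (RatFunc.algebraMap_ne_zero hr),
      ← map_mul, ← map_mul] at h2
    exact RatFunc.algebraMap_injective K h2
  have h3 : (f.num * r).rootMultiplicity a = (p * f.denom).rootMultiplicity a := by rw [key]
  rw [rootMultiplicity_mul (mul_ne_zero hnum hr), rootMultiplicity_mul (mul_ne_zero hp hden)] at h3
  unfold ord
  omega

lemma ord_neg (a : K) {f : RatFunc K} (hf : f ≠ 0) : ord a (-f) = ord a f := by
  have h1 : -f = algebraMap K[X] (RatFunc K) (-f.num) / algebraMap K[X] (RatFunc K) f.denom := by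
    rw [map_neg, neg_div, RatFunc.num_div_denom]
  have hnum : f.num ≠ 0 := RatFunc.num_ne_zero hf
  rw [ord_eq (neg_ne_zero.mpr hnum) f.denom_ne_zero h1]
  have heq : (-f.num).rootMultiplicity a = f.num.rootMultiplicity a := by
    have h2 : -f.num = Polynomial.C (-1 : K) * f.num := by
      rw [map_neg, map_one, neg_one_mul]
    rw [h2, rootMultiplicity_mul (by rw [← h2]; exact neg_ne_zero.mpr hnum),
      rootMultiplicity_eq_zero (by simp [IsRoot]), zero_add]
  rw [heq]
  rfl

lemma ord_add_min {a : K} {f g : RatFunc K} (hf : f ≠ 0) (hg : g ≠ 0) (hfg : f + g ≠ 0) :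
    min (ord a f) (ord a g) ≤ ord a (f + g) := by
  have hrep : f + g = algebraMap K[X] (RatFunc K) (f.num * g.denom + f.denom * g.num)
      / algebraMap K[X] (RatFunc K) (f.denom * g.denom) := by
    conv_lhs => rw [← f.num_div_denom, ← g.num_div_denom]
    rw [div_add_div _ _ (RatFunc.algebraMap_ne_zero f.denom_ne_zero)
      (RatFunc.algebraMap_ne_zero g.denom_ne_zero), ← map_mul, ← map_mul, ← map_add, ← map_mul]
  have hdd : f.denom * g.denom ≠ 0 := mul_ne_zero f.denom_ne_zero g.denom_ne_zero
  have hNne : f.num * g.denom + f.denom * g.num ≠ 0 := by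
    intro h0
    apply hfg
    rw [hrep, h0, map_zero, zero_div]
  rw [ord_eq hNne hdd hrep]
  have hmin := rootMultiplicity_add (p := f.num * g.denom) (q := f.denom * g.num) a hNne
  rw [rootMultiplicity_mul (mul_ne_zero (RatFunc.num_ne_zero hf) g.denom_ne_zero),
    rootMultiplicity_mul (mul_ne_zero f.denom_ne_zero (RatFunc.num_ne_zero hg))] at hmin
  rw [rootMultiplicity_mul hdd]
  unfold ord
  omega

lemma ord_add_left {a : K} {f g : RatFunc K} (hf : f ≠ 0) (hg : g ≠ 0)
    (h : ord a f < ord a g) : ord a (f + g) = ord a f := by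
  have hfg : f + g ≠ 0 := by
    intro h0
    have hge : g = -f := by linear_combination h0
    rw [hge, ord_neg a hf] at h
    omega
  have h1 : ord a f ≤ ord a (f + g) := by
    have := ord_add_min (a := a) hf hg hfg
    omega
  have h2 : ord a (f + g) ≤ ord a f := by
    by_contra hlt
    push_neg at hlt
    have hmg : -g ≠ 0 := neg_ne_zero.mpr hg
    have he : (f + g) + -g = f := by ring
    have := ord_add_min (a := a) hfg hmg (by rw [he]; exact hf)
    rw [he, ord_neg a hg] at this
    omega
  omega

lemma ord_add_ne {a : K} {f g : RatFunc K} (hf : f ≠ 0) (hg : g ≠ 0)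
    (h : ord a f ≠ ord a g) : ord a (f + g) = min (ord a f) (ord a g) := by
  rcases h.lt_or_gt with hlt | hlt
  · rw [ord_add_left hf hg hlt]; omega
  · rw [add_comm, ord_add_left hg hf hlt]; omega

variable {q : K}

lemma comp_scale_cancel (hq0 : q ≠ 0) (p : K[X]) :
    (p.comp (Polynomial.C q * X)).comp (Polynomial.C q⁻¹ * X) = p := by
  rw [comp_assoc]
  have h : (Polynomial.C q * X).comp (Polynomial.C q⁻¹ * X) = (X : K[X]) := by
    rw [mul_comp, C_comp, X_comp, ← mul_assoc, ← Polynomial.C_mul,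
      mul_inv_cancel₀ hq0, Polynomial.C_1, one_mul]
  rw [h, comp_X]

lemma comp_scale_ne_zero (hq0 : q ≠ 0) {p : K[X]} (hp : p ≠ 0) :
    p.comp (Polynomial.C q * X) ≠ 0 := by
  intro h
  apply hp
  have h2 := comp_scale_cancel hq0 p
  rw [h, zero_comp] at h2
  exact h2.symm

lemma dvd_comp_iff (hq0 : q ≠ 0) (p : K[X]) (a : K) (n : ℕ) :
    (X - Polynomial.C a) ^ n ∣ p.comp (Polynomial.C q * X)
      ↔ (X - Polynomial.C (q * a)) ^ n ∣ p := by
  constructor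
  · rintro ⟨t, ht⟩
    have h1 : p = ((X - Polynomial.C a) ^ n * t).comp (Polynomial.C q⁻¹ * X) := by
      rw [← ht, comp_scale_cancel hq0]
    rw [mul_comp, pow_comp, sub_comp, X_comp, C_comp] at h1
    have h2 : (Polynomial.C q⁻¹ * X - Polynomial.C a : K[X])
        = Polynomial.C q⁻¹ * (X - Polynomial.C (q * a)) := by
      rw [mul_sub, ← Polynomial.C_mul, inv_mul_cancel_left₀ hq0]
    rw [h2, mul_pow] at h1
    exact ⟨Polynomial.C q⁻¹ ^ n * t.comp (Polynomial.C q⁻¹ * X), by rw [h1]; ring⟩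
  · rintro ⟨t, ht⟩
    have h1 : p.comp (Polynomial.C q * X)
        = ((X - Polynomial.C (q * a)) ^ n * t).comp (Polynomial.C q * X) := by rw [← ht]
    rw [mul_comp, pow_comp, sub_comp, X_comp, C_comp] at h1
    have h2 : (Polynomial.C q * X - Polynomial.C (q * a) : K[X])
        = Polynomial.C q * (X - Polynomial.C a) := by
      rw [mul_sub, Polynomial.C_mul]
    rw [h2, mul_pow] at h1
    exact ⟨Polynomial.C q ^ n * t.comp (Polynomial.C q * X), by rw [h1]; ring⟩

lemma rm_comp (hq0 : q ≠ 0) {p : K[X]} (hp : p ≠ 0) (a : K) :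
    (p.comp (Polynomial.C q * X)).rootMultiplicity a = p.rootMultiplicity (q * a) := by
  have hc : p.comp (Polynomial.C q * X) ≠ 0 := comp_scale_ne_zero hq0 hp
  apply le_antisymm
  · rw [le_rootMultiplicity_iff hp]
    exact (dvd_comp_iff hq0 p a _).mp (pow_rootMultiplicity_dvd _ a)
  · rw [le_rootMultiplicity_iff hc]
    exact (dvd_comp_iff hq0 p a _).mpr (pow_rootMultiplicity_dvd _ (q * a))

lemma sigma_algebraMap (σ : RatFunc K ≃ₐ[K] RatFunc K)
    (hσX : σ RatFunc.X = RatFunc.C q * RatFunc.X) (p : K[X]) :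
    σ (algebraMap K[X] (RatFunc K) p)
      = algebraMap K[X] (RatFunc K) (p.comp (Polynomial.C q * X)) := by
  have hae : ∀ r : K[X], algebraMap K[X] (RatFunc K) r = Polynomial.aeval RatFunc.X r := by
    intro r
    have h : (IsScalarTower.toAlgHom K K[X] (RatFunc K)) = Polynomial.aeval RatFunc.X := by
      apply Polynomial.algHom_ext
      simp [RatFunc.algebraMap_X]
    calc algebraMap K[X] (RatFunc K) r = (IsScalarTower.toAlgHom K K[X] (RatFunc K)) r := rfl
      _ = Polynomial.aeval RatFunc.X r := by rw [h]
  rw [hae, hae, ← Polynomial.aeval_algHom_apply σ RatFunc.X p, hσX, Polynomial.aeval_comp]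
  congr 1
  simp [← RatFunc.algebraMap_eq_C]

lemma ord_sigma (hq0 : q ≠ 0) (σ : RatFunc K ≃ₐ[K] RatFunc K)
    (hσX : σ RatFunc.X = RatFunc.C q * RatFunc.X) {f : RatFunc K} (hf : f ≠ 0) (a : K) :
    ord a (σ f) = ord (q * a) f := by
  have h : σ f = algebraMap K[X] (RatFunc K) (f.num.comp (Polynomial.C q * X))
      / algebraMap K[X] (RatFunc K) (f.denom.comp (Polynomial.C q * X)) := by
    conv_lhs => rw [← f.num_div_denom]
    rw [map_div₀, sigma_algebraMap σ hσX, sigma_algebraMap σ hσX]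
  rw [ord_eq (comp_scale_ne_zero hq0 (RatFunc.num_ne_zero hf))
      (comp_scale_ne_zero hq0 f.denom_ne_zero) h,
    rm_comp hq0 (RatFunc.num_ne_zero hf), rm_comp hq0 f.denom_ne_zero]
  rfl

lemma ord_finite {f : RatFunc K} (hf : f ≠ 0) : {a : K | ord a f ≠ 0}.Finite := by
  apply Set.Finite.subset
    ((finite_setOf_isRoot (RatFunc.num_ne_zero hf)).union (finite_setOf_isRoot f.denom_ne_zero))
  intro a ha
  by_contra hc
  simp only [Set.mem_union, Set.mem_setOf_eq, not_or] at hc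
  apply ha
  unfold ord
  rw [rootMultiplicity_eq_zero hc.1, rootMultiplicity_eq_zero hc.2]
  ring

lemma main {K : Type*} [Field K] [CharZero K] (q : K) (hq0 : q ≠ 0)
    (hq : ∀ n : ℕ, 0 < n → q ^ n ≠ 1)
    (σ : RatFunc K ≃ₐ[K] RatFunc K)
    (hσX : σ RatFunc.X = RatFunc.C q * RatFunc.X) :
    ¬ ∃ (f : RatFunc K) (c : ℤ),
        (5 : RatFunc K) + 2 / (RatFunc.X - 1) = σ f - f + (c : RatFunc K) := by
  rintro ⟨f, c, hEq⟩
  -- zpow facts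
  have hzpow : ∀ k : ℤ, q ^ k = 1 → k = 0 := by
    intro k hk
    rcases lt_trichotomy k 0 with h | h | h
    · exfalso
      apply hq (-k).toNat (by omega)
      have h2 : q ^ ((-k).toNat : ℤ) = 1 := by
        rw [Int.toNat_of_nonneg (by omega), zpow_neg, hk, inv_one]
      rwa [zpow_natCast] at h2
    · exact h
    · exfalso
      apply hq k.toNat (by omega)
      have h2 : q ^ (k.toNat : ℤ) = 1 := by rw [Int.toNat_of_nonneg (by omega)]; exact hk
      rwa [zpow_natCast] at h2
  have hinj : Function.Injective (fun k : ℤ => q ^ k) := by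
    intro j k hjk
    simp only at hjk
    have h1 : q ^ (j - k) = 1 := by
      rw [zpow_sub₀ hq0, hjk, div_self (zpow_ne_zero k hq0)]
    have := hzpow _ h1
    omega
  -- the explicit numerator polynomial
  set P : K[X] := Polynomial.C (5 - (c : K)) * (X - Polynomial.C 1) + Polynomial.C 2 with hP
  have hP0 : P ≠ 0 := by
    intro h0
    have h2 : (2 : K) = 0 := by simpa [hP] using congrArg (Polynomial.eval 1) h0
    exact two_ne_zero h2
  have hX1 : (RatFunc.X - 1 : RatFunc K)
      = algebraMap K[X] (RatFunc K) (X - Polynomial.C 1) := by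
    rw [map_sub, RatFunc.algebraMap_X, RatFunc.algebraMap_C, map_one]
  have hX1ne : (RatFunc.X - 1 : RatFunc K) ≠ 0 := by
    rw [hX1]
    exact RatFunc.algebraMap_ne_zero (X_sub_C_ne_zero 1)
  have hF : σ f - f = algebraMap K[X] (RatFunc K) P
      / algebraMap K[X] (RatFunc K) (X - Polynomial.C 1) := by
    rw [hP, map_add, map_mul, RatFunc.algebraMap_C, RatFunc.algebraMap_C, ← hX1]
    rw [eq_div_iff hX1ne]
    have h5 : (RatFunc.C (5 - (c : K)) : RatFunc K) = 5 - (c : RatFunc K) := by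
      rw [map_sub]
      congr 1
      · exact map_ofNat RatFunc.C 5
      · exact map_intCast (RatFunc.C : K →+* RatFunc K) c
    have h2 : (RatFunc.C (2 : K) : RatFunc K) = 2 := map_ofNat RatFunc.C 2
    rw [h5, h2]
    have h2d : (2 : RatFunc K) / (RatFunc.X - 1) = (σ f - f + (c : RatFunc K)) - 5 := by
      linear_combination hEq
    have hkey : (2 : RatFunc K) = ((σ f - f + (c : RatFunc K)) - 5) * (RatFunc.X - 1) := by
      rw [← h2d, div_mul_cancel₀ _ hX1ne]
    linear_combination -hkey
  have hFne : σ f - f ≠ 0 := by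
    rw [hF]
    exact div_ne_zero (RatFunc.algebraMap_ne_zero hP0)
      (RatFunc.algebraMap_ne_zero (X_sub_C_ne_zero 1))
  have hf0 : f ≠ 0 := by
    rintro rfl
    simp at hFne
  have hσf : σ f ≠ 0 := by
    intro h
    exact hf0 (σ.injective (h.trans (map_zero σ).symm))
  -- order of σ f - f at points
  have hord1 : ord (1 : K) (σ f - f) = -1 := by
    rw [ord_eq hP0 (X_sub_C_ne_zero 1) hF]
    have h1 : P.rootMultiplicity 1 = 0 := by
      apply rootMultiplicity_eq_zero
      simp [IsRoot, hP]
    have h2 : (X - Polynomial.C (1 : K)).rootMultiplicity 1 = 1 :=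
      rootMultiplicity_X_sub_C_self
    rw [h1, h2]
    rfl
  have horda : ∀ a : K, a ≠ 1 → 0 ≤ ord a (σ f - f) := by
    intro a ha
    rw [ord_eq hP0 (X_sub_C_ne_zero 1) hF]
    have h2 : (X - Polynomial.C (1 : K)).rootMultiplicity a = 0 := by
      apply rootMultiplicity_eq_zero
      simp [IsRoot, sub_eq_zero, ha]
    rw [h2]
    omega
  -- key: ord along the orbit
  have hstep : ∀ j : ℤ, ord (q ^ (j + 1)) f ≠ ord (q ^ j) f →
      ord (q ^ j) (σ f - f) = min (ord (q ^ (j + 1)) f) (ord (q ^ j) f) := by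
    intro j hne
    have hσord : ord (q ^ j) (σ f) = ord (q ^ (j + 1)) f := by
      rw [ord_sigma hq0 σ hσX hf0]
      congr 1
      rw [zpow_add_one₀ hq0]
      ring
    have hnord : ord (q ^ j) (-f) = ord (q ^ j) f := ord_neg _ hf0
    have h := ord_add_ne (a := q ^ j) hσf (neg_ne_zero.mpr hf0)
      (by rw [hσord, hnord]; exact hne)
    rw [hσord, hnord] at h
    rw [sub_eq_add_neg]
    exact h
  -- the set of orbit exponents where f has a pole
  have hTfin : {k : ℤ | ord (q ^ k) f < 0}.Finite := by
    apply Set.Finite.subset ((ord_finite hf0).preimage hinj.injOn)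
    intro k hk
    simp only [Set.mem_preimage, Set.mem_setOf_eq]
    simp only [Set.mem_setOf_eq] at hk
    omega
  by_cases hTne : {k : ℤ | ord (q ^ k) f < 0}.Nonempty
  · obtain ⟨M, hMmem, hMmax'⟩ :=
      Set.Finite.exists_maximalFor id _ hTfin hTne
    obtain ⟨m, hmmem, hmmin'⟩ :=
      Set.Finite.exists_minimalFor id _ hTfin hTne
    simp only [Set.mem_setOf_eq, id] at hMmem hmmem hMmax' hmmin'
    have hMmax : ∀ k : ℤ, ord (q ^ k) f < 0 → k ≤ M := by
      intro k hk
      by_contra hkM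
      push_neg at hkM
      have := hMmax' (j := k) hk (by omega)
      omega
    have hmmin : ∀ k : ℤ, ord (q ^ k) f < 0 → m ≤ k := by
      intro k hk
      by_contra hkm
      push_neg at hkm
      have := hmmin' (j := k) hk (by omega)
      omega
    have hmM : m ≤ M := hmmin M hMmem
    have hM1 : 0 ≤ ord (q ^ (M + 1)) f := by
      by_contra hc
      push_neg at hc
      have := hMmax _ hc
      omega
    have hm1 : 0 ≤ ord (q ^ (m - 1)) f := by
      by_contra hc
      push_neg at hc
      have := hmmin _ hc
      omega
    -- at j = M
    have hMeq := hstep M (by omega)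
    have hMlt : ord (q ^ M) (σ f - f) < 0 := by omega
    have hqM : q ^ M = 1 := by
      by_contra hne
      have := horda _ hne
      omega
    have hM0 : M = 0 := hzpow _ hqM
    -- at j = m - 1
    have hmeq := hstep (m - 1) (by rw [sub_add_cancel]; omega)
    rw [sub_add_cancel] at hmeq
    have hmlt : ord (q ^ (m - 1)) (σ f - f) < 0 := by omega
    have hqm : q ^ (m - 1) = 1 := by
      by_contra hne
      have := horda _ hne
      omega
    have hm0 : m - 1 = 0 := hzpow _ hqm
    omega
  · -- no poles on the orbit, but σ f - f has a pole at 1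
    rw [Set.not_nonempty_iff_eq_empty] at hTne
    have h0 : 0 ≤ ord (1 : K) f := by
      have h : (0 : ℤ) ∉ {k : ℤ | ord (q ^ k) f < 0} := by
        rw [hTne]; exact Set.notMem_empty _
      simp only [Set.mem_setOf_eq, zpow_zero] at h
      omega
    have h1 : 0 ≤ ord q f := by
      have h : (1 : ℤ) ∉ {k : ℤ | ord (q ^ k) f < 0} := by
        rw [hTne]; exact Set.notMem_empty _
      simp only [Set.mem_setOf_eq, zpow_one] at h
      omega
    have hσ1 : ord (1 : K) (σ f) = ord q f := by
      rw [ord_sigma hq0 σ hσX hf0, mul_one]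
    have hmin := ord_add_min (a := (1 : K)) hσf (neg_ne_zero.mpr hf0)
      (by rw [← sub_eq_add_neg]; exact hFne)
    rw [← sub_eq_add_neg, hσ1, ord_neg _ hf0, hord1] at hmin
    omega

end Stmt16

/-- over `ℚ̄(x)` with `σ(x) = qx` (`q` nonzero and not a root of unity),
there are no `f ∈ ℚ̄(x)` and `c ∈ ℤ` with `5 + 2/(x − 1) = σ(f) − f + c`. -/
theorem stmt_16 (q : AlgebraicClosure ℚ) (hq0 : q ≠ 0)
    (hq : ∀ n : ℕ, 0 < n → q ^ n ≠ 1)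
    (σ : RatFunc (AlgebraicClosure ℚ) ≃ₐ[AlgebraicClosure ℚ] RatFunc (AlgebraicClosure ℚ))
    (hσX : σ RatFunc.X = RatFunc.C q * RatFunc.X) :
    ¬ ∃ (f : RatFunc (AlgebraicClosure ℚ)) (c : ℤ),
        (5 : RatFunc (AlgebraicClosure ℚ)) + 2 / (RatFunc.X - 1)
          = σ f - f + (c : RatFunc (AlgebraicClosure ℚ)) := by
  exact Stmt16.main q hq0 hq σ hσX
end

section
/- Let q ∈ ℚ̄ be nonzero and not a root of unity, and let σ be the ℚ̄-algebra automorphism of ℚ̄(x) with σ(x) = qx. Then there do not exist f ∈ ℚ̄(x) and c ∈ ℤ such that 2 + 1/(x − 1) = σ(f) − f + c. -/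
open Polynomial

/-- Auxiliary: the key polynomial identity is impossible. -/
lemma stmt18_aux {F : Type*} [Field F] (q : F) (hq0 : q ≠ 0)
    (hq : ∀ n : ℕ, 0 < n → q ^ n ≠ 1)
    (p D u : F[X]) (hD : D ≠ 0) (hcop : IsCoprime p D) (hu1 : u.eval 1 = 1)
    (key : p.comp (C q * X) * (D * (X - 1))
      = (p * (X - 1) + u * D) * D.comp (C q * X)) : False := by
  have hX1 : (X - 1 : F[X]) ≠ 0 := by
    have := Polynomial.X_sub_C_ne_zero (1 : F)
    simpa using this
  -- composition with C q * X is injective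
  have hcc : (C q * X : F[X]).comp (C q⁻¹ * X) = X := by
    rw [mul_comp, C_comp, X_comp, ← mul_assoc, ← C_mul, mul_inv_cancel₀ hq0, C_1,
      one_mul]
  have hτinj : ∀ s : F[X], s.comp (C q * X) = 0 → s = 0 := by
    intro s hs
    have : (s.comp (C q * X)).comp (C q⁻¹ * X) = s := by
      rw [Polynomial.comp_assoc, hcc, Polynomial.comp_X]
    rw [hs, Polynomial.zero_comp] at this
    exact this.symm
  have hτD : D.comp (C q * X) ≠ 0 := fun hs => hD (hτinj D hs)
  have hτeval : ∀ (s : F[X]) (x : F), (s.comp (C q * X)).eval x = s.eval (q * x) := by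
    intro s x; simp [eval_comp]
  -- case p = 0
  rcases eq_or_ne p 0 with rfl | hp
  · rw [Polynomial.zero_comp, zero_mul, zero_mul, zero_add] at key
    have : u * D = 0 := by
      rcases mul_eq_zero.mp key.symm with h | h
      · exact h
      · exact absurd h hτD
    rcases mul_eq_zero.mp this with h | h
    · rw [h] at hu1; simp at hu1
    · exact hD h
  have hτp : p.comp (C q * X) ≠ 0 := fun hs => hp (hτinj p hs)
  -- coprimality transported
  have hcopτ : IsCoprime (p.comp (C q * X)) (D.comp (C q * X)) := by
    have := hcop.map ((Polynomial.aeval (C q * X) : F[X] →ₐ[F] F[X]) : F[X] →+* F[X])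
    simpa [comp_eq_aeval] using this
  have hdvd : D.comp (C q * X) ∣ D * (X - 1) := by
    refine hcopτ.symm.dvd_of_dvd_mul_left ?_
    exact ⟨p * (X - 1) + u * D, by rw [key]; ring⟩
  obtain ⟨w, hw⟩ := hdvd
  have hM : p * (X - 1) + u * D = p.comp (C q * X) * w := by
    have h2 : (p * (X - 1) + u * D) * D.comp (C q * X)
        = (p.comp (C q * X) * w) * D.comp (C q * X) := by
      rw [← key, hw]; ring
    exact mul_right_cancel₀ hτD h2
  have hw0 : w ≠ 0 := by
    rintro rfl
    rw [mul_zero] at hw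
    exact (mul_ne_zero hD hX1) hw
  have hdegτD : (D.comp (C q * X)).natDegree = D.natDegree := by
    rw [natDegree_comp, natDegree_C_mul_X q hq0, mul_one]
  have hdegw : w.natDegree = 1 := by
    have e1 : (D * (X - 1)).natDegree = D.natDegree + 1 := by
      rw [natDegree_mul hD hX1]
      congr 1
      have : (X - 1 : F[X]) = X - C 1 := by simp
      rw [this, natDegree_X_sub_C]
    have e2 : (D.comp (C q * X) * w).natDegree
        = D.natDegree + w.natDegree := by
      rw [natDegree_mul hτD hw0, hdegτD]
    rw [hw, e2] at e1
    omega
  set a := w.coeff 1 with ha_def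
  set b := w.coeff 0 with hb_def
  have hwf : w = C a * X + C b :=
    eq_X_add_C_of_natDegree_le_one (le_of_eq hdegw)
  have ha : a ≠ 0 := by
    have : w.coeff (w.natDegree) ≠ 0 := leadingCoeff_ne_zero.mpr hw0
    rwa [hdegw] at this
  -- the root of w must be 1
  set r : F := -(b / a) with hr_def
  have hwr : w.eval r = 0 := by
    rw [hwf]; simp [hr_def]; field_simp; ring
  have hr1 : r = 1 := by
    by_contra hr
    have hDr : D.eval r = 0 := by
      have := congrArg (Polynomial.eval r) hw
      rw [eval_mul, eval_mul, hwr, mul_zero] at this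
      have hx : (X - 1 : F[X]).eval r ≠ 0 := by
        simp only [eval_sub, eval_X, eval_one]
        exact sub_ne_zero.mpr hr
      rcases mul_eq_zero.mp this with h | h
      · exact h
      · exact absurd h hx
    have hpr : p.eval r ≠ 0 := by
      obtain ⟨s, t, hst⟩ := hcop
      intro h0
      have := congrArg (Polynomial.eval r) hst
      simp [h0, hDr] at this
    have := congrArg (Polynomial.eval r) hM
    rw [eval_add, eval_mul, eval_mul, eval_mul, hwr, mul_zero, hDr, mul_zero,
      add_zero] at this
    rcases mul_eq_zero.mp this with h | h
    · exact hpr h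
    · simp only [eval_sub, eval_X, eval_one] at h
      exact hr (sub_eq_zero.mp h)
  have hb : b = -a := by
    have : -(b / a) = 1 := by rw [← hr_def, hr1]
    field_simp at this
    linear_combination -this
  have hwf2 : w = C a * (X - 1) := by
    rw [hwf, hb]; simp [mul_sub]; ring
  have hDτ : D = D.comp (C q * X) * C a := by
    apply mul_right_cancel₀ hX1
    rw [hw, hwf2]; ring
  have hD1 : D.eval 1 = 0 := by
    have := congrArg (Polynomial.eval 1) hM
    rw [hwf2] at this
    simp only [eval_add, eval_mul, eval_sub, eval_X, eval_one, eval_C,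
      sub_self, mul_zero, zero_add] at this
    rw [hu1, one_mul] at this
    exact this
  have hroots : ∀ n : ℕ, D.eval (q ^ n) = 0 := by
    intro n
    induction n with
    | zero => simpa using hD1
    | succ n ih =>
      have := congrArg (Polynomial.eval (q ^ n)) hDτ
      rw [eval_mul, eval_C, hτeval] at this
      rw [ih] at this
      have h2 : D.eval (q * q ^ n) = 0 := by
        rcases mul_eq_zero.mp this.symm with h | h
        · exact h
        · exact absurd h ha
      rw [pow_succ]
      rw [mul_comm] at h2
      exact h2
  have hinj : Function.Injective fun n : ℕ => q ^ n := by
    intro m n hmn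
    simp only at hmn
    by_contra hne
    rcases Nat.lt_or_ge m n with h | h
    · apply hq (n - m) (by omega)
      have : q ^ m * q ^ (n - m) = q ^ m * 1 := by
        rw [← pow_add, mul_one, Nat.add_sub_cancel' h.le, hmn]
      exact mul_left_cancel₀ (pow_ne_zero _ hq0) this
    · have h' : n < m := by omega
      apply hq (m - n) (by omega)
      have : q ^ n * q ^ (m - n) = q ^ n * 1 := by
        rw [← pow_add, mul_one, Nat.add_sub_cancel' h'.le, hmn]
      exact mul_left_cancel₀ (pow_ne_zero _ hq0) this
  exact (Polynomial.finite_setOf_isRoot hD).not_infinite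
    (Set.infinite_of_injective_forall_mem hinj (fun n => hroots n))

lemma stmt18_aux2 {K : Type*} [Field K] (q : K) (hq0 : q ≠ 0)
    (hq : ∀ n : ℕ, 0 < n → q ^ n ≠ 1)
    (σ : RatFunc K ≃ₐ[K] RatFunc K)
    (hσX : σ RatFunc.X = RatFunc.C q * RatFunc.X) :
    ¬ ∃ (f : RatFunc K) (c : ℤ),
        (2 : RatFunc K) + 1 / (RatFunc.X - 1)
          = σ f - f + (c : RatFunc K) := by
  rintro ⟨f, c, h⟩
  -- σ acts on polynomials by composition with C q * X
  have hσalg : ∀ s : K[X], σ (algebraMap K[X] (RatFunc K) s)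
      = algebraMap K[X] (RatFunc K) (s.comp (C q * X)) := by
    have hext : (σ.toAlgHom.comp (IsScalarTower.toAlgHom K K[X] (RatFunc K)))
        = (IsScalarTower.toAlgHom K K[X] (RatFunc K)).comp
            (Polynomial.aeval (C q * X) : K[X] →ₐ[K] K[X]) := by
      apply Polynomial.algHom_ext
      simp only [AlgHom.comp_apply, IsScalarTower.coe_toAlgHom',
        RatFunc.algebraMap_X, AlgEquiv.toAlgHom_eq_coe, AlgHom.coe_coe,
        hσX, aeval_X, map_mul, RatFunc.algebraMap_C]
      exact hσX
    intro s
    have := AlgHom.congr_fun hext s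
    simpa [comp_eq_aeval] using this
  set p := f.num with hp_def
  set D := f.denom with hD_def
  have hD : D ≠ 0 := f.denom_ne_zero
  have hcop : IsCoprime p D := f.isCoprime_num_denom
  have hAinj : Function.Injective (algebraMap K[X] (RatFunc K)) :=
    IsFractionRing.injective _ _
  have hADne : algebraMap K[X] (RatFunc K) D ≠ 0 := by
    simpa using fun h0 => hD (hAinj (by simpa using h0))
  have hcc : (C q * X : K[X]).comp (C q⁻¹ * X) = X := by
    rw [mul_comp, C_comp, X_comp, ← mul_assoc, ← C_mul, mul_inv_cancel₀ hq0, C_1,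
      one_mul]
  have hτD : D.comp (C q * X) ≠ 0 := by
    intro hs
    apply hD
    have : (D.comp (C q * X)).comp (C q⁻¹ * X) = D := by
      rw [Polynomial.comp_assoc, hcc, Polynomial.comp_X]
    rw [hs, Polynomial.zero_comp] at this
    exact this.symm
  have hAτDne : algebraMap K[X] (RatFunc K) (D.comp (C q * X)) ≠ 0 := by
    simpa using fun h0 => hτD (hAinj (by simpa using h0))
  have hX1ne : (RatFunc.X - 1 : RatFunc K) ≠ 0 := by
    intro h0
    have h1 : (X - 1 : K[X]) = 0 := by
      apply hAinj
      simpa [map_sub, RatFunc.algebraMap_X] using h0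
    have := congrArg (Polynomial.eval (0 : K)) h1
    simp at this
  -- the key polynomial identity
  set u : K[X] := C (2 - (c : K)) * (X - 1) + 1 with hu_def
  have hu1 : u.eval 1 = 1 := by simp [hu_def]
  have hf : algebraMap K[X] (RatFunc K) p / algebraMap K[X] (RatFunc K) D = f :=
    f.num_div_denom
  have hσf : σ f = algebraMap K[X] (RatFunc K) (p.comp (C q * X))
      / algebraMap K[X] (RatFunc K) (D.comp (C q * X)) := by
    rw [← hf, map_div₀, hσalg, hσalg]
  have hc : ((c : ℤ) : RatFunc K) = algebraMap K[X] (RatFunc K) (C (c : K)) := by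
    rw [RatFunc.algebraMap_C]
    exact (map_intCast (RatFunc.C : K →+* RatFunc K) c).symm
  have hu' : algebraMap K[X] (RatFunc K) (C (2 - (c : K)))
      = 2 - ((c : ℤ) : RatFunc K) := by
    rw [RatFunc.algebraMap_C, map_sub, map_intCast, map_ofNat]
  have key : p.comp (C q * X) * (D * (X - 1))
      = (p * (X - 1) + u * D) * D.comp (C q * X) := by
    apply hAinj
    have h2 := congrArg (· * (RatFunc.X - 1)) h
    rw [add_mul, one_div, inv_mul_cancel₀ hX1ne, hσf, ← hf, hc] at h2
    field_simp at h2
    simp only [map_mul, map_add, map_sub, map_one, RatFunc.algebraMap_X, hu_def,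
      RatFunc.algebraMap_C, map_ofNat, map_intCast]
    linear_combination -h2 + (algebraMap K[X] (RatFunc K) D * RatFunc.X * algebraMap K[X] (RatFunc K) (D.comp (C q * X)) - algebraMap K[X] (RatFunc K) D * algebraMap K[X] (RatFunc K) (D.comp (C q * X))) * hc
  exact stmt18_aux q hq0 hq p D u hD hcop hu1 key

/-- over `ℚ̄(x)` with `σ(x) = qx` (`q` nonzero and not a root of unity),
there are no `f ∈ ℚ̄(x)` and `c ∈ ℤ` with `2 + 1/(x − 1) = σ(f) − f + c`. -/
theorem stmt_18 (q : AlgebraicClosure ℚ) (hq0 : q ≠ 0)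
    (hq : ∀ n : ℕ, 0 < n → q ^ n ≠ 1)
    (σ : RatFunc (AlgebraicClosure ℚ) ≃ₐ[AlgebraicClosure ℚ] RatFunc (AlgebraicClosure ℚ))
    (hσX : σ RatFunc.X = RatFunc.C q * RatFunc.X) :
    ¬ ∃ (f : RatFunc (AlgebraicClosure ℚ)) (c : ℤ),
        (2 : RatFunc (AlgebraicClosure ℚ)) + 1 / (RatFunc.X - 1)
          = σ f - f + (c : RatFunc (AlgebraicClosure ℚ)) := by
  exact stmt18_aux2 q hq0 hq σ hσX
end
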